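/- arXiv:2404.14291 — 12 statements merged into one kernel-verified Lean document; each statement's English description precedes it below -/
import Mathlib

section
/- Let p be an odd prime, k and ℓ positive integers with k dividing ℓ, q = p^k, Q = p^ℓ, and let c = (c0,c1,c2,c3) ∈ F_{q²}⁴. Then the quadrinomial map f_c is planar over F_{q²} if and only if f_c is linear equivalent to the squaring map x ↦ x² on F_{q²}. -/
/-- A function between (additive groups of) finite abelian groups is planar if every
nonzero-direction derivative hits every value exactly once. -/
def IsPlanarFn {G H : Type*} [AddGroup G] [AddGroup H] (f : G → H) : Prop :=
  ∀ a : G, a ≠ 0 → ∀ b : H, ∃! x : G, f (x + a) - f x = b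

/-- Linear equivalence of functions: `f = L1 ∘ g ∘ L2` for additive bijections `L1, L2`. -/
def LinEquivFn {V V' W W' : Type*} [AddGroup V] [AddGroup V'] [AddGroup W] [AddGroup W']
    (f : V → V') (g : W → W') : Prop :=
  ∃ (L1 : W' ≃+ V') (L2 : V ≃+ W), f = L1 ∘ g ∘ L2


lemma exists_qsub1_root (F : Type*) [Field F] [Fintype F] (q : ℕ) (hq : 2 ≤ q)
    (hcard : Fintype.card F = q ^ 2) (γ : F) (hγ : γ ≠ 0) (h1 : γ ^ (q + 1) = 1) :
    ∃ x : F, x ≠ 0 ∧ x ^ (q - 1) = γ := by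
  classical
  obtain ⟨g, hg⟩ := IsCyclic.exists_generator (α := Fˣ)
  set u : Fˣ := Units.mk0 γ hγ with hu
  obtain ⟨j, hj⟩ := hg u
  have hj : g ^ j = u := hj
  have horder : orderOf g = (q - 1) * (q + 1) := by
    have h1' : orderOf g = Nat.card Fˣ := orderOf_eq_card_of_forall_mem_zpowers hg
    rw [h1', Nat.card_eq_fintype_card, Fintype.card_units, hcard]
    cases' q with q'
    · omega
    · simp [Nat.succ_sub_one]
      ring_nf
      omega
  have hu1 : u ^ (q + 1) = 1 := by
    ext
    push_cast
    exact h1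
  have hdvd : ((orderOf g : ℕ) : ℤ) ∣ j * (q + 1) := by
    rw [orderOf_dvd_iff_zpow_eq_one, zpow_mul, hj]
    rw [← zpow_natCast u (q+1)] at hu1
    exact hu1
  rw [horder] at hdvd
  push_cast at hdvd
  have hq1 : ((q : ℤ) + 1) ≠ 0 := by positivity
  have hdvd2 : ((q - 1 : ℕ) : ℤ) ∣ j := by
    have h' : ((q - 1 : ℕ) : ℤ) * ((q:ℤ) + 1) ∣ j * ((q:ℤ) + 1) := by
      refine dvd_trans (dvd_of_eq ?_) hdvd
      push_cast [Nat.cast_sub (by omega : 1 ≤ q)]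
      ring
    exact (mul_dvd_mul_iff_right hq1).mp h'
  obtain ⟨m, hm⟩ := hdvd2
  refine ⟨((g ^ m : Fˣ) : F), Units.ne_zero _, ?_⟩
  have key : (g ^ m) ^ ((q - 1 : ℕ) : ℤ) = u := by
    rw [← zpow_mul, mul_comm, ← hm, hj]
  rw [zpow_natCast] at key
  calc ((g ^ m : Fˣ) : F) ^ (q - 1) = (((g ^ m) ^ (q-1) : Fˣ) : F) := by push_cast; ring
    _ = γ := by rw [key]; rfl

lemma planar_sq (F : Type*) [Field F] (h2 : (2:F) ≠ 0) :
    IsPlanarFn (fun x : F => x ^ 2) := by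
  intro a ha b
  have h2a : 2 * a ≠ 0 := mul_ne_zero h2 ha
  refine ⟨(b - a ^ 2) / (2 * a), ?_, ?_⟩
  · field_simp
    ring
  · intro y hy
    simp only at hy
    have : 2 * a * y = b - a ^ 2 := by ring_nf; ring_nf at hy; linear_combination hy
    field_simp
    linear_combination this


lemma planar_of_linEquiv {V V' W W' : Type*} [AddGroup V] [AddGroup V'] [AddGroup W] [AddGroup W']
    (f : V → V') (g : W → W') (h : LinEquivFn f g) (hg : IsPlanarFn g) : IsPlanarFn f := by
  obtain ⟨L1, L2, rfl⟩ := h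
  intro a ha b
  have hLa : L2 a ≠ 0 := fun h0 => ha (by simpa using congrArg L2.symm h0)
  obtain ⟨y, hy, hyu⟩ := hg (L2 a) hLa (L1.symm b)
  refine ⟨L2.symm y, ?_, ?_⟩
  · simp only [Function.comp_apply, map_add]
    rw [L2.apply_symm_apply, ← map_sub, hy, L1.apply_symm_apply]
  · intro x hx
    simp only [Function.comp_apply, map_add] at hx
    rw [← map_sub] at hx
    have : g (L2 x + L2 a) - g (L2 x) = L1.symm b := by
      rw [← hx, L1.symm_apply_apply]
    have := hyu _ this
    rw [← this, L2.symm_apply_apply]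

lemma S4aux (F : Type) [Field F] [Fintype F] (q : ℕ) (hq2 : 2 ≤ q) (hoddq : Odd q)
    (hcard : Fintype.card F = q ^ 2) (hrc : ringChar F ≠ 2) (h2 : (2 : F) ≠ 0)
    (hqq : ∀ x : F, (x ^ q) ^ q = x) (hsadd : ∀ x y : F, (x + y) ^ q = x ^ q + y ^ q)
    (e E Es : F) (he : e ^ q = e) (hE : E ^ q = Es) (hEs : Es ^ q = E)
    (hψ : ∀ a : F, a ≠ 0 → e * (a * a ^ q) + E * a ^ 2 + Es * (a ^ q) ^ 2 ≠ 0) :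
    ∃ s : F, s ≠ 0 ∧ s ^ q = s ∧ 4 * s ^ 2 = e ^ 2 - 4 * E * Es := by
  have hq1 : 1 ≤ q := by omega
  have hsneg : ∀ x : F, (-x) ^ q = -(x ^ q) := fun x => hoddq.neg_pow x
  have hssub : ∀ x y : F, (x - y) ^ q = x ^ q - y ^ q := by
    intro x y; rw [sub_eq_add_neg, hsadd, hsneg, sub_eq_add_neg]
  have hsmul : ∀ x y : F, (x * y) ^ q = x ^ q * y ^ q := fun x y => mul_pow x y q
  have hssq : ∀ x : F, (x ^ 2) ^ q = (x ^ q) ^ 2 := fun x => pow_right_comm x 2 q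
  have hs1 : (1 : F) ^ q = 1 := one_pow q
  have hs2 : (2 : F) ^ q = 2 := by
    calc (2 : F) ^ q = (1 + 1) ^ q := by norm_num
      _ = 1 ^ q + 1 ^ q := hsadd 1 1
      _ = 2 := by norm_num
  have hs4 : (4 : F) ^ q = 4 := by
    calc (4 : F) ^ q = (2 * 2) ^ q := by norm_num
      _ = 2 ^ q * 2 ^ q := hsmul 2 2
      _ = 4 := by rw [hs2]; norm_num
  -- T' ≠ 0
  have hT : e + E + Es ≠ 0 := by
    have := hψ 1 one_ne_zero
    simpa using this
  -- θ with θ^q = -θ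
  obtain ⟨θ, hθ0, hθ1⟩ := exists_qsub1_root F q hq2 hcard (-1)
    (neg_ne_zero.mpr one_ne_zero) (Even.neg_one_pow hoddq.add_one)
  have hθq : θ ^ q = -θ := by
    have h := pow_succ θ (q - 1)
    rw [Nat.sub_add_cancel hq1] at h
    rw [h, hθ1]
    ring
  -- the contradiction machine
  have hcontra : ∀ r : F, r ^ q = r → r ^ 2 = θ ^ 2 * (e ^ 2 - 4 * E * Es) → False := by
    intro r hrq hr2
    set u : F := (r - (E - Es) * θ) / (e + E + Es) with hu
    have huq : u ^ q = u := by
      rw [hu, div_pow, hssub, hsmul, hssub, hsadd, hsadd, he, hE, hEs, hθq, hrq]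
      ring_nf
    have ha : u + θ ≠ 0 := by
      intro h
      have hθu : θ ^ q = θ := by
        have h' : θ = -u := by linear_combination h
        rw [h', hsneg, huq]
      rw [hθq] at hθu
      have h'' : 2 * θ = 0 := by linear_combination -hθu
      rcases mul_eq_zero.mp h'' with h' | h'
      · exact h2 h'
      · exact hθ0 h'
    have haq : (u + θ) ^ q = u - θ := by rw [hsadd, huq, hθq]; ring
    apply hψ (u + θ) ha
    rw [haq]
    have hTu : (e + E + Es) * u = r - (E - Es) * θ := by
      rw [hu]; field_simp
    have h0 : (e + E + Es) * (e * ((u + θ) * (u - θ)) + E * (u + θ) ^ 2 + Es * (u - θ) ^ 2) = 0 := by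
      linear_combination ((e + E + Es) * u + (E - Es) * θ + r) * hTu + hr2
    rcases mul_eq_zero.mp h0 with h | h
    · exact absurd h hT
    · exact h
  by_cases hD0 : e ^ 2 - 4 * E * Es = 0
  · exact absurd (by rw [hD0]; ring : (0:F) ^ 2 = θ ^ 2 * (e ^ 2 - 4 * E * Es))
      (fun hh => hcontra 0 (zero_pow (by omega : q ≠ 0)) hh)
  · have hfix : (e ^ 2 - 4 * E * Es) ^ q = e ^ 2 - 4 * E * Es := by
      rw [hssub, hssq, he, hsmul, hsmul, hs4, hE, hEs]
      ring
    have hqm1 : (e ^ 2 - 4 * E * Es) ^ (q - 1) = 1 := by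
      have h' : (e ^ 2 - 4 * E * Es) ^ (q - 1) * (e ^ 2 - 4 * E * Es)
          = 1 * (e ^ 2 - 4 * E * Es) := by
        rw [one_mul, ← pow_succ, Nat.sub_add_cancel hq1, hfix]
      exact mul_right_cancel₀ hD0 h'
    have hcard2 : Fintype.card F / 2 = (q - 1) * ((q + 1) / 2) := by
      obtain ⟨m, hm⟩ := hoddq
      rw [hcard]
      subst hm
      have e1 : (2 * m + 1 + 1) / 2 = m + 1 := by omega
      have e2 : 2 * m + 1 - 1 = 2 * m := by omega
      rw [e1, e2]
      have e3 : (2 * m + 1) ^ 2 = 2 * (2 * m * (m + 1)) + 1 := by ring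
      omega
    have heuler : (e ^ 2 - 4 * E * Es) ^ (Fintype.card F / 2) = 1 := by
      rw [hcard2, pow_mul, hqm1, one_pow]
    obtain ⟨s', hs'⟩ := (FiniteField.isSquare_iff hrc hD0).mpr heuler
    have hs'0 : s' ≠ 0 := by
      intro h
      apply hD0
      rw [hs', h, mul_zero]
    have hs'fix : (s' ^ q) ^ 2 = s' ^ 2 := by
      calc (s' ^ q) ^ 2 = (s' ^ 2) ^ q := (hssq s').symm
        _ = (e ^ 2 - 4 * E * Es) ^ q := by rw [pow_two, ← hs']
        _ = e ^ 2 - 4 * E * Es := hfix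
        _ = s' ^ 2 := by rw [hs', pow_two]
    have hfactor : (s' ^ q - s') * (s' ^ q + s') = 0 := by linear_combination hs'fix
    rcases mul_eq_zero.mp hfactor with h | h
    · refine ⟨s' / 2, div_ne_zero hs'0 h2, ?_, ?_⟩
      · rw [div_pow, hs2, sub_eq_zero.mp h]
      · rw [div_pow]
        field_simp
        linear_combination -4 * hs'
    · exfalso
      have hsq' : s' ^ q = -s' := by linear_combination h
      apply hcontra (θ * s')
      · rw [hsmul, hθq, hsq']
        ring
      · rw [mul_pow]
        linear_combination - (θ ^ 2) * hs'

theorem key (p k : ℕ) (hp : p.Prime) (hodd : Odd p) (hk : 0 < k)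
    (F : Type) [Field F] [Fintype F] (hF : Fintype.card F = p ^ (2 * k))
    (q : ℕ) (hq : q = p ^ k)
    (A B C : F) (f : F → F)
    (hf : ∀ x : F, f x = A * x ^ 2 + B * (x * x ^ q) + C * (x ^ q) ^ 2) :
    IsPlanarFn f ↔ LinEquivFn f (fun x : F => x ^ 2) := by
  haveI hpfact : Fact p.Prime := ⟨hp⟩
  -- characteristic
  haveI hchar : CharP F p := by
    have h1 := FiniteField.card F (ringChar F)
    obtain ⟨n, hrp, hcr⟩ := h1
    have hdvd : p ∣ ringChar F := by
      have h2 : p ^ (2 * k) = ringChar F ^ (n : ℕ) := by rw [← hF, hcr]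
      have h3 : p ∣ ringChar F ^ (n : ℕ) := h2 ▸ dvd_pow_self p (by omega : 2 * k ≠ 0)
      exact hp.dvd_of_dvd_pow h3
    have hpr : p = ringChar F := ((Nat.prime_dvd_prime_iff_eq hp hrp).mp hdvd)
    exact hpr ▸ ringChar.charP F
  have hpodd : p ≠ 2 := by rintro rfl; exact (by decide : ¬ Odd 2) hodd
  have h2 : (2 : F) ≠ 0 := by
    intro h0
    have := (CharP.cast_eq_zero_iff F p 2).mp (by exact_mod_cast h0)
    have := (Nat.prime_dvd_prime_iff_eq hp Nat.prime_two).mp this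
    exact hpodd this
  have h4 : (4 : F) ≠ 0 := by
    have : (4 : F) = 2 * 2 := by norm_num
    rw [this]
    exact mul_ne_zero h2 h2
  -- basic facts about q
  have hoddq : Odd q := hq ▸ hodd.pow
  have hq1 : 1 ≤ q := hoddq.pos
  have hp3 : 3 ≤ p := by
    have := hp.two_le
    rcases Nat.lt_or_ge p 3 with h | h
    · interval_cases p
      · exact absurd hpodd (by norm_num)
    · exact h
  have hq2 : 2 ≤ q := by
    have h1 : p ≤ p ^ k := Nat.le_self_pow (by omega) p
    omega
  have hcard : Fintype.card F = q ^ 2 := by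
    rw [hF, hq, ← pow_mul]
    ring_nf
  -- Frobenius-type facts
  have hqq : ∀ x : F, (x ^ q) ^ q = x := by
    intro x
    rw [← pow_mul, hq, ← pow_add, ← two_mul, ← hF]
    exact FiniteField.pow_card x
  have hsadd : ∀ x y : F, (x + y) ^ q = x ^ q + y ^ q := by
    intro x y
    rw [hq]
    exact add_pow_char_pow x y p k
  have hsneg : ∀ x : F, (-x) ^ q = -(x ^ q) := fun x => hoddq.neg_pow x
  have hssub : ∀ x y : F, (x - y) ^ q = x ^ q - y ^ q := by
    intro x y
    rw [sub_eq_add_neg, hsadd, hsneg, sub_eq_add_neg]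
  have hs2 : (2 : F) ^ q = 2 := by
    calc (2 : F) ^ q = (1 + 1) ^ q := by norm_num
      _ = 1 ^ q + 1 ^ q := hsadd 1 1
      _ = 2 := by norm_num
  -- norms: z * z^q
  have hNzero : ∀ z : F, z * z ^ q = 0 → z = 0 := by
    intro z hz
    rcases mul_eq_zero.mp hz with h | h
    · exact h
    · exact pow_eq_zero_iff (by omega : q ≠ 0) |>.mp h
  -- equal norms implies non-injectivity of x ↦ αx + βx^q
  have hNinj : ∀ α β : F, α * α ^ q = β * β ^ q →
      ∃ x : F, x ≠ 0 ∧ α * x + β * x ^ q = 0 := by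
    intro α β hN
    by_cases hβ : β = 0
    · subst hβ
      have hα : α = 0 := hNzero α (by simpa using hN)
      exact ⟨1, one_ne_zero, by simp [hα]⟩
    · have hα : α ≠ 0 := by
        intro h0
        subst h0
        exact hβ (hNzero β (by simpa using hN.symm))
      set γ : F := -α / β with hγdef
      have hγ0 : γ ≠ 0 := by
        simp only [hγdef]
        exact div_ne_zero (neg_ne_zero.mpr hα) hβ
      have hγ1 : γ ^ (q + 1) = 1 := by
        have hβq : β ^ q ≠ 0 := pow_ne_zero q hβ
        rw [pow_succ, hγdef, div_pow, neg_pow, hoddq.neg_one_pow]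
        field_simp
        linear_combination hN
      obtain ⟨x, hx0, hxγ⟩ := exists_qsub1_root F q hq2 hcard γ hγ0 hγ1
      refine ⟨x, hx0, ?_⟩
      have hxq : x ^ q = γ * x := by
        have : x ^ (q - 1 + 1) = x ^ (q - 1) * x := pow_succ x (q - 1)
        rw [Nat.sub_add_cancel hq1] at this
        rw [this, hxγ]
      rw [hxq, hγdef]
      field_simp
      ring
  -- unequal norms implies injectivity
  have hNinj2 : ∀ α β : F, α * α ^ q ≠ β * β ^ q →
      Function.Injective (fun y : F => α * y + β * y ^ q) := by
    intro α β hN u v huv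
    simp only at huv
    by_contra hne
    set d := u - v with hd
    have hd0 : d ≠ 0 := sub_ne_zero.mpr hne
    have hΛd : α * d + β * d ^ q = 0 := by
      rw [hd, hssub]
      linear_combination huv
    have h1 : α * d = -(β * d ^ q) := by linear_combination hΛd
    have h2 : (α * d) * (α * d) ^ q = (-(β * d ^ q)) * (-(β * d ^ q)) ^ q := by rw [h1]
    rw [mul_pow, hsneg, mul_pow, hqq] at h2
    have h3 : (α * α ^ q) * (d * d ^ q) = (β * β ^ q) * (d * d ^ q) := by
      linear_combination h2
    have hdd : d * d ^ q ≠ 0 := fun hc => hd0 (hNzero d hc)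
    exact hN (mul_right_cancel₀ hdd h3)
  -- derivative formula
  have hder : ∀ a x : F, f (x + a) - f x =
      (2 * A * a + B * a ^ q) * x + (B * a + 2 * C * a ^ q) * x ^ q + f a := by
    intro a x
    rw [hf, hf, hf, hsadd]
    ring
  -- planarity forces distinct norms
  have hplanar_ineq : IsPlanarFn f → ∀ a : F, a ≠ 0 →
      (2 * A * a + B * a ^ q) * (2 * A * a + B * a ^ q) ^ q ≠
      (B * a + 2 * C * a ^ q) * (B * a + 2 * C * a ^ q) ^ q := by
    intro hpl a ha hN
    obtain ⟨x₀, hx₀0, hx₀⟩ := hNinj _ _ hN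
    obtain ⟨y, hy, hyu⟩ := hpl a ha (f a)
    have e0 : f (0 + a) - f 0 = f a := by
      rw [hder, zero_pow (by omega : q ≠ 0)]; ring
    have e1 : f (x₀ + a) - f x₀ = f a := by rw [hder]; linear_combination hx₀
    exact hx₀0 ((hyu x₀ e1).trans (hyu 0 e0).symm)
  have hsmul : ∀ x y : F, (x * y) ^ q = x ^ q * y ^ q := fun x y => mul_pow x y q
  have hssq : ∀ x : F, (x ^ 2) ^ q = (x ^ q) ^ 2 := fun x => pow_right_comm x 2 q
  have hs4 : (4 : F) ^ q = 4 := by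
    calc (4 : F) ^ q = (2 * 2) ^ q := by norm_num
      _ = 2 ^ q * 2 ^ q := mul_pow 2 2 q
      _ = 4 := by rw [hs2]; norm_num
  have hrc : ringChar F ≠ 2 := by
    have h' : ringChar F = p := ringChar.eq F p
    rw [h']
    exact hpodd
  constructor
  · intro hpl
    -- step 1: the ψ inequality
    have hψ : ∀ a : F, a ≠ 0 → (2*(A*A^q - C*C^q)) * (a * a^q)
        + (A*B^q - B*C^q) * a^2 + (A^q*B - B^q*C) * (a^q)^2 ≠ 0 := by
      intro a ha h0
      apply hplanar_ineq hpl a ha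
      have e1 : (2*A*a + B*a^q)^q = 2*A^q*a^q + B^q*a := by
        simp only [hsadd, mul_pow, hqq, hs2]
      have e2 : (B*a + 2*C*a^q)^q = B^q*a^q + 2*C^q*a := by
        simp only [hsadd, mul_pow, hqq, hs2]
      rw [e1, e2]
      linear_combination 2 * h0
    -- step 2: existence of the fixed square root s
    have he : (2*(A*A^q - C*C^q))^q = 2*(A*A^q - C*C^q) := by
      simp only [hsmul, hssub, hqq, hs2]
      all_goals ring
    have hE : (A*B^q - B*C^q)^q = A^q*B - B^q*C := by
      simp only [hssub, hsmul, hqq]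
    have hEs : (A^q*B - B^q*C)^q = A*B^q - B*C^q := by
      simp only [hssub, hsmul, hqq]
      all_goals ring
    obtain ⟨s, hs0, hsq, hseq⟩ := S4aux F q hq2 hoddq hcard hrc h2 hqq hsadd
      (2*(A*A^q - C*C^q)) (A*B^q - B*C^q) (A^q*B - B^q*C) he hE hEs hψ
    -- step 3: find l, m with the conic and norm conditions
    obtain ⟨l, m, hNlm, hconic⟩ : ∃ l m : F, l * l^q ≠ m * m^q ∧
        (l*B + m*B^q)^2 = 4*(l*A + m*C^q)*(l*C + m*A^q) := by
      by_cases hΔ : B^2 - 4*A*C = 0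
      · refine ⟨1, 0, ?_, ?_⟩
        · simp only [one_pow, mul_one, zero_pow (by omega : q ≠ 0), mul_zero]
          exact one_ne_zero
        · simp only [one_mul, zero_mul, add_zero]
          linear_combination hΔ
      · obtain ⟨w, hw⟩ : ∃ w : F, w = B*B^q - 2*A*A^q - 2*C*C^q := ⟨_, rfl⟩
        have hwfix : w^q = w := by
          rw [hw]
          simp only [hssub, hsmul, hqq, hs2]
          all_goals ring
        have hΔfix : (B^2 - 4*A*C)^q = (B^q)^2 - 4*A^q*C^q := by
          simp only [hssub, hssq, hsmul, hs4]
          all_goals ring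
        have hkey2 : 4*s^2 = w^2 - (B^2 - 4*A*C)*((B^q)^2 - 4*A^q*C^q) := by
          rw [hw]
          linear_combination hseq
        have h16 : (16:F) ≠ 0 := by
          have h' : (16:F) = 4*4 := by norm_num
          rw [h']; exact mul_ne_zero h4 h4
        by_cases hsw : 2*s = w
        · refine ⟨-w - 2*s, B^2 - 4*A*C, ?_, ?_⟩
          · have hlfix : (-w - 2*s)^q = -w - 2*s := by
              simp only [hssub, hsneg, mul_pow, hs2, hsq, hwfix]
            rw [hlfix, hΔfix]
            intro hc
            apply hs0
            have h16s : (16:F) * s^2 = 0 := by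
              linear_combination hc + hkey2 + 4*s*hsw
            rcases mul_eq_zero.mp h16s with h' | h'
            · exact absurd h' h16
            · exact pow_eq_zero_iff (by norm_num) |>.mp h'
          · linear_combination (B^2 - 4*A*C) * hkey2
              - 2*(-w - 2*s)*(B^2 - 4*A*C)*hw
        · refine ⟨-w + 2*s, B^2 - 4*A*C, ?_, ?_⟩
          · have hlfix : (-w + 2*s)^q = -w + 2*s := by
              simp only [hsadd, hsneg, mul_pow, hs2, hsq, hwfix]
            rw [hlfix, hΔfix]
            intro hc
            have h0' : (4*s)*(2*s - w) = 0 := by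
              linear_combination hc + hkey2
            rcases mul_eq_zero.mp h0' with h' | h'
            · rcases mul_eq_zero.mp h' with h'' | h''
              · exact h4 h''
              · exact hs0 h''
            · exact hsw (by linear_combination h')
          · linear_combination (B^2 - 4*A*C) * hkey2
              - 2*(-w + 2*s)*(B^2 - 4*A*C)*hw
    -- step 4: the M identity
    have hM : ∀ x : F, l * f x + m * (f x)^q =
        (l*A + m*C^q)*x^2 + (l*B + m*B^q)*(x*x^q) + (l*C + m*A^q)*(x^q)^2 := by
      intro x
      rw [hf]
      simp only [hsadd, mul_pow, hqq, hssq]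
      ring
    -- step 5: final assembly device
    have hfinal : ∀ t α β : F, t ≠ 0 →
        (∀ x : F, t*l * f x + t*m * (f x)^q = (α*x + β*x^q)^2) →
        LinEquivFn f (fun x : F => x^2) := by
      intro t α β ht hid
      have hNt : (t*l) * (t*l)^q ≠ (t*m) * (t*m)^q := by
        simp only [mul_pow]
        intro hc
        apply hNlm
        have htt : t * t^q ≠ 0 := fun h' => ht (hNzero t h')
        apply mul_left_cancel₀ htt
        linear_combination hc
      have hΛinj := hNinj2 _ _ hNt
      have hhinj : Function.Injective (fun x : F => α*x + β*x^q) := by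
        intro u v huv
        simp only at huv
        by_contra hne
        have ha0 : u - v ≠ 0 := sub_ne_zero.mpr hne
        have hha : α*(u-v) + β*(u-v)^q = 0 := by
          rw [hssub]
          linear_combination huv
        obtain ⟨y, hy, -⟩ := hpl (u-v) ha0 1
        apply one_ne_zero (α := F)
        rw [← hy]
        apply hΛinj
        show (t*l)*(f (y+(u-v)) - f y) + (t*m)*(f (y+(u-v)) - f y)^q
            = (t*l)*0 + (t*m)*0^q
        rw [hssub, zero_pow (by omega : q ≠ 0)]
        have h1 := hid (y+(u-v))
        have h2 := hid y
        have h3 : α*(y+(u-v)) + β*(y+(u-v))^q = α*y + β*y^q := by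
          rw [hsadd]
          linear_combination hha
        linear_combination h1 - h2 +
          (α*(y+(u-v)) + β*(y+(u-v))^q + (α*y + β*y^q)) * h3
      -- build the additive equivalences
      let Λhom : F →+ F := AddMonoidHom.mk' (fun y => (t*l)*y + (t*m)*y^q)
        (by intro a b; rw [hsadd]; ring)
      let hhom : F →+ F := AddMonoidHom.mk' (fun x => α*x + β*x^q)
        (by intro a b; rw [hsadd]; ring)
      have hΛbij : Function.Bijective Λhom :=
        Finite.injective_iff_bijective.mp hΛinj
      have hhbij : Function.Bijective hhom :=
        Finite.injective_iff_bijective.mp hhinj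
      refine ⟨(AddEquiv.ofBijective Λhom hΛbij).symm, AddEquiv.ofBijective hhom hhbij, ?_⟩
      funext x
      simp only [Function.comp_apply]
      rw [eq_comm, AddEquiv.symm_apply_eq]
      show (α*x + β*x^q)^2 = (t*l)*(f x) + (t*m)*(f x)^q
      exact (hid x).symm
    -- step 6: case split on A'
    by_cases hA' : l*A + m*C^q = 0
    · have hB' : l*B + m*B^q = 0 := by
        have h0 : (l*B + m*B^q)^2 = 0 := by rw [hconic, hA']; ring
        exact pow_eq_zero_iff (by norm_num) |>.mp h0
      have hC' : l*C + m*A^q ≠ 0 := by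
        intro hC0
        have hf0 : ∀ x : F, f x = 0 := by
          intro x
          have h0 : l * f x + m * (f x)^q = l * 0 + m * 0^q := by
            rw [hM x, hA', hB', hC0, zero_pow (by omega : q ≠ 0)]
            ring
          exact hNinj2 l m hNlm h0
        obtain ⟨y, hy, -⟩ := hpl 1 one_ne_zero 1
        rw [hf0, hf0] at hy
        exact one_ne_zero (by linear_combination -hy)
      apply hfinal (l*C + m*A^q) 0 (l*C + m*A^q) hC'
      intro x
      linear_combination (l*C + m*A^q) * hM x + ((l*C + m*A^q)*x^2) * hA'
        + ((l*C + m*A^q)*(x*x^q)) * hB'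
    · apply hfinal (4*(l*A + m*C^q)) (2*(l*A + m*C^q)) (l*B + m*B^q)
        (mul_ne_zero h4 hA')
      intro x
      linear_combination 4*(l*A + m*C^q) * hM x - (x^q)^2 * hconic
  · intro hle
    exact planar_of_linEquiv _ _ hle (planar_sq F h2)

theorem stmt1 (p k ℓ : ℕ) (hp : p.Prime) (hodd : Odd p) (hk : 0 < k) (hl : 0 < ℓ)
    (hkl : k ∣ ℓ) (q Q : ℕ) (hq : q = p ^ k) (hQ : Q = p ^ ℓ)
    (F : Type) [Field F] [Fintype F] (hF : Fintype.card F = p ^ (2 * k))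
    (c0 c1 c2 c3 : F) (f : F → F)
    (hf : ∀ x : F, f x = c0 * x ^ (q * Q + q) + c1 * x ^ (q * Q + 1)
        + c2 * x ^ (Q + q) + c3 * x ^ (Q + 1)) :
    IsPlanarFn f ↔ LinEquivFn f (fun x : F => x ^ 2) := by
  obtain ⟨m, hm⟩ := hkl
  have hqq2 : ∀ x : F, (x ^ q) ^ q = x := by
    intro x
    rw [← pow_mul, hq, ← pow_add, ← two_mul, ← hF]
    exact FiniteField.pow_card x
  have hQm : Q = q ^ m := by rw [hQ, hq, hm, pow_mul]
  have H : ∀ n : ℕ, ∀ x : F, x ^ q ^ n = x ^ q ^ (n % 2) := by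
    intro n
    induction n using Nat.strong_induction_on with
    | _ n ih =>
      intro x
      rcases Nat.lt_or_ge n 2 with hn | hn
      · rw [Nat.mod_eq_of_lt hn]
      · have h1 : q ^ n = q ^ (n - 2) * q ^ 2 := by
          rw [← pow_add]
          congr 1
          omega
        have h3 : ∀ y : F, y ^ q ^ 2 = y := by
          intro y
          rw [pow_two, pow_mul]
          exact hqq2 y
        rw [h1, pow_mul, h3, ih (n - 2) (by omega)]
        congr 2
        omega
  have hxQ : ∀ x : F, x ^ Q = x ^ q ^ (m % 2) := by
    intro x
    rw [hQm]
    exact H m x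
  rcases Nat.mod_two_eq_zero_or_one m with hpar | hpar
  · apply key p k hp hodd hk F hF q hq c3 (c1 + c2) c0
    intro x
    have hx : x ^ Q = x := by rw [hxQ, hpar, pow_zero, pow_one]
    rw [hf x, pow_add, pow_add, pow_add, pow_add, mul_comm q Q, pow_mul, hx, pow_one]
    ring
  · apply key p k hp hodd hk F hF q hq c1 (c0 + c3) c2
    intro x
    have hx : x ^ Q = x ^ q := by rw [hxQ, hpar, pow_one]
    rw [hf x, pow_add, pow_add, pow_add, pow_add, mul_comm q Q, pow_mul, hx, pow_one, hqq2]
    ring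
end

section
/- Let p be an odd prime, q = p^k, and let α ∈ F_{q²} and β ∈ F_q be not both zero. Put D(X) = α·X² + β·X + α^q ∈ F_{q²}[X] and Δ = β² − 4·α·α^q (an element of F_q). Then: (1) D has a repeated root in an algebraic closure of F_{q²} if and only if Δ = 0, and in that case α ≠ 0 and the repeated root lies in μ_{q+1}; (2) D has two distinct roots, both lying in μ_{q+1}, if and only if Δ is a non-square in F_q^* (i.e. Δ ≠ 0 and Δ = z² has no solution z ∈ F_q); (3) D has no roots in μ_{q+1} if and only if Δ is a nonzero square in F_q. -/
open Polynomial

lemma sq_dvd_root' {R : Type*} [CommRing R] (P : R[X]) (z : R) (h : (X - C z) ^ 2 ∣ P) :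
    P.eval z = 0 ∧ P.derivative.eval z = 0 := by
  obtain ⟨Q, rfl⟩ := h
  constructor
  · simp
  · simp [derivative_mul, derivative_pow]

theorem stmt2 (p k : ℕ) (hp : p.Prime) (hodd : Odd p) (hk : 0 < k)
    (q : ℕ) (hq : q = p ^ k)
    (F : Type) [Field F] [Fintype F] (hF : Fintype.card F = p ^ (2 * k))
    (α β : F) (hβ : β ^ q = β) (hne : ¬(α = 0 ∧ β = 0))
    (D : Polynomial F) (hD : D = C α * X ^ 2 + C β * X + C (α ^ q))
    (Δ : F) (hΔ : Δ = β ^ 2 - 4 * (α * α ^ q)) :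
    -- (1): D has a repeated root in an algebraic closure iff Δ = 0, and then α ≠ 0 and
    -- the repeated root lies in μ_{q+1}
    ((∃ z : AlgebraicClosure F,
        (X - C z) ^ 2 ∣ D.map (algebraMap F (AlgebraicClosure F))) ↔ Δ = 0)
    ∧ (Δ = 0 → α ≠ 0 ∧ ∀ z : AlgebraicClosure F,
        (X - C z) ^ 2 ∣ D.map (algebraMap F (AlgebraicClosure F)) → z ^ (q + 1) = 1)
    -- (2): D has two distinct roots, both in μ_{q+1}, iff Δ is a non-square in F_q^*
    ∧ ((∃ z w : F, z ≠ w ∧ D.eval z = 0 ∧ D.eval w = 0 ∧ z ^ (q + 1) = 1 ∧ w ^ (q + 1) = 1)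
        ↔ (Δ ≠ 0 ∧ ¬ ∃ z : F, z ^ q = z ∧ z ^ 2 = Δ))
    -- (3): D has no roots in μ_{q+1} iff Δ is a nonzero square in F_q
    ∧ ((∀ z : F, z ^ (q + 1) = 1 → D.eval z ≠ 0)
        ↔ (Δ ≠ 0 ∧ ∃ z : F, z ^ q = z ∧ z ^ 2 = Δ)) := by
  haveI : Fact p.Prime := ⟨hp⟩
  have hp2 : p ≠ 2 := by rintro rfl; simp [Nat.odd_iff] at hodd
  have hq0 : q ≠ 0 := by rw [hq]; exact pow_ne_zero _ hp.pos.ne'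
  have hring : ringChar F = p := by
    obtain ⟨n, hprime, hcn⟩ := FiniteField.card F (ringChar F)
    have hd : ringChar F ∣ p ^ (2 * k) := by
      rw [← hF, hcn]; exact dvd_pow_self _ n.ne_zero
    exact (Nat.prime_dvd_prime_iff_eq hprime hp).mp (hprime.dvd_of_dvd_pow hd)
  haveI hcharP : CharP F p := ringChar.of_eq hring
  have h2ne : (2 : F) ≠ 0 := by
    intro h
    have := (CharP.cast_eq_zero_iff F p 2).mp (by exact_mod_cast h)
    exact hp2 ((Nat.prime_dvd_prime_iff_eq hp Nat.prime_two).mp this)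
  have h4ne : (4 : F) ≠ 0 := by
    have : (4 : F) = 2 * 2 := by norm_num
    rw [this]; exact mul_ne_zero h2ne h2ne
  have hqodd : Odd q := hq ▸ hodd.pow
  have hsubq : ∀ a b : F, (a - b) ^ q = a ^ q - b ^ q := by
    intro a b; rw [hq]; exact sub_pow_char_pow ..
  have hnegq : ∀ a : F, (-a) ^ q = -a ^ q := fun a => hqodd.neg_pow a
  have haddq : ∀ a b : F, (a + b) ^ q = a ^ q + b ^ q := by
    intro a b; rw [hq]; exact add_pow_char_pow ..
  have h2q : (2 : F) ^ q = 2 := by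
    rw [show (2 : F) = 1 + 1 by norm_num, haddq]; norm_num
  have hfix : ∀ a : F, (a ^ q) ^ q = a := by
    intro a
    rw [← pow_mul]
    have : q * q = Fintype.card F := by rw [hF, hq, ← pow_add, two_mul]
    rw [this, FiniteField.pow_card]
  have hαqfrob : ∀ a : F, a ≠ 0 → a ^ q ≠ 0 := fun a ha => pow_ne_zero _ ha
  -- Frobenius of the standard root expression
  have hfrobroot : ∀ a b : F, ((2 * a)⁻¹ * b) ^ q = (2 * a ^ q)⁻¹ * b ^ q := by
    intro a b
    rw [mul_pow, inv_pow, mul_pow, h2q]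
  have hΔq : Δ ^ q = Δ := by
    rw [hΔ, hsubq, mul_pow, mul_pow]
    have h4 : (4 : F) ^ q = 4 := by
      have : (4 : F) = 2 * 2 := by norm_num
      rw [this, mul_pow, h2q]
    rw [h4, hfix α, ← pow_mul, mul_comm 2 q, pow_mul, hβ]
    ring
  -- evaluation lemmas
  have heval : ∀ z : F, D.eval z = α * z ^ 2 + β * z + α ^ q := by
    intro z; simp [hD]
  set K := AlgebraicClosure F with hK
  set i := algebraMap F K with hi
  have hinj : Function.Injective i := (algebraMap F K).injective
  have hmap : D.map i = C (i α) * X ^ 2 + C (i β) * X + C (i (α ^ q)) := by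
    rw [hD, Polynomial.map_add, Polynomial.map_add, Polynomial.map_mul, Polynomial.map_mul,
      Polynomial.map_pow, map_C, map_X, map_C, map_C]
  have hev : ∀ z : K, (D.map i).eval z = i α * z ^ 2 + i β * z + i (α ^ q) := by
    intro z; rw [hmap]; simp
  have hder : ∀ z : K, (D.map i).derivative.eval z = 2 * i α * z + i β := by
    intro z
    rw [hmap, derivative_add, derivative_add, derivative_mul, derivative_mul,
      derivative_C, derivative_C, derivative_C, derivative_X, derivative_X_pow]
    simp
    ring
  have hi2 : (2 : K) = i 2 := (map_ofNat i 2).symm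
  have hi2ne : (2 : K) ≠ 0 := by rw [hi2]; exact fun h => h2ne (hinj (by rw [h, map_zero]))
  -- part (1) forward, valid for all α
  have hfwd : (∃ z : K, (X - C z) ^ 2 ∣ D.map i) → Δ = 0 := by
    rintro ⟨z, hdvd⟩
    obtain ⟨e1, e2⟩ := sq_dvd_root' _ _ hdvd
    rw [hev] at e1; rw [hder] at e2
    apply hinj
    rw [map_zero, hΔ, map_sub, map_pow, map_mul, map_mul]
    have h4K : i (4 : F) = 4 := map_ofNat i 4
    rw [h4K]
    linear_combination (2 * i α * z + i β) * e2 - 4 * (i α) * e1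
  by_cases hα : α = 0
  · -- α = 0 : β ≠ 0, Δ = β² is a nonzero square in F_q
    have hβ0 : β ≠ 0 := fun h => hne ⟨hα, h⟩
    have hα' : α ^ q = 0 := by rw [hα]; exact zero_pow hq0
    have hΔβ : Δ = β ^ 2 := by rw [hΔ, hα]; ring
    have hΔne : Δ ≠ 0 := by rw [hΔβ]; exact pow_ne_zero _ hβ0
    have hevz : ∀ z : F, D.eval z = β * z := by
      intro z; rw [heval z, hα', hα]; ring
    refine ⟨⟨hfwd, fun h => absurd h hΔne⟩, fun h => absurd h hΔne, ?_, ?_⟩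
    · constructor
      · rintro ⟨z, w, hzw, hz, hw, -, -⟩
        rw [hevz] at hz hw
        rcases mul_eq_zero.mp hz with h | h
        · exact absurd h hβ0
        rcases mul_eq_zero.mp hw with h' | h'
        · exact absurd h' hβ0
        exact absurd (h.trans h'.symm) hzw
      · rintro ⟨-, hS⟩
        exact absurd ⟨β, hβ, by rw [hΔβ]⟩ hS
    · constructor
      · intro _
        exact ⟨hΔne, β, hβ, by rw [hΔβ]⟩
      · rintro - z hz1 hz0
        rw [hevz] at hz0
        rcases mul_eq_zero.mp hz0 with h | h
        · exact hβ0 h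
        · rw [h, zero_pow (Nat.succ_ne_zero q)] at hz1
          exact zero_ne_one hz1
  · -- α ≠ 0
    have hαq : α ^ q ≠ 0 := pow_ne_zero _ hα
    by_cases hΔ0 : Δ = 0
    · -- repeated-root case
      set r := (2 * α)⁻¹ * (-β) with hr
      have h0 : β ^ 2 - 4 * (α * α ^ q) = 0 := by rw [← hΔ]; exact hΔ0
      have hkey : ∀ z : F, α * z ^ 2 + β * z + α ^ q = α * (z - r) ^ 2 := by
        intro z; rw [hr]; field_simp; linear_combination -h0
      have hrq : r ^ q = (2 * α ^ q)⁻¹ * (-β) := by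
        rw [hr, hfrobroot, hnegq, hβ]
      have hr1 : r ^ (q + 1) = 1 := by
        rw [pow_succ, hrq, hr]; field_simp; linear_combination h0
      have hb : β = -(2 * α * r) := by rw [hr]; field_simp
      have hc : α ^ q = α * r ^ 2 := by
        rw [hr]; field_simp; linear_combination -h0
      have hDfac : D = C α * (X - C r) ^ 2 := by
        rw [hD, hb, hc]
        simp only [map_neg, map_mul, map_pow, map_ofNat]
        ring
      have hmapfac : D.map i = C (i α) * (X - C (i r)) ^ 2 := by
        rw [hDfac, Polynomial.map_mul, Polynomial.map_pow, Polynomial.map_sub, map_C,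
          Polynomial.map_X, map_C]
      have hiα : i α ≠ 0 := fun h => hα (hinj (by rw [h, map_zero]))
      refine ⟨⟨hfwd, fun _ => ⟨i r, C (i α), by rw [hmapfac]; ring⟩⟩, fun _ => ⟨hα, ?_⟩, ?_, ?_⟩
      · intro z hdvd
        obtain ⟨e1, e2⟩ := sq_dvd_root' _ _ hdvd
        rw [hder] at e2
        have hir : i r = (2 * i α)⁻¹ * (-(i β)) := by
          rw [hr, map_mul, map_inv₀, map_mul, map_neg, map_ofNat]
        have hz : z = i r := by
          rw [hir]
          field_simp [hiα, hi2ne]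
          linear_combination e2
        rw [hz, ← map_pow, hr1, map_one]
      · constructor
        · rintro ⟨z, w, hzw, hz, hw, -, -⟩
          rw [heval, hkey] at hz hw
          rcases mul_eq_zero.mp hz with h | h
          · exact absurd h hα
          rcases mul_eq_zero.mp hw with h' | h'
          · exact absurd h' hα
          have hz' : z = r := by rwa [sq_eq_zero_iff, sub_eq_zero] at h
          have hw' : w = r := by rwa [sq_eq_zero_iff, sub_eq_zero] at h'
          exact absurd (hz'.trans hw'.symm) hzw
        · rintro ⟨h, -⟩; exact absurd hΔ0 h
      · constructor
        · intro hall
          have hDr : D.eval r = 0 := by rw [heval, hkey, sub_self]; ring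
          exact absurd hDr (hall r hr1)
        · rintro ⟨h, -⟩; exact absurd hΔ0 h
    · -- two distinct roots
      obtain ⟨δ, hδ⟩ : ∃ δ : F, δ * δ = Δ := by
        have hq1 : 1 ≤ q := Nat.one_le_iff_ne_zero.mpr hq0
        have hcard : Fintype.card F = q ^ 2 := by rw [hF, hq, ← pow_mul, mul_comm]
        have hΔ1 : Δ ^ (q - 1) = 1 := by
          have : Δ ^ (q - 1) * Δ = 1 * Δ := by
            rw [one_mul, ← pow_succ, Nat.sub_add_cancel hq1, hΔq]
          exact mul_right_cancel₀ hΔ0 this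
        have key : Δ ^ (Fintype.card F / 2) = 1 := by
          have hqm : q % 2 = 1 := Nat.odd_iff.mp hqodd
          have c1 : 2 * ((q + 1) / 2) = q + 1 := by omega
          have c2 : (q - 1) * (q + 1) = q ^ 2 - 1 := by
            zify [hq1, Nat.one_le_pow _ _ (by omega : 0 < q)]; ring
          have c4 : 2 * ((q - 1) * ((q + 1) / 2)) = q ^ 2 - 1 := by
            rw [mul_left_comm, c1, c2]
          have hodd2 : q ^ 2 % 2 = 1 := Nat.odd_iff.mp (hqodd.pow)
          have c3 : Fintype.card F / 2 = (q - 1) * ((q + 1) / 2) := by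
            rw [hcard, show q ^ 2 = 2 * ((q - 1) * ((q + 1) / 2)) + 1 by omega,
              Nat.mul_add_div (by norm_num)]
            norm_num
          rw [c3, pow_mul, hΔ1, one_pow]
        obtain ⟨δ, hδ⟩ := (FiniteField.isSquare_iff (by rw [hring]; exact hp2) hΔ0).mpr key
        exact ⟨δ, hδ.symm⟩
      have hδ0 : δ ≠ 0 := fun h => hΔ0 (by rw [← hδ, h, mul_zero])
      have hδΔ : δ * δ = β ^ 2 - 4 * (α * α ^ q) := by rw [hδ, hΔ]
      have hδq2 : (δ ^ q) * (δ ^ q) = δ * δ := by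
        rw [← mul_pow, hδ, hΔq]
      have hcases : δ ^ q = δ ∨ δ ^ q = -δ := by
        have h' : (δ ^ q - δ) * (δ ^ q + δ) = 0 := by linear_combination hδq2
        rcases mul_eq_zero.mp h' with h | h
        · left; linear_combination h
        · right; linear_combination h
      set r := (2 * α)⁻¹ * (-β + δ) with hr
      set s := (2 * α)⁻¹ * (-β - δ) with hs
      have hfac : ∀ z : F, α * z ^ 2 + β * z + α ^ q = α * (z - r) * (z - s) := by
        intro z; rw [hr, hs]; field_simp; linear_combination hδΔ
      have hroot : ∀ z : F, D.eval z = 0 ↔ z = r ∨ z = s := by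
        intro z
        rw [heval, hfac, mul_eq_zero, mul_eq_zero, sub_eq_zero, sub_eq_zero]
        constructor
        · rintro ((h | h) | h)
          · exact absurd h hα
          · exact Or.inl h
          · exact Or.inr h
        · rintro (h | h)
          · exact Or.inl (Or.inr h)
          · exact Or.inr h
      have hrq : r ^ q = (2 * α ^ q)⁻¹ * (-β + δ ^ q) := by
        rw [hr, hfrobroot]
        congr 1
        rw [show -β + δ = δ - β by ring, hsubq, hβ]; ring
      have hsq' : s ^ q = (2 * α ^ q)⁻¹ * (-β - δ ^ q) := by
        rw [hs, hfrobroot]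
        congr 1
        rw [show -β - δ = -(β + δ) by ring, hnegq, haddq, hβ]; ring
      rcases hcases with hcase | hcase
      · -- δ^q = δ : Δ is a square in F_q, no roots in μ
        have hr1 : r ^ (q + 1) = 1 → False := by
          intro h1
          rw [pow_succ, hrq, hcase, hr] at h1
          have e : (β - δ) ^ 2 = 4 * (α * α ^ q) := by
            field_simp at h1; linear_combination h1
          have e2 : (2 * δ) * (δ - β) = 0 := by linear_combination e + hδΔ
          rcases mul_eq_zero.mp e2 with h | h
          · exact (mul_ne_zero h2ne hδ0) h
          · have hβδ : δ = β := by linear_combination h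
            apply mul_ne_zero h4ne (mul_ne_zero hα hαq)
            linear_combination hδΔ - hβδ * (δ + β)
        have hs1 : s ^ (q + 1) = 1 → False := by
          intro h1
          rw [pow_succ, hsq', hcase, hs] at h1
          have e : (β + δ) ^ 2 = 4 * (α * α ^ q) := by
            field_simp at h1; linear_combination h1
          have e2 : (2 * δ) * (δ + β) = 0 := by linear_combination e + hδΔ
          rcases mul_eq_zero.mp e2 with h | h
          · exact (mul_ne_zero h2ne hδ0) h
          · have hβδ : δ = -β := by linear_combination h
            apply mul_ne_zero h4ne (mul_ne_zero hα hαq)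
            linear_combination hδΔ + hβδ * (-δ + β)
        have hS : ∃ z : F, z ^ q = z ∧ z ^ 2 = Δ := ⟨δ, hcase, by rw [sq]; exact hδ⟩
        refine ⟨⟨hfwd, fun h => absurd h hΔ0⟩, fun h => absurd h hΔ0, ?_, ?_⟩
        · constructor
          · rintro ⟨z, w, hzw, hz, hw, hz1, hw1⟩
            rcases (hroot z).mp hz with h | h
            · exact absurd (h ▸ hz1) hr1
            · exact absurd (h ▸ hz1) hs1
          · rintro ⟨-, hnS⟩; exact absurd hS hnS
        · refine ⟨fun _ => ⟨hΔ0, hS⟩, fun _ z hz1 hz0 => ?_⟩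
          rcases (hroot z).mp hz0 with h | h
          · exact hr1 (h ▸ hz1)
          · exact hs1 (h ▸ hz1)
      · -- δ^q = -δ : Δ is a non-square in F_q, both roots in μ
        have hrμ : r ^ (q + 1) = 1 := by
          rw [pow_succ, hrq, hcase, hr]; field_simp; linear_combination -hδΔ
        have hsμ : s ^ (q + 1) = 1 := by
          rw [pow_succ, hsq', hcase, hs]; field_simp; linear_combination -hδΔ
        have hrs : r ≠ s := by
          rw [hr, hs]; intro h
          have h' := mul_left_cancel₀ (inv_ne_zero (mul_ne_zero h2ne hα)) h
          apply hδ0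
          have h2δ : (2 : F) * δ = 0 := by linear_combination h'
          exact (mul_eq_zero.mp h2δ).resolve_left h2ne
        have hnS : ¬ ∃ z : F, z ^ q = z ∧ z ^ 2 = Δ := by
          rintro ⟨w, hw1, hw2⟩
          rw [sq, ← hδ] at hw2
          have h' : (w - δ) * (w + δ) = 0 := by linear_combination hw2
          have hδq : δ ^ q = δ := by
            rcases mul_eq_zero.mp h' with h | h
            · have hwδ : w = δ := by linear_combination h
              rw [hwδ] at hw1; exact hw1
            · have hwδ : w = -δ := by linear_combination h
              rw [hwδ, hnegq] at hw1
              linear_combination -hw1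
          rw [hcase] at hδq
          apply hδ0
          have h2δ : (2 : F) * δ = 0 := by linear_combination -hδq
          exact (mul_eq_zero.mp h2δ).resolve_left h2ne
        have hDr : D.eval r = 0 := by rw [heval, hfac, sub_self]; ring
        have hDs : D.eval s = 0 := by rw [heval, hfac]; rw [sub_self s]; ring
        refine ⟨⟨hfwd, fun h => absurd h hΔ0⟩, fun h => absurd h hΔ0, ?_, ?_⟩
        · exact ⟨fun _ => ⟨hΔ0, hnS⟩, fun _ => ⟨r, s, hrs, hDr, hDs, hrμ, hsμ⟩⟩
        · constructor
          · intro hall; exact absurd hDr (hall r hrμ)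
          · rintro ⟨-, hS⟩; exact absurd hS hnS
end

section
/- Let p be an odd prime, k and ℓ positive integers, q = p^k, Q = p^ℓ, and c = (c0,c1,c2,c3) ∈ F_{q²}⁴ with c ≠ (0,0,0,0). Then e2 = 0, θ2 = 0, e3 = 0 and θ3 = 0 all hold simultaneously if and only if there exists λ ∈ F_{q²} such that B(X) = λ·A(X) as polynomials (i.e. the rational function B(X)/A(X) is constant). -/
/-!
Comparing coefficients (the exponents `0, 1, Q, Q + 1` are distinct as `Q ≥ 2`), `B = λ A` says
`c̄₃ = λ c₀, c̄₂ = λ c₁, c̄₁ = λ c₂, c̄₀ = λ c₃`; substituting these makes `e₂, e₃, θ₂, θ₃` vanish.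
Conversely, since `2 ≠ 0`, `e₂ = e₃ = 0` means `c₀ c̄₀ = c₃ c̄₃` and `c₁ c̄₁ = c₂ c̄₂`. If `c₀ ≠ 0` take
`λ = c̄₃ / c₀`: the remaining relations are the first norm equation and the conjugates of
`θ₂ = θ₃ = 0`. If `c₀ = 0` then `c₃ = 0`, and `λ = c̄₂ / c₁` (or `λ = 0` when also `c₁ = 0`) works.
-/

open Polynomial

lemma Polynomial.C_mul_X_pow_succ_add_C_mul_X_pow_add_C_mul_X_add_C_inj {R : Type*}
    [CommSemiring R] {Q : ℕ} (hQ : 2 ≤ Q) {a b c d a' b' c' d' : R} :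
    C a * X ^ (Q + 1) + C b * X ^ Q + C c * X + C d
        = C a' * X ^ (Q + 1) + C b' * X ^ Q + C c' * X + C d' ↔
      a = a' ∧ b = b' ∧ c = c' ∧ d = d' := by
  refine ⟨fun h ↦ ?_, by rintro ⟨rfl, rfl, rfl, rfl⟩; rfl⟩
  have hcoeff (n : ℕ) := congrArg (coeff · n) h
  have hQ0 : Q ≠ 0 := by omega
  have hQ1 : Q ≠ 1 := by omega
  refine ⟨?_, ?_, ?_, ?_⟩
  · simpa [coeff_X, coeff_C, hQ0] using hcoeff (Q + 1)
  · simpa [coeff_X, coeff_C, hQ0, hQ1.symm] using hcoeff Q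
  · simpa [coeff_X, coeff_C, coeff_X_pow, hQ0, hQ1.symm] using hcoeff 1
  · simpa [coeff_X, coeff_C, coeff_X_pow, hQ0.symm] using hcoeff 0

lemma sub_add_eq_zero_and_add_sub_eq_zero_iff {K : Type*} [Field K] (h2 : (2 : K) ≠ 0)
    {a b c d : K} : -a - b + c + d = 0 ∧ -a + b - c + d = 0 ↔ a = d ∧ b = c := by
  constructor
  · rintro ⟨h, h'⟩
    refine ⟨mul_left_cancel₀ h2 ?_, mul_left_cancel₀ h2 ?_⟩
    · linear_combination -h - h'
    · linear_combination h' - h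
  · rintro ⟨rfl, rfl⟩
    constructor <;> ring

lemma FiniteField.two_ne_zero_of_odd_card {K : Type*} [Field K] [Fintype K]
    (h : Odd (Fintype.card K)) : (2 : K) ≠ 0 :=
  Ring.two_ne_zero fun hK ↦ Nat.not_even_iff_odd.mpr h
    (Nat.even_iff.mpr (FiniteField.even_card_iff_char_two.mp hK))

lemma FiniteField.pow_pow_eq_self {K : Type*} [Field K] [Fintype K] {q : ℕ}
    (hq : q * q = Fintype.card K) (x : K) : (x ^ q) ^ q = x := by
  rw [← pow_mul, hq, FiniteField.pow_card]

lemma exists_map_eq_mul_of_involutive {K : Type*} [Field K] (σ : K →*₀ K)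
    (hσ : Function.Involutive σ) {c0 c1 c2 c3 : K}
    (h03 : c0 * σ c0 = c3 * σ c3) (h12 : c1 * σ c1 = c2 * σ c2)
    (h2 : σ c2 * c3 = σ c0 * c1) (h3 : σ c1 * c3 = σ c0 * c2) :
    ∃ lam, σ c3 = lam * c0 ∧ σ c2 = lam * c1 ∧ σ c1 = lam * c2 ∧ σ c0 = lam * c3 := by
  have hσ0 {x : K} : σ x = 0 ↔ x = 0 :=
    ⟨fun h ↦ by rw [← hσ x, h, map_zero], fun h ↦ by rw [h, map_zero]⟩
  by_cases hc0 : c0 = 0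
  · have hc3 : c3 = 0 := by
      simpa [hc0, hσ0] using h03.symm
    by_cases hc1 : c1 = 0
    · have hc2 : c2 = 0 := by simpa [hc1, hσ0] using h12.symm
      exact ⟨0, by simp [hc0, hc1, hc2, hc3]⟩
    · refine ⟨σ c2 / c1, by simp [hc0, hc3], by field_simp, ?_, by simp [hc0, hc3]⟩
      field_simp
      linear_combination h12
  · have h2' := congrArg σ h2
    have h3' := congrArg σ h3
    simp only [map_mul, hσ _] at h2' h3'
    refine ⟨σ c3 / c0, by field_simp, ?_, ?_, ?_⟩ <;> field_simp
    · linear_combination -h3'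
    · linear_combination -h2'
    · linear_combination h03

theorem stmt4_general (p k ℓ : ℕ) (hp : p.Prime) (hodd : Odd p) (hl : 0 < ℓ)
    (q Q : ℕ) (hq : q = p ^ k) (hQ : Q = p ^ ℓ)
    (F : Type) [Field F] [Fintype F] (hF : Fintype.card F = p ^ (2 * k))
    (c0 c1 c2 c3 : F)
    (A B : Polynomial F)
    (hA : A = C c0 * X ^ (Q + 1) + C c1 * X ^ Q + C c2 * X + C c3)
    (hB : B = C (c3 ^ q) * X ^ (Q + 1) + C (c2 ^ q) * X ^ Q + C (c1 ^ q) * X + C (c0 ^ q))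
    (e2 e3 θ2 θ3 : F)
    (he2 : e2 = -(c0 * c0 ^ q) - c1 * c1 ^ q + c2 * c2 ^ q + c3 * c3 ^ q)
    (he3 : e3 = -(c0 * c0 ^ q) + c1 * c1 ^ q - c2 * c2 ^ q + c3 * c3 ^ q)
    (hθ2 : θ2 = c2 ^ q * c3 - c0 ^ q * c1)
    (hθ3 : θ3 = c1 ^ q * c3 - c0 ^ q * c2) :
    (e2 = 0 ∧ θ2 = 0 ∧ e3 = 0 ∧ θ3 = 0) ↔ (∃ lam : F, B = C lam * A) := by
  subst hA hB he2 he3 hθ2 hθ3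
  have h2 : (2 : F) ≠ 0 := FiniteField.two_ne_zero_of_odd_card (hF ▸ hodd.pow)
  have hQ2 : 2 ≤ Q := hQ ▸ Nat.one_lt_pow hl.ne' hp.one_lt
  have hq0 : q ≠ 0 := hq ▸ pow_ne_zero _ hp.ne_zero
  have hσ : Function.Involutive (powMonoidWithZeroHom hq0 : F →*₀ F) :=
    FiniteField.pow_pow_eq_self (by rw [hF, hq, ← pow_add, two_mul])
  have hmul (lam : F) : C lam * (C c0 * X ^ (Q + 1) + C c1 * X ^ Q + C c2 * X + C c3)
      = C (lam * c0) * X ^ (Q + 1) + C (lam * c1) * X ^ Q + C (lam * c2) * X + C (lam * c3) := by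
    simp only [C_mul]; ring
  simp only [hmul, C_mul_X_pow_succ_add_C_mul_X_pow_add_C_mul_X_add_C_inj hQ2, sub_eq_zero]
  constructor
  · rintro ⟨he2, hθ2, he3, hθ3⟩
    obtain ⟨h03, h12⟩ := (sub_add_eq_zero_and_add_sub_eq_zero_iff h2).mp ⟨he2, he3⟩
    exact exists_map_eq_mul_of_involutive _ hσ h03 h12 hθ2 hθ3
  · rintro ⟨lam, hc3, hc2, hc1, hc0⟩
    simp only [hc0, hc1, hc2, hc3]
    refine ⟨?_, ?_, ?_, ?_⟩ <;> ring

theorem stmt4 (p k ℓ : ℕ) (hp : p.Prime) (hodd : Odd p) (hk : 0 < k) (hl : 0 < ℓ)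
    (q Q : ℕ) (hq : q = p ^ k) (hQ : Q = p ^ ℓ)
    (F : Type) [Field F] [Fintype F] (hF : Fintype.card F = p ^ (2 * k))
    (c0 c1 c2 c3 : F) (hc : ¬(c0 = 0 ∧ c1 = 0 ∧ c2 = 0 ∧ c3 = 0))
    (A B : Polynomial F)
    (hA : A = C c0 * X ^ (Q + 1) + C c1 * X ^ Q + C c2 * X + C c3)
    (hB : B = C (c3 ^ q) * X ^ (Q + 1) + C (c2 ^ q) * X ^ Q + C (c1 ^ q) * X + C (c0 ^ q))
    (e2 e3 θ2 θ3 : F)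
    (he2 : e2 = -(c0 * c0 ^ q) - c1 * c1 ^ q + c2 * c2 ^ q + c3 * c3 ^ q)
    (he3 : e3 = -(c0 * c0 ^ q) + c1 * c1 ^ q - c2 * c2 ^ q + c3 * c3 ^ q)
    (hθ2 : θ2 = c2 ^ q * c3 - c0 ^ q * c1)
    (hθ3 : θ3 = c1 ^ q * c3 - c0 ^ q * c2) :
    (e2 = 0 ∧ θ2 = 0 ∧ e3 = 0 ∧ θ3 = 0) ↔ (∃ lam : F, B = C lam * A) :=
  stmt4_general p k ℓ hp hodd hl q Q hq hQ F hF c0 c1 c2 c3 A B hA hB e2 e3 θ2 θ3 he2 he3 hθ2 hθ3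
end

section
/- Let p be an odd prime, k and ℓ positive integers, q = p^k, Q = p^ℓ, and c = (c0,c1,c2,c3) ∈ F_{q²}⁴. If the map f_c is planar over F_{q²}, then A(α) ≠ 0 for every α ∈ μ_{q+1}, and there is no λ ∈ F_{q²} such that B(X) = λ·A(X) as polynomials. -/
open Polynomial

theorem stmt7 (p k ℓ : ℕ) (hp : p.Prime) (hodd : Odd p) (hk : 0 < k) (hl : 0 < ℓ)
    (q Q : ℕ) (hq : q = p ^ k) (hQ : Q = p ^ ℓ)
    (F : Type) [Field F] [Fintype F] (hF : Fintype.card F = p ^ (2 * k))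
    (c0 c1 c2 c3 : F) (f : F → F)
    (hf : ∀ x : F, f x = c0 * x ^ (q * Q + q) + c1 * x ^ (q * Q + 1)
        + c2 * x ^ (Q + q) + c3 * x ^ (Q + 1))
    (A B : Polynomial F)
    (hA : A = C c0 * X ^ (Q + 1) + C c1 * X ^ Q + C c2 * X + C c3)
    (hB : B = C (c3 ^ q) * X ^ (Q + 1) + C (c2 ^ q) * X ^ Q + C (c1 ^ q) * X + C (c0 ^ q))
    (hplanar : IsPlanarFn f) :
    (∀ α : F, α ^ (q + 1) = 1 → A.eval α ≠ 0) ∧ ¬ ∃ lam : F, B = C lam * A := by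
  classical
  -- numeric preliminaries
  have hp3 : 3 ≤ p := by
    obtain ⟨m, rfl⟩ := hodd
    have := hp.two_le; omega
  have hq1 : 1 ≤ q := by rw [hq]; exact Nat.one_le_pow _ _ (by omega)
  have hq3 : 3 ≤ q := by
    calc 3 ≤ p := hp3
    _ ≤ p ^ k := Nat.le_self_pow hk.ne' p
    _ = q := hq.symm
  have hQ1 : 1 ≤ Q := by rw [hQ]; exact Nat.one_le_pow _ _ (by omega)
  obtain ⟨q', hq'⟩ : ∃ n, q = n + 1 := ⟨q - 1, by omega⟩
  -- the characteristic of F is p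
  haveI : CharP F (ringChar F) := ringChar.charP F
  have hrp : (ringChar F).Prime := CharP.char_is_prime F _
  obtain ⟨n, -, hcardr⟩ := FiniteField.card F (ringChar F)
  have hpr : p = ringChar F := by
    have hdvd : p ∣ (ringChar F) ^ (n : ℕ) := by
      rw [← hcardr, hF]; exact dvd_pow_self p (by omega)
    exact (Nat.prime_dvd_prime_iff_eq hp hrp).mp (hp.dvd_of_dvd_pow hdvd)
  haveI : CharP F p := hpr ▸ ringChar.charP F
  haveI := Fact.mk hp
  have hcardF : Fintype.card F = q * q := by
    rw [hF, hq, ← pow_add]; ring_nf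
  haveI hnontriv : Nontrivial F :=
    Fintype.one_lt_card_iff_nontrivial.mp (by rw [hcardF]; nlinarith)
  -- Frobenius
  have frob_add : ∀ x y : F, (x + y) ^ q = x ^ q + y ^ q := by
    intro x y; rw [hq]; exact add_pow_char_pow x y p k
  have frob_sub : ∀ x y : F, (x - y) ^ q = x ^ q - y ^ q := by
    intro x y; rw [hq]; exact sub_pow_char_pow x y k
  -- basic facts about f
  have hqQpos : 0 < q * Q := Nat.mul_pos (by omega) (by omega)
  have hf0 : f 0 = 0 := by
    rw [hf, zero_pow (by omega), zero_pow (by omega), zero_pow (by omega), zero_pow (by omega)]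
    ring
  have hfA : ∀ x : F, f x = x ^ (Q + 1) * A.eval (x ^ (q - 1)) := by
    intro x
    rw [hf, hA]
    simp only [eval_add, eval_mul, eval_pow, eval_C, eval_X]
    rw [hq']
    simp only [Nat.add_sub_cancel]
    ring
  -- 2 ^ (q-1) = 1
  have h2ne : (2 : F) ≠ 0 := by
    intro h
    have h2 : ((2 : ℕ) : F) = 0 := by push_cast; exact h
    have := (CharP.cast_eq_zero_iff F p 2).mp h2
    have := Nat.le_of_dvd (by omega) this
    omega
  have h2q : (2 : F) ^ q = 2 := by
    have h12 : ((1 : F) + 1) ^ q = 1 ^ q + 1 ^ q := frob_add 1 1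
    norm_num at h12
    exact h12
  have h2q1 : (2 : F) ^ (q - 1) = 1 := by
    apply mul_right_cancel₀ h2ne
    rw [← pow_succ]
    have hs : q - 1 + 1 = q := by omega
    rw [hs, h2q, one_mul]
  have hfact : q * q - 1 = (q - 1) * (q + 1) := by
    apply Nat.sub_eq_of_eq_add
    rw [hq', Nat.add_sub_cancel]; ring
  -- Part 1
  have part1 : ∀ α : F, α ^ (q + 1) = 1 → A.eval α ≠ 0 := by
    intro α hα hA0
    have hα0 : α ≠ 0 := by
      intro h; rw [h, zero_pow (by omega)] at hα; exact one_ne_zero hα.symm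
    -- find β with β ^ (q-1) = α
    obtain ⟨β, hβ0, hβ⟩ : ∃ β : F, β ≠ 0 ∧ β ^ (q - 1) = α := by
      obtain ⟨g, hg⟩ := IsCyclic.exists_generator (α := Fˣ)
      have hord : orderOf g = q * q - 1 := by
        rw [orderOf_eq_card_of_forall_mem_zpowers hg, Nat.card_eq_fintype_card,
          Fintype.card_units, hcardF]
      set u : Fˣ := Units.mk0 α hα0 with hu
      have huq : u ^ (q + 1) = 1 := by
        ext
        push_cast [hu]
        exact hα
      obtain ⟨m, hm0⟩ := mem_powers_iff_mem_zpowers.mpr (hg u)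
      have hm : g ^ m = u := hm0
      have hdvd : (q - 1) * (q + 1) ∣ m * (q + 1) := by
        rw [← hfact, ← hord]
        apply orderOf_dvd_of_pow_eq_one
        rw [pow_mul, hm, huq]
      have hdvd' : q - 1 ∣ m := (Nat.mul_dvd_mul_iff_right (by omega)).mp hdvd
      obtain ⟨d, hd⟩ := hdvd'
      refine ⟨((g ^ d : Fˣ) : F), Units.ne_zero _, ?_⟩
      have hgd : (g ^ d) ^ (q - 1) = u := by
        rw [← pow_mul, mul_comm, ← hd, hm]
      calc ((g ^ d : Fˣ) : F) ^ (q - 1) = (((g ^ d) ^ (q - 1) : Fˣ) : F) := by push_cast; ring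
        _ = α := by rw [hgd, hu]; rfl
    have hfβ : f β = 0 := by rw [hfA β, hβ, hA0, mul_zero]
    have hfββ : f (β + β) = 0 := by
      have h2β : β + β = 2 * β := by ring
      rw [h2β, hfA (2 * β), mul_pow 2 β (q - 1), h2q1, one_mul, hβ, hA0, mul_zero]
    obtain ⟨x0, -, huniq⟩ := hplanar β hβ0 0
    have e0 : f (0 + β) - f 0 = 0 := by rw [zero_add, hfβ, hf0, sub_zero]
    have e1 : f (β + β) - f β = 0 := by rw [hfββ, hfβ, sub_zero]
    exact hβ0 ((huniq β e1).trans (huniq 0 e0).symm)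
  refine ⟨part1, ?_⟩
  -- Part 2
  rintro ⟨lam, hlam⟩
  have hBA : ∀ y : F, B.eval y = lam * A.eval y := by
    intro y; rw [hlam]; simp
  have key : ∀ x : F, (f x) ^ q = lam * f x := by
    intro x
    rcases eq_or_ne x 0 with rfl | hx
    · rw [hf0, zero_pow (by omega), mul_zero]
    · obtain ⟨α, hαdef⟩ : ∃ y : F, y = x ^ (q - 1) := ⟨_, rfl⟩
      have hα : α ^ (q + 1) = 1 := by
        rw [hαdef, ← pow_mul]
        have he : (q - 1) * (q + 1) = Fintype.card F - 1 := by rw [hcardF, ← hfact]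
        rw [he]
        exact FiniteField.pow_card_sub_one_eq_one x hx
      have hAq : (A.eval α) ^ q
          = c0 ^ q * α ^ ((Q + 1) * q) + c1 ^ q * α ^ (Q * q) + c2 ^ q * α ^ q + c3 ^ q := by
        rw [hA]
        simp only [eval_add, eval_mul, eval_pow, eval_C, eval_X]
        rw [frob_add, frob_add, frob_add, mul_pow, mul_pow, mul_pow, ← pow_mul, ← pow_mul]
      have e1 : α ^ ((Q + 1) * q) * α ^ (Q + 1) = 1 := by
        rw [← pow_add]
        have he : (Q + 1) * q + (Q + 1) = (q + 1) * (Q + 1) := by ring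
        rw [he, pow_mul, hα, one_pow]
      have e2 : α ^ (Q * q) * α ^ (Q + 1) = α := by
        rw [← pow_add]
        have he : Q * q + (Q + 1) = (q + 1) * Q + 1 := by ring
        rw [he, pow_add, pow_mul, hα, one_pow, one_mul, pow_one]
      have e3 : α ^ q * α ^ (Q + 1) = α ^ Q := by
        rw [← pow_add]
        have he : q + (Q + 1) = (q + 1) + Q := by ring
        rw [he, pow_add, hα, one_mul]
      have hBα : B.eval α = α ^ (Q + 1) * (A.eval α) ^ q := by
        rw [hB]
        simp only [eval_add, eval_mul, eval_pow, eval_C, eval_X]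
        rw [hAq]
        linear_combination (-(c0 ^ q)) * e1 - c1 ^ q * e2 - c2 ^ q * e3
      have hx1 : x ^ ((Q + 1) * q) = x ^ (Q + 1) * α ^ (Q + 1) := by
        rw [hαdef, ← pow_mul, ← pow_add]
        congr 1
        rw [hq']
        simp only [Nat.add_sub_cancel]
        ring
      calc (f x) ^ q = (x ^ (Q + 1)) ^ q * (A.eval α) ^ q := by
            rw [hfA x, ← hαdef, mul_pow]
        _ = x ^ ((Q + 1) * q) * (A.eval α) ^ q := by rw [← pow_mul]
        _ = x ^ (Q + 1) * (α ^ (Q + 1) * (A.eval α) ^ q) := by rw [hx1]; ring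
        _ = x ^ (Q + 1) * B.eval α := by rw [← hBα]
        _ = x ^ (Q + 1) * (lam * A.eval α) := by rw [hBA]
        _ = lam * f x := by rw [hfA x, ← hαdef]; ring
  obtain ⟨a, ha⟩ := exists_ne (0 : F)
  obtain ⟨b, hb⟩ : ∃ b : F, b ^ q ≠ lam * b := by
    by_contra hcon
    push_neg at hcon
    have hP : (X ^ q - C lam * X : F[X]) = 0 := by
      apply Polynomial.eq_zero_of_natDegree_lt_card_of_eval_eq_zero _ Function.injective_id
      · intro i
        simp only [eval_sub, eval_pow, eval_mul, eval_C, eval_X, id]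
        rw [hcon i, sub_self]
      · have h1 : (C lam * X : F[X]).natDegree ≤ 1 :=
          le_trans (natDegree_mul_le) (by simp)
        have h2 : (X ^ q - C lam * X : F[X]).natDegree ≤ q := by
          refine le_trans (Polynomial.natDegree_sub_le _ _)
            (max_le (by simp) (le_trans h1 (by omega)))
        calc (X ^ q - C lam * X : F[X]).natDegree ≤ q := h2
          _ < Fintype.card F := by rw [hcardF]; nlinarith
    have hc := congrArg (fun P : F[X] => P.coeff q) hP
    simp only [coeff_sub, coeff_X_pow, coeff_C_mul, Polynomial.coeff_X, coeff_zero] at hc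
    rw [if_neg (show ¬(1 = q) by omega)] at hc
    norm_num at hc
  obtain ⟨x, hxeq, -⟩ := hplanar a ha b
  apply hb
  calc b ^ q = (f (x + a) - f x) ^ q := by rw [hxeq]
    _ = f (x + a) ^ q - f x ^ q := frob_sub _ _
    _ = lam * f (x + a) - lam * f x := by rw [key, key]
    _ = lam * (f (x + a) - f x) := by ring
    _ = lam * b := by rw [hxeq]
end

section
/- Let p be an odd prime, k and ℓ positive integers, q = p^k, Q = p^ℓ, and c = (c0,c1,c2,c3) ∈ F_{q²}⁴ with c ≠ (0,0,0,0). Assume A(α) ≠ 0 for every α ∈ μ_{q+1}, and that B(X) = λ·A(X) for some λ ∈ F_{q²}. Then there exists y ∈ F_{q²} with y ≠ 0 such that the equation f_c(x) = y has at least q+1 solutions x ∈ F_{q²}. -/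
open Polynomial

theorem stmt8 (p k ℓ : ℕ) (hp : p.Prime) (hodd : Odd p) (hk : 0 < k) (hl : 0 < ℓ)
    (q Q : ℕ) (hq : q = p ^ k) (hQ : Q = p ^ ℓ)
    (F : Type) [Field F] [Fintype F] (hF : Fintype.card F = p ^ (2 * k))
    (c0 c1 c2 c3 : F) (hc : ¬(c0 = 0 ∧ c1 = 0 ∧ c2 = 0 ∧ c3 = 0))
    (f : F → F)
    (hf : ∀ x : F, f x = c0 * x ^ (q * Q + q) + c1 * x ^ (q * Q + 1)
        + c2 * x ^ (Q + q) + c3 * x ^ (Q + 1))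
    (A B : Polynomial F)
    (hA : A = C c0 * X ^ (Q + 1) + C c1 * X ^ Q + C c2 * X + C c3)
    (hB : B = C (c3 ^ q) * X ^ (Q + 1) + C (c2 ^ q) * X ^ Q + C (c1 ^ q) * X + C (c0 ^ q))
    (hnoroot : ∀ α : F, α ^ (q + 1) = 1 → A.eval α ≠ 0)
    (hconst : ∃ lam : F, B = C lam * A) :
    ∃ y : F, y ≠ 0 ∧ q + 1 ≤ Nat.card {x : F // f x = y} := by
  classical
  obtain ⟨lam, hlam⟩ := hconst
  -- basic numerology
  have hq2 : 2 ≤ q := by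
    rw [hq]
    calc 2 ≤ p := hp.two_le
      _ = p ^ 1 := (pow_one p).symm
      _ ≤ p ^ k := Nat.pow_le_pow_right hp.pos hk
  obtain ⟨r, hr⟩ : ∃ r, q = r + 1 := ⟨q - 1, by omega⟩
  have hr1 : 1 ≤ r := by omega
  have cardF : Fintype.card F = q ^ 2 := by
    rw [hF, hq, ← pow_mul]; congr 1; ring
  have hxq2 : ∀ x : F, x ^ (q ^ 2) = x := fun x => by
    rw [← cardF]; exact FiniteField.pow_card x
  -- characteristic
  haveI hcharF : CharP F p := by
    haveI := ringChar.charP F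
    have hcp : (ringChar F).Prime := CharP.char_is_prime F (ringChar F)
    have hdvd : ringChar F ∣ p ^ (2 * k) := by
      have h0 : ((p ^ (2 * k) : ℕ) : F) = 0 := by
        rw [← hF]; exact FiniteField.cast_card_eq_zero F
      exact (CharP.cast_eq_zero_iff F (ringChar F) _).mp h0
    have : ringChar F = p :=
      (Nat.prime_dvd_prime_iff_eq hcp hp).mp (hcp.dvd_of_dvd_pow hdvd)
    rw [← this]; infer_instance
  haveI : Fact p.Prime := ⟨hp⟩
  have hadd : ∀ a b : F, (a + b) ^ q = a ^ q + b ^ q := fun a b => by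
    rw [hq]; exact add_pow_char_pow a b p k
  -- key polynomial evaluation identity
  have keyP : ∀ (a b d e : F) (x : F),
      x ^ (Q + 1) * eval (x ^ r) (C a * X ^ (Q + 1) + C b * X ^ Q + C d * X + C e)
        = a * x ^ (q * Q + q) + b * x ^ (q * Q + 1) + d * x ^ (Q + q) + e * x ^ (Q + 1) := by
    intro a b d e x
    simp only [eval_add, eval_mul, eval_pow, eval_C, eval_X]
    rw [hr]
    ring
  have key1 : ∀ x : F, f x = x ^ (Q + 1) * A.eval (x ^ r) := fun x => by
    rw [hf, hA, keyP]
  -- power reduction lemmas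
  have hm : ∀ (x : F) (m : ℕ), x ^ (q ^ 2 * m) = x ^ m := fun x m => by
    rw [pow_mul, hxq2]
  have r1 : ∀ x : F, (x ^ (q * Q + q)) ^ q = x ^ (Q + 1) := fun x => by
    rw [← pow_mul]
    have h : (q * Q + q) * q = q ^ 2 * (Q + 1) := by ring
    rw [h, hm]
  have r2 : ∀ x : F, (x ^ (q * Q + 1)) ^ q = x ^ (Q + q) := fun x => by
    rw [← pow_mul]
    have h : (q * Q + 1) * q = q ^ 2 * Q + q := by ring
    rw [h, pow_add, hm, ← pow_add]
  have r3 : ∀ x : F, (x ^ (Q + q)) ^ q = x ^ (q * Q + 1) := fun x => by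
    rw [← pow_mul]
    have h : (Q + q) * q = q * Q + q ^ 2 * 1 := by ring
    rw [h, pow_add, hm, pow_one, ← pow_succ]
  have r4 : ∀ x : F, (x ^ (Q + 1)) ^ q = x ^ (q * Q + q) := fun x => by
    rw [← pow_mul]; congr 1; ring
  have key2 : ∀ x : F, (f x) ^ q = x ^ (Q + 1) * B.eval (x ^ r) := fun x => by
    rw [hf, hadd, hadd, hadd, mul_pow, mul_pow, mul_pow, mul_pow,
      r1, r2, r3, r4, hB, keyP]
    ring
  -- f x ≠ 0 for x ≠ 0
  have hcard1 : Fintype.card F - 1 = r * (q + 1) := by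
    rw [cardF, hr]
    have h : (r + 1) ^ 2 = r * (r + 1 + 1) + 1 := by ring
    omega
  have fnz : ∀ x : F, x ≠ 0 → f x ≠ 0 := by
    intro x hx
    have hmu : (x ^ r) ^ (q + 1) = 1 := by
      rw [← pow_mul, ← hcard1]
      exact FiniteField.pow_card_sub_one_eq_one x hx
    rw [key1]
    exact mul_ne_zero (pow_ne_zero _ hx) (hnoroot _ hmu)
  -- (f x)^r = lam for x ≠ 0
  have flam : ∀ x : F, x ≠ 0 → (f x) ^ r = lam := by
    intro x hx
    have h1 : (f x) ^ q = lam * f x := by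
      rw [key2, hlam, eval_mul, eval_C, ← mul_assoc, mul_comm (x ^ (Q + 1)) lam,
        mul_assoc, ← key1]
    have h2 : (f x) ^ r * f x = lam * f x := by
      rw [← pow_succ, ← hr]; exact h1
    exact mul_right_cancel₀ (fnz x hx) h2
  -- pigeonhole
  set D : Finset F := Finset.univ.filter (fun x => x ≠ 0) with hD
  set T : Finset F := Finset.univ.filter (fun y => y ^ r = lam ∧ y ≠ 0) with hT
  have hmaps : ∀ x ∈ D, f x ∈ T := by
    intro x hx
    simp only [hD, Finset.mem_filter, Finset.mem_univ, true_and] at hx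
    simp only [hT, Finset.mem_filter, Finset.mem_univ, true_and]
    exact ⟨flam x hx, fnz x hx⟩
  have hTcard : T.card ≤ r := by
    have hsub : T ⊆ (nthRoots r lam).toFinset := by
      intro y hy
      simp only [hT, Finset.mem_filter, Finset.mem_univ, true_and] at hy
      rw [Multiset.mem_toFinset, mem_nthRoots (by omega : 0 < r)]
      exact hy.1
    calc T.card ≤ (nthRoots r lam).toFinset.card := Finset.card_le_card hsub
      _ ≤ Multiset.card (nthRoots r lam) := Multiset.toFinset_card_le _
      _ ≤ r := card_nthRoots r lam
  have hDcard : D.card = Fintype.card F - 1 := by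
    rw [hD, Finset.filter_ne', Finset.card_erase_of_mem (Finset.mem_univ 0),
      Finset.card_univ]
  have hlt : T.card * q < D.card := by
    have h1 : T.card * q ≤ r * q := Nat.mul_le_mul_right q hTcard
    have h2 : D.card = r * (q + 1) := by rw [hDcard, hcard1]
    have h3 : r * q < r * (q + 1) := by
      exact Nat.mul_lt_mul_of_pos_left (lt_add_one q) (by omega)
    omega
  obtain ⟨y, hyT, hcount⟩ :=
    Finset.exists_lt_card_fiber_of_mul_lt_card_of_maps_to hmaps hlt
  simp only [hT, Finset.mem_filter, Finset.mem_univ, true_and] at hyT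
  refine ⟨y, hyT.2, ?_⟩
  have hsub2 : D.filter (fun x => f x = y) ⊆ Finset.univ.filter (fun x => f x = y) := by
    apply Finset.filter_subset_filter
    exact Finset.filter_subset _ _
  have : q + 1 ≤ (Finset.univ.filter (fun x => f x = y)).card :=
    le_trans hcount (Finset.card_le_card hsub2)
  rw [Nat.card_eq_fintype_card, Fintype.card_subtype]
  exact this
end

section
/- Let p be an odd prime, k a positive integer, q = p^k, and a = (a0,a1,a2) ∈ F_{q²}³. Define f̃_a : F_{q²} → F_{q²} by f̃_a(x) = a0·x^{2q} + a1·x^{q+1} + a2·x², and set ẽ = a2·a2^q − a0·a0^q and θ̃ = a1^q·a2 − a0^q·a1. Then f̃_a is two-to-one on F_{q²} if and only if ẽ² − θ̃^{q+1} is a nonzero square in F_q. -/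
/-- A map between finite sets is two-to-one: if the domain has even cardinality every fiber
has size 0 or 2; if it has odd cardinality there is exactly one fiber of size 1 and every
other fiber has size 0 or 2. -/
def IsTwoToOne {R S : Type*} [Finite R] (f : R → S) : Prop :=
  (Even (Nat.card R) ∧
    ∀ s : S, Nat.card {x : R // f x = s} = 0 ∨ Nat.card {x : R // f x = s} = 2) ∨
  (Odd (Nat.card R) ∧
    ∃ s0 : S, Nat.card {x : R // f x = s0} = 1 ∧
      ∀ s : S, s ≠ s0 → Nat.card {x : R // f x = s} = 0 ∨ Nat.card {x : R // f x = s} = 2)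

lemma aux_three_le {R S : Type*} [Fintype R] (f : R → S) (s : S) (a b c : R)
    (hab : a ≠ b) (hac : a ≠ c) (hbc : b ≠ c) (ha : f a = s) (hb : f b = s) (hc : f c = s) :
    3 ≤ Nat.card {x : R // f x = s} := by
  classical
  rw [Nat.card_eq_fintype_card, Fintype.card_subtype]
  have hsub : ({a, b, c} : Finset R) ⊆ Finset.univ.filter (fun x => f x = s) := by
    intro x hx
    simp only [Finset.mem_insert, Finset.mem_singleton] at hx
    rcases hx with rfl | rfl | rfl <;> simp [ha, hb, hc]
  have h3 : ({a, b, c} : Finset R).card = 3 := by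
    rw [Finset.card_insert_of_notMem (by simp [hab, hac]),
      Finset.card_insert_of_notMem (by simp [hbc]), Finset.card_singleton]
  exact h3 ▸ Finset.card_le_card hsub

lemma aux_pow_surj (F : Type*) [Field F] [Fintype F] (q : ℕ) (hq1 : 1 ≤ q)
    (hcard : Fintype.card F = q ^ 2) (s : F) (hs : s ^ (q + 1) = 1) :
    ∃ u : F, u ≠ 0 ∧ u ^ (q - 1) = s := by
  classical
  have hs0 : s ≠ 0 := by
    intro h; rw [h, zero_pow (by omega)] at hs; exact one_ne_zero hs.symm
  obtain ⟨g, hg⟩ := IsCyclic.exists_generator (α := Fˣ)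
  have hord : orderOf g = q ^ 2 - 1 := by
    rw [orderOf_eq_card_of_forall_mem_zpowers hg, Nat.card_eq_fintype_card,
      Fintype.card_units, hcard]
  set su : Fˣ := Units.mk0 s hs0 with hsu_def
  obtain ⟨m, hm⟩ := (mem_powers_iff_mem_zpowers).mpr (hg su)
  simp only at hm
  have hsu1 : su ^ (q + 1) = 1 := by
    ext
    push_cast
    exact hs
  have hdvd : orderOf g ∣ m * (q + 1) := by
    apply orderOf_dvd_of_pow_eq_one
    rw [pow_mul, hm, hsu1]
  rw [hord] at hdvd
  obtain ⟨r, rfl⟩ : ∃ r, q = r + 1 := ⟨q - 1, by omega⟩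
  have hq2 : (r + 1) ^ 2 - 1 = r * (r + 2) := by
    have : (r + 1) ^ 2 = r * (r + 2) + 1 := by ring
    omega
  rw [hq2] at hdvd
  have hrd : r ∣ m := by
    have h22 : r + 1 + 1 = r + 2 := by omega
    rw [h22] at hdvd
    exact Nat.dvd_of_mul_dvd_mul_right (show 0 < r + 2 by omega) hdvd
  obtain ⟨c, hc⟩ := hrd
  refine ⟨((g ^ c : Fˣ) : F), Units.ne_zero _, ?_⟩
  have : (g ^ c) ^ (r + 1 - 1) = su := by
    simp only [Nat.add_sub_cancel]
    rw [← pow_mul, mul_comm, ← hc, hm]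
  calc ((g ^ c : Fˣ) : F) ^ (r + 1 - 1) = (((g ^ c) ^ (r + 1 - 1) : Fˣ) : F) := by push_cast; ring
    _ = s := by rw [this, hsu_def, Units.val_mk0]

lemma aux_twoToOne_iff_pair {F : Type*} [Field F] [Fintype F]
    (hcardodd : Odd (Fintype.card F)) (h2 : (2 : F) ≠ 0)
    (f : F → F) (hf0 : f 0 = 0) (hfe : ∀ x : F, f (-x) = f x) :
    IsTwoToOne f ↔ ∀ x y : F, f x = f y → y = x ∨ y = -x := by
  classical
  have hne : ∀ x : F, x ≠ 0 → x ≠ -x := by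
    intro x hx h
    apply hx
    have h4 : (2 : F) * x = 0 := by linear_combination h
    rcases mul_eq_zero.mp h4 with h5 | h5
    · exact absurd h5 h2
    · exact h5
  constructor
  · intro h x y hxy
    by_contra hc
    push_neg at hc
    obtain ⟨h1, h1'⟩ := hc
    have key3 : 3 ≤ Nat.card {z : F // f z = f x} := by
      by_cases hx0 : x = 0
      · subst hx0
        have hy0 : y ≠ 0 := fun h => h1 h
        exact aux_three_le f (f 0) 0 y (-y) (fun h => hy0 h.symm)
          (fun h => hy0 (neg_eq_zero.mp h.symm)) (hne y hy0) rfl hxy.symm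
          (by rw [hfe]; exact hxy.symm)
      · exact aux_three_le f (f x) x (-x) y (hne x hx0) (fun h => h1 h.symm)
          (fun h => h1' h.symm) rfl (hfe x) hxy.symm
    rcases h with ⟨hev, _⟩ | ⟨_, s0, hs0, hrest⟩
    · rw [Nat.card_eq_fintype_card] at hev
      exact (Nat.not_even_iff_odd.mpr hcardodd) hev
    · by_cases hss : f x = s0
      · rw [hss] at key3; omega
      · rcases hrest (f x) hss with h | h <;> omega
  · intro h
    right
    refine ⟨by rw [Nat.card_eq_fintype_card]; exact hcardodd, 0, ?_, ?_⟩
    · rw [Nat.card_eq_fintype_card, Fintype.card_subtype]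
      have : Finset.univ.filter (fun x => f x = 0) = {0} := by
        ext z
        simp only [Finset.mem_filter, Finset.mem_univ, true_and, Finset.mem_singleton]
        constructor
        · intro hz
          rcases h 0 z (by rw [hf0, hz]) with h' | h'
          · exact h'.symm ▸ rfl
          · rw [h', neg_zero]
        · rintro rfl; exact hf0
      rw [this, Finset.card_singleton]
    · intro s hs
      by_cases hex : ∃ x, f x = s
      · right
        obtain ⟨x, hx⟩ := hex
        have hx0 : x ≠ 0 := by rintro rfl; rw [hf0] at hx; exact hs hx.symm
        rw [Nat.card_eq_fintype_card, Fintype.card_subtype]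
        have : Finset.univ.filter (fun z => f z = s) = {x, -x} := by
          ext z
          simp only [Finset.mem_filter, Finset.mem_univ, true_and, Finset.mem_insert,
            Finset.mem_singleton]
          constructor
          · intro hz; exact h x z (by rw [hx, hz])
          · rintro (rfl | rfl)
            · exact hx
            · rw [hfe]; exact hx
        rw [this, Finset.card_insert_of_notMem (by simpa using hne x hx0),
          Finset.card_singleton]
      · left
        push_neg at hex
        have : IsEmpty {z : F // f z = s} := ⟨fun ⟨z, hz⟩ => hex z hz⟩
        exact Nat.card_of_isEmpty

theorem stmt9 (p k : ℕ) (hp : p.Prime) (hodd : Odd p) (hk : 0 < k)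
    (q : ℕ) (hq : q = p ^ k)
    (F : Type) [Field F] [Fintype F] (hF : Fintype.card F = p ^ (2 * k))
    (a0 a1 a2 : F) (f : F → F)
    (hf : ∀ x : F, f x = a0 * x ^ (2 * q) + a1 * x ^ (q + 1) + a2 * x ^ 2)
    (e θ : F) (he : e = a2 * a2 ^ q - a0 * a0 ^ q) (hθ : θ = a1 ^ q * a2 - a0 ^ q * a1) :
    IsTwoToOne f ↔
      (e ^ 2 - θ ^ (q + 1) ≠ 0 ∧ ∃ z : F, z ^ q = z ∧ z ^ 2 = e ^ 2 - θ ^ (q + 1)) := by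
  classical
  haveI : Fact p.Prime := ⟨hp⟩
  have hp2 : p ≠ 2 := by rintro rfl; simp [Nat.odd_iff] at hodd
  have hq1 : 1 ≤ q := by rw [hq]; exact Nat.one_le_pow _ _ hp.pos
  have hqodd : Odd q := by rw [hq]; exact hodd.pow
  have hqne : q ≠ 0 := by omega
  have hcard : Fintype.card F = q ^ 2 := by rw [hF, hq, ← pow_mul, Nat.mul_comm 2 k]
  have hcardodd : Odd (Fintype.card F) := by rw [hcard]; exact hqodd.pow
  haveI hchar : CharP F p := by
    have h1 : (ringChar F).Prime := CharP.char_is_prime F _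
    obtain ⟨n, -, hn⟩ := FiniteField.card F (ringChar F)
    have hd : ringChar F ∣ p ^ (2 * k) := by
      rw [← hF, hn]; exact dvd_pow_self _ (by positivity)
    have h3 : ringChar F = p := (Nat.prime_dvd_prime_iff_eq h1 hp).mp (h1.dvd_of_dvd_pow hd)
    exact h3 ▸ ringChar.charP F
  have h2 : (2 : F) ≠ 0 := by
    intro h
    have h4 : ((2 : ℕ) : F) = 0 := by exact_mod_cast h
    have h5 : p ∣ 2 := (CharP.cast_eq_zero_iff F p 2).mp h4
    exact hp2 ((Nat.prime_dvd_prime_iff_eq hp Nat.prime_two).mp h5)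
  have hrc2 : ringChar F ≠ 2 := by rw [ringChar.eq F p]; exact hp2
  set φ := iterateFrobenius F p k with hφdef
  have hφ : ∀ x : F, φ x = x ^ q := fun x => by rw [hφdef, iterateFrobenius_def, ← hq]
  have hqq : ∀ x : F, (x ^ q) ^ q = x := by
    intro x
    rw [← pow_mul, show q * q = Fintype.card F by rw [hcard, sq]]
    exact FiniteField.pow_card x
  have hfrob : ∀ x y : F, (x + y) ^ q = x ^ q + y ^ q := fun x y => by
    rw [hq]; exact add_pow_char_pow x y p k
  have hneg : ∀ x : F, (-x) ^ q = -x ^ q := fun x => hqodd.neg_pow x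
  have hsub : ∀ x y : F, (x - y) ^ q = x ^ q - y ^ q := fun x y => by
    rw [sub_eq_add_neg, hfrob, hneg, ← sub_eq_add_neg]
  have h2q : (2 : F) ^ q = 2 := by rw [← hφ]; exact map_ofNat φ 2
  have hθq' : θ ^ q = a1 * a2 ^ q - a0 * a1 ^ q := by
    rw [hθ, hsub, mul_pow, mul_pow, hqq, hqq]
  have heq : e ^ q = e := by
    rw [he, hsub, mul_pow, mul_pow, hqq, hqq]; ring
  have hU0 : ∀ t : F, t ^ (q + 1) = 1 → t ≠ 0 := by
    intro t ht h
    rw [h, zero_pow (by omega)] at ht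
    exact one_ne_zero ht.symm
  -- f (0) = 0 and f is even
  have hf0 : f 0 = 0 := by
    rw [hf, zero_pow (by omega : 2 * q ≠ 0), zero_pow (by omega : q + 1 ≠ 0),
      zero_pow (by omega : (2 : ℕ) ≠ 0)]
    ring
  have hfe : ∀ x : F, f (-x) = f x := by
    intro x
    have hev2 : Even (q + 1) := by obtain ⟨m, hm⟩ := hqodd; exact ⟨m + 1, by omega⟩
    rw [hf, hf, Even.neg_pow (even_two_mul q), Even.neg_pow hev2, Even.neg_pow even_two]
  have step1 : IsTwoToOne f ↔ ∀ x y : F, f x = f y → y = x ∨ y = -x :=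
    aux_twoToOne_iff_pair hcardodd h2 f hf0 hfe
  -- the difference identity
  have hDid : ∀ x y : F, 2 * (f x) - 2 * (f y) =
      2*a0*((x-y)^q*(x+y)^q) + a1*((x-y)^q*(x+y) + (x-y)*(x+y)^q) + 2*a2*((x-y)*(x+y)) := by
    intro x y
    have e1 : ∀ z : F, z ^ (2 * q) = (z ^ q) ^ 2 := fun z => by
      rw [Nat.mul_comm, pow_mul]
    have e2 : ∀ z : F, z ^ (q + 1) = z ^ q * z := fun z => pow_succ z q
    rw [hf, hf, hsub, hfrob, e1, e1, e2, e2]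
    ring
  have step2 : (∀ x y : F, f x = f y → y = x ∨ y = -x) ↔
      (∀ u v : F, u ≠ 0 → v ≠ 0 →
        2*a0*(u^q*v^q) + a1*(u^q*v + u*v^q) + 2*a2*(u*v) ≠ 0) := by
    constructor
    · intro h u v hu hv hD0
      set x := (u + v) / 2 with hxdef
      set y := (v - u) / 2 with hydef
      have hxy : x - y = u := by rw [hxdef, hydef]; field_simp; ring
      have hxy2 : x + y = v := by rw [hxdef, hydef]; field_simp; ring
      have hfxy : f x = f y := by
        have h5 := hDid x y
        rw [hxy, hxy2] at h5
        have h6 : (2 : F) * (f x - f y) = 0 := by linear_combination h5 + hD0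
        rcases mul_eq_zero.mp h6 with h7 | h7
        · exact absurd h7 h2
        · exact sub_eq_zero.mp h7
      rcases h x y hfxy with h8 | h8
      · exact hu (by rw [← hxy, h8, sub_self])
      · exact hv (by rw [← hxy2, h8]; ring)
    · intro h x y hxy
      by_contra hc
      push_neg at hc
      obtain ⟨h1, h1'⟩ := hc
      have hu : x - y ≠ 0 := sub_ne_zero.mpr (fun hh => h1 hh.symm)
      have hv : x + y ≠ 0 := fun hh => h1' (by linear_combination hh)
      refine h (x - y) (x + y) hu hv ?_
      have h5 := hDid x y
      rw [hxy] at h5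
      linear_combination -h5
  have hUim : ∀ u : F, u ≠ 0 → (u ^ (q - 1)) ^ (q + 1) = 1 ∧ u ^ q = u ^ (q - 1) * u := by
    intro u hu
    have hexp : (q - 1) * (q + 1) + 1 = q * q := by
      obtain ⟨r, rfl⟩ : ∃ r, q = r + 1 := ⟨q - 1, by omega⟩
      simp only [Nat.add_sub_cancel]
      ring
    have hps : u ^ ((q - 1) * (q + 1)) * u = u := by
      rw [← pow_succ, hexp, pow_mul]
      exact hqq u
    constructor
    · rw [← pow_mul]
      exact mul_right_cancel₀ hu (by rw [hps, one_mul])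
    · rw [← pow_succ]
      congr 1
      omega
  have step3 : (∀ u v : F, u ≠ 0 → v ≠ 0 →
        2*a0*(u^q*v^q) + a1*(u^q*v + u*v^q) + 2*a2*(u*v) ≠ 0) ↔
      (∀ s t : F, s ^ (q+1) = 1 → t ^ (q+1) = 1 →
        2*a0*(s*t) + a1*(s+t) + 2*a2 ≠ 0) := by
    constructor
    · intro h s t hs ht hG0
      obtain ⟨u, hu, hus⟩ := aux_pow_surj F q hq1 hcard s hs
      obtain ⟨v, hv, hvt⟩ := aux_pow_surj F q hq1 hcard t ht
      apply h u v hu hv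
      rw [(hUim u hu).2, (hUim v hv).2, hus, hvt]
      linear_combination (u * v) * hG0
    · intro h u v hu hv hD0
      obtain ⟨hsU, hsu⟩ := hUim u hu
      obtain ⟨htU, htv⟩ := hUim v hv
      rw [hsu, htv] at hD0
      have h6 : u * v * (2*a0*(u^(q-1)*v^(q-1)) + a1*(u^(q-1)+v^(q-1)) + 2*a2) = 0 := by
        linear_combination hD0
      rcases mul_eq_zero.mp h6 with h7 | h7
      · rcases mul_eq_zero.mp h7 with h8 | h8
        exacts [hu h8, hv h8]
      · exact h (u^(q-1)) (v^(q-1)) hsU htU h7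
  have step4 : (∀ s t : F, s ^ (q+1) = 1 → t ^ (q+1) = 1 →
        2*a0*(s*t) + a1*(s+t) + 2*a2 ≠ 0) ↔
      (∀ t : F, t ^ (q+1) = 1 → θ^q * t^2 + 2*e*t + θ ≠ 0) := by
    constructor
    · -- Gcond → Qcond
      intro h t ht hQ0
      have ht0 : t ≠ 0 := hU0 t ht
      have htt : t ^ q * t = 1 := by rw [← pow_succ]; exact ht
      rw [hθq', hθ, he] at hQ0
      have hBB : (a1*t + 2*a2) * (a1^q*t^q + 2*a2^q) = (2*a0*t + a1) * (2*a0^q*t^q + a1^q) := by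
        have h6 : t * ((a1*t + 2*a2) * (a1^q*t^q + 2*a2^q)
            - (2*a0*t + a1) * (2*a0^q*t^q + a1^q)) = 0 := by
          linear_combination 2*hQ0 + ((a1*a1^q - 4*a0*a0^q)*t + 2*(a1^q*a2 - a0^q*a1))*htt
        rcases mul_eq_zero.mp h6 with h7 | h7
        · exact absurd h7 ht0
        · exact sub_eq_zero.mp h7
      have hAq : (2*a0*t + a1)^q = 2*a0^q*t^q + a1^q := by
        rw [hfrob, mul_pow, mul_pow, h2q]
      have hBq : (a1*t + 2*a2)^q = a1^q*t^q + 2*a2^q := by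
        rw [hfrob, mul_pow, mul_pow, h2q]
      by_cases hA : (2*a0*t + a1) = 0
      · have hB : (a1*t + 2*a2) = 0 := by
          have h8 : (a1*t + 2*a2) * (a1^q*t^q + 2*a2^q) = 0 := by rw [hBB, hA, zero_mul]
          rcases mul_eq_zero.mp h8 with h9 | h9
          · exact h9
          · rw [← hBq] at h9
            exact pow_eq_zero_iff hqne |>.mp h9
        exact h 1 t (one_pow _) ht (by linear_combination hA + hB)
      · set s := -(a1*t + 2*a2) / (2*a0*t + a1) with hsdef
        have hs1 : s * (2*a0*t + a1) = -(a1*t + 2*a2) := by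
          rw [hsdef]; exact div_mul_cancel₀ _ hA
        have hBA : (a1*t + 2*a2) * (a1*t + 2*a2)^q = (2*a0*t + a1) * (2*a0*t + a1)^q := by
          rw [hAq, hBq]; exact hBB
        have hsU : s ^ (q+1) = 1 := by
          have hsq : s^q = -((a1*t+2*a2)^q) / (2*a0*t+a1)^q := by
            rw [hsdef, div_pow, hneg]
          rw [pow_succ, hsq, hsdef, div_mul_div_comm,
            div_eq_one_iff_eq (mul_ne_zero (pow_ne_zero q hA) hA)]
          linear_combination hBA
        exact h s t hsU ht (by linear_combination hs1)
    · -- Qcond → Gcond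
      intro h s t hs ht hG0
      have ht0 : t ≠ 0 := hU0 t ht
      have hst : s ^ q * s = 1 := by rw [← pow_succ]; exact hs
      have htt : t ^ q * t = 1 := by rw [← pow_succ]; exact ht
      have h1 : s * (2*a0*t + a1) = -(a1*t + 2*a2) := by linear_combination hG0
      have h2' := congrArg φ h1
      simp only [map_mul, map_add, map_neg, map_ofNat] at h2'
      simp only [hφ] at h2'
      refine h t ht ?_
      rw [hθq', hθ, he]
      have key : (2:F) * ((a1*a2^q - a0*a1^q)*t^2 + 2*(a2*a2^q - a0*a0^q)*t
          + (a1^q*a2 - a0^q*a1)) = 0 := by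
        linear_combination (-(t*(s^q)*(2*a0^q*t^q + a1^q)))*h1 + (t*(a1*t + 2*a2))*h2'
          + (t*(2*a0*t + a1)*(2*a0^q*t^q + a1^q))*hst
          + (-((a1*a1^q - 4*a0*a0^q)*t + 2*(a1^q*a2 - a0^q*a1)))*htt
      rcases mul_eq_zero.mp key with h7 | h7
      · exact absurd h7 h2
      · exact h7
  have step5 : (∀ t : F, t ^ (q+1) = 1 → θ^q * t^2 + 2*e*t + θ ≠ 0) ↔
      (e ^ 2 - θ ^ (q + 1) ≠ 0 ∧ ∃ z : F, z ^ q = z ∧ z ^ 2 = e ^ 2 - θ ^ (q + 1)) := by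
    constructor
    · intro h
      have hΔ0 : e^2 - θ^(q+1) ≠ 0 := by
        intro hΔ
        by_cases hθ0 : θ = 0
        · have he0 : e = 0 := by
            have h9 : e^2 = 0 := by rw [hθ0, zero_pow (by omega : q+1 ≠ 0)] at hΔ; linear_combination hΔ
            exact pow_eq_zero_iff (by omega : 2 ≠ 0) |>.mp h9
          exact h 1 (one_pow _) (by rw [hθ0, he0, zero_pow hqne]; ring)
        · have hθq0 : θ^q ≠ 0 := pow_ne_zero q hθ0
          have he0 : e ≠ 0 := by
            intro he'
            apply hθ0
            have h9 : θ^(q+1) = e^2 := by linear_combination -hΔ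
            rw [he'] at h9
            have h10 : θ^(q+1) = 0 := by rw [h9]; ring
            exact pow_eq_zero_iff (by omega : q+1 ≠ 0) |>.mp h10
          set t := -e * (θ^q)⁻¹ with htdef
          have hθqt : θ^q * t = -e := by
            rw [htdef]; field_simp
          have htq : θ * t^q = -e := by
            have ht1 : t^q = (-e)^q * ((θ^q)⁻¹)^q := by rw [htdef, mul_pow]
            rw [ht1, hneg, heq, inv_pow, hqq]
            field_simp
          have h9 : θ^(q+1) = e^2 := by linear_combination -hΔ
          have hN : t^(q+1) = 1 := by
            have h10 : (θ^q * θ) * (t^q * t) = (θ^q * θ) * 1 := by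
              calc (θ^q * θ) * (t^q * t) = (θ * t^q) * (θ^q * t) := by ring
              _ = (-e) * (-e) := by rw [htq, hθqt]
              _ = e^2 := by ring
              _ = (θ^q * θ) * 1 := by rw [mul_one, ← pow_succ]; exact h9.symm
            have h11 := mul_left_cancel₀ (mul_ne_zero hθq0 hθ0) h10
            rw [pow_succ]; exact h11
          refine h t hN ?_
          have h12 : θ^q * (θ^q*t^2 + 2*e*t + θ) = 0 := by
            linear_combination (θ^q*t + e)*hθqt - hΔ
          rcases mul_eq_zero.mp h12 with h13 | h13
          exacts [absurd h13 hθq0, h13]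
      refine ⟨hΔ0, ?_⟩
      by_contra hnoz
      push_neg at hnoz
      have hθ0 : θ ≠ 0 := by
        intro hθ'
        exact hnoz e heq (by rw [hθ', zero_pow (by omega : q+1 ≠ 0)]; ring)
      have hθq0 : θ^q ≠ 0 := pow_ne_zero q hθ0
      have hΔq : (e^2 - θ^(q+1))^q = e^2 - θ^(q+1) := by
        have hA : (e^2)^q = e^2 := by rw [← pow_mul, Nat.mul_comm, pow_mul, heq]
        have hB : (θ^(q+1))^q = θ^(q+1) := by
          rw [pow_succ, mul_pow, hqq]; ring
        rw [hsub, hA, hB]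
      have hsqr : IsSquare (e^2 - θ^(q+1)) := by
        rw [FiniteField.isSquare_iff hrc2 hΔ0]
        have hΔq1 : (e^2 - θ^(q+1))^(q-1) = 1 := by
          have hΔpow : (e^2 - θ^(q+1))^(q-1) * (e^2 - θ^(q+1)) = 1 * (e^2 - θ^(q+1)) := by
            rw [← pow_succ, show q - 1 + 1 = q by omega, hΔq, one_mul]
          exact mul_right_cancel₀ hΔ0 hΔpow
        obtain ⟨m, hm⟩ := hqodd
        have hcd : Fintype.card F / 2 = (q-1) * (m+1) := by
          have h1 : 2*((q-1)*(m+1)) + 1 = q*q := by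
            have hq1m : q - 1 = 2*m := by omega
            rw [hq1m, hm]; ring
          rw [hcard, sq, ← h1]
          generalize (q-1)*(m+1) = X
          omega
        rw [hcd, pow_mul, hΔq1, one_pow]
      obtain ⟨w, hw⟩ := hsqr
      have hw0 : w ≠ 0 := by
        intro h'; rw [h', mul_zero] at hw; exact hΔ0 hw
      have hwq : w^q = -w := by
        have h15 : w^q * w^q = w * w := by
          have h16 : (w*w)^q = w*w := by rw [← hw]; exact hΔq
          calc w^q * w^q = (w*w)^q := by rw [mul_pow]
          _ = w * w := h16
        have h14 : (w^q - w)*(w^q + w) = 0 := by linear_combination h15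
        rcases mul_eq_zero.mp h14 with h16 | h16
        · exfalso
          exact hnoz w (by linear_combination h16) (by rw [sq]; exact hw.symm)
        · linear_combination h16
      set t := (w - e) * (θ^q)⁻¹ with htdef
      have hθqt : θ^q * t = w - e := by rw [htdef]; field_simp
      have htq : θ * t^q = -w - e := by
        have ht1 : t^q = (w - e)^q * ((θ^q)⁻¹)^q := by rw [htdef, mul_pow]
        rw [ht1, hsub, hwq, heq, inv_pow, hqq]
        field_simp
        try ring
      have hN : t^(q+1) = 1 := by
        have h10 : (θ^q * θ) * (t^q * t) = (θ^q * θ) * 1 := by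
          calc (θ^q * θ) * (t^q * t) = (θ * t^q) * (θ^q * t) := by ring
          _ = (-w - e) * (w - e) := by rw [htq, hθqt]
          _ = (θ^q * θ) * 1 := by rw [mul_one, ← pow_succ]; linear_combination hw
        have h11 := mul_left_cancel₀ (mul_ne_zero hθq0 hθ0) h10
        rw [pow_succ]; exact h11
      refine h t hN ?_
      have h12 : θ^q * (θ^q*t^2 + 2*e*t + θ) = 0 := by
        linear_combination (θ^q*t + w + e)*hθqt - hw
      rcases mul_eq_zero.mp h12 with h13 | h13
      exacts [absurd h13 hθq0, h13]
    · rintro ⟨hΔ0, z, hzq, hz2⟩ t ht hQ0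
      have ht0 : t ≠ 0 := hU0 t ht
      have htt : t ^ q * t = 1 := by rw [← pow_succ]; exact ht
      by_cases hθ0 : θ = 0
      · rw [hθ0] at hQ0
        have he0 : e = 0 := by
          have h5 : (2:F)*e*t = 0 := by
            rw [zero_pow hqne] at hQ0; linear_combination hQ0
          rcases mul_eq_zero.mp h5 with h6 | h6
          · rcases mul_eq_zero.mp h6 with h7 | h7
            exacts [absurd h7 h2, h7]
          · exact absurd h6 ht0
        exact hΔ0 (by rw [he0, hθ0, zero_pow (by omega : q+1 ≠ 0)]; ring)
      · have hθq0 : θ^q ≠ 0 := pow_ne_zero q hθ0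
        set w := θ^q * t + e with hwdef
        have hw2 : w^2 = z^2 := by
          rw [hwdef]
          linear_combination θ^q*hQ0 - hz2
        have hwq : w^q = w := by
          have h14 : (w - z)*(w + z) = 0 := by linear_combination hw2
          rcases mul_eq_zero.mp h14 with h15 | h15
          · have h16 : w = z := by linear_combination h15
            rw [h16, hzq]
          · have h16 : w = -z := by linear_combination h15
            rw [h16, hneg, hzq]
        have htqθ : θ * t^q = w - e := by
          have h16 : w^q = θ * t^q + e := by
            rw [hwdef, hfrob, mul_pow, hqq, heq]
          rw [← hwq, h16]; ring
        have hθqt : θ^q * t = w - e := by rw [hwdef]; ring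
        have h17 : θ^q * θ = (w - e)^2 := by
          calc θ^q * θ = (θ^q * θ) * (t^q * t) := by rw [htt, mul_one]
          _ = (θ * t^q) * (θ^q * t) := by ring
          _ = (w - e)^2 := by rw [htqθ, hθqt]; ring
        have h18 : 2*w*(w - e) = 0 := by
          linear_combination hw2 + hz2 - h17
        rcases mul_eq_zero.mp h18 with h19 | h19
        · rcases mul_eq_zero.mp h19 with h20 | h20
          · exact h2 h20
          · apply hΔ0
            rw [← hz2, ← hw2, h20]
            ring
        · have h21 : θ^q * θ = 0 := by rw [h17, h19]; ring
          rcases mul_eq_zero.mp h21 with h22 | h22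
          exacts [hθq0 h22, hθ0 h22]
  exact step1.trans (step2.trans (step3.trans (step4.trans step5)))
end

section
/- Let p be an odd prime, k a positive integer, q = p^k, and a = (a0,a1,a2) ∈ F_{q²}³. Define f̃_a : F_{q²} → F_{q²} by f̃_a(x) = a0·x^{2q} + a1·x^{q+1} + a2·x², and set ẽ = a2·a2^q − a0·a0^q and θ̃ = a1^q·a2 − a0^q·a1. If ẽ² − θ̃^{q+1} is a nonzero square in F_q, then f̃_a is linear equivalent to the squaring map x ↦ x² on F_{q²}; in particular f̃_a is planar. -/
theorem stmt10 (p k : ℕ) (hp : p.Prime) (hodd : Odd p) (hk : 0 < k)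
    (q : ℕ) (hq : q = p ^ k)
    (F : Type) [Field F] [Fintype F] (hF : Fintype.card F = p ^ (2 * k))
    (a0 a1 a2 : F) (f : F → F)
    (hf : ∀ x : F, f x = a0 * x ^ (2 * q) + a1 * x ^ (q + 1) + a2 * x ^ 2)
    (e θ : F) (he : e = a2 * a2 ^ q - a0 * a0 ^ q) (hθ : θ = a1 ^ q * a2 - a0 ^ q * a1)
    (hsq : e ^ 2 - θ ^ (q + 1) ≠ 0 ∧ ∃ z : F, z ^ q = z ∧ z ^ 2 = e ^ 2 - θ ^ (q + 1)) :
    LinEquivFn f (fun x : F => x ^ 2) ∧ IsPlanarFn f := by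
  obtain ⟨hS0, s, hsfq, hs2⟩ := hsq
  haveI : Fact p.Prime := ⟨hp⟩
  -- characteristic
  haveI hCF : CharP F p := by
    have h1 : CharP F (ringChar F) := ringChar.charP F
    have h2 : (ringChar F).Prime := CharP.char_is_prime F (ringChar F)
    obtain ⟨n, -, hcard⟩ := FiniteField.card F (ringChar F)
    have hdvd : ringChar F ∣ p := by
      have : ringChar F ∣ p ^ (2 * k) := by
        rw [← hF, hcard]
        exact dvd_pow_self _ (by exact_mod_cast n.pos.ne')
      exact h2.dvd_of_dvd_pow this
    have : ringChar F = p := (Nat.prime_dvd_prime_iff_eq h2 hp).mp hdvd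
    exact this ▸ h1
  -- basic Frobenius facts
  have hq0 : q ≠ 0 := by rw [hq]; exact pow_ne_zero k hp.pos.ne'
  have hqodd : Odd q := hq ▸ hodd.pow
  have frob_add : ∀ x y : F, (x + y) ^ q = x ^ q + y ^ q := by
    intro x y; rw [hq]; exact add_pow_char_pow x y p k
  have frob_frob : ∀ x : F, (x ^ q) ^ q = x := by
    intro x
    rw [← pow_mul, hq, ← pow_add, ← two_mul, ← hF]
    exact FiniteField.pow_card x
  have frob_neg : ∀ x : F, (-x) ^ q = -x ^ q := fun x => hqodd.neg_pow x
  have frob_sub : ∀ x y : F, (x - y) ^ q = x ^ q - y ^ q := by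
    intro x y
    rw [sub_eq_add_neg, frob_add, frob_neg, sub_eq_add_neg]
  have frob_two : (2 : F) ^ q = 2 := by
    have : ((2 : F)) = 1 + 1 := by norm_num
    rw [this, frob_add, one_pow]
  have frob_four : (4 : F) ^ q = 4 := by
    have : ((4 : F)) = 2 + 2 := by norm_num
    rw [this, frob_add, frob_two]
  have h2F : (2 : F) ≠ 0 := by
    have hne : p ≠ 2 := by
      rintro rfl; exact absurd hodd (by decide)
    have : ((2 : ℕ) : F) ≠ 0 := by
      rw [Ne, CharP.cast_eq_zero_iff F p]
      intro hd
      exact hne ((Nat.prime_dvd_prime_iff_eq hp Nat.prime_two).mp hd)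
    simpa using this
  have h4F : (4 : F) ≠ 0 := by
    have : (4 : F) = 2 * 2 := by norm_num
    rw [this]; exact mul_ne_zero h2F h2F
  -- building additive equivalences from linearized maps
  have mkequiv : ∀ α β : F, α ^ q * α ≠ β ^ q * β →
      ∃ L : F ≃+ F, ∀ x, L x = α * x ^ q + β * x := by
    intro α β hne
    have hinj : Function.Injective (fun x : F => α * x ^ q + β * x) := by
      intro x y hxy
      simp only at hxy
      by_contra hne2
      have hz : x - y ≠ 0 := sub_ne_zero.mpr hne2
      have h1 : α * (x - y) ^ q + β * (x - y) = 0 := by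
        rw [frob_sub]; linear_combination hxy
      have h2 : α ^ q * (x - y) + β ^ q * (x - y) ^ q = 0 := by
        have := congrArg (· ^ q) h1
        rw [frob_add, mul_pow, mul_pow, frob_frob, zero_pow hq0] at this
        linear_combination this
      have h3 : (α ^ q * α - β ^ q * β) * ((x - y) ^ q * (x - y)) = 0 := by
        linear_combination (α ^ q * (x - y)) * h1 - (β * (x - y)) * h2
      have hzz : (x - y) ^ q * (x - y) ≠ 0 := mul_ne_zero (pow_ne_zero _ hz) hz
      have := (mul_eq_zero.mp h3).resolve_right hzz
      exact hne (by linear_combination this)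
    have hbij := Finite.injective_iff_bijective.mp hinj
    refine ⟨AddEquiv.ofBijective (AddMonoidHom.mk' (fun x : F => α * x ^ q + β * x)
      (fun x y => by rw [frob_add]; ring)) hbij, fun x => rfl⟩
  -- power rewriting helpers
  have pw2q : ∀ x : F, x ^ (2 * q) = (x ^ q) ^ 2 := by
    intro x; rw [mul_comm, pow_mul]
  have pwq1 : ∀ x : F, x ^ (q + 1) = x ^ q * x := fun x => pow_succ x q
  -- master lemma
  have master : ∀ (g : F → F) (b0 b1 b2 c d α β : F),
      (∀ x, g x = b0 * x ^ (2 * q) + b1 * x ^ (q + 1) + b2 * x ^ 2) →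
      c ^ q * c ≠ d ^ q * d → α ^ q * α ≠ β ^ q * β →
      b0 = c * (β ^ q) ^ 2 + d * α ^ 2 →
      b1 = 2 * (c * (α ^ q * β ^ q) + d * (α * β)) →
      b2 = c * (α ^ q) ^ 2 + d * β ^ 2 →
      LinEquivFn g (fun x : F => x ^ 2) := by
    intro g b0 b1 b2 c d α β hg hcd hαβ h0 h1 h2
    obtain ⟨L1, hL1⟩ := mkequiv c d hcd
    obtain ⟨L2, hL2⟩ := mkequiv α β hαβ
    refine ⟨L1, L2, funext fun x => ?_⟩
    simp only [Function.comp_apply, hL1, hL2, hg]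
    have e1 : (α * x ^ q + β * x) ^ q = α ^ q * x + β ^ q * x ^ q := by
      rw [frob_add, mul_pow, mul_pow, frob_frob]
    have e2 : ((α * x ^ q + β * x) ^ 2) ^ q = (α ^ q * x + β ^ q * x ^ q) ^ 2 := by
      rw [← pow_mul, mul_comm 2 q, pow_mul, e1]
    rw [e2, pw2q, pwq1, h0, h1, h2]
    ring
  -- step2 : solving the a0 = 0 case
  have step2 : ∀ A1 A2 t : F, A2 ≠ 0 → t ^ q = t → t ≠ 0 →
      t ^ 2 = (A2 ^ q * A2) ^ 2 - (A1 ^ q * A1) * (A2 ^ q * A2) →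
      ∃ c d α β : F, c ^ q * c ≠ d ^ q * d ∧ α ^ q * α ≠ β ^ q * β ∧
        (0 : F) = c * (β ^ q) ^ 2 + d * α ^ 2 ∧
        A1 = 2 * (c * (α ^ q * β ^ q) + d * (α * β)) ∧
        A2 = c * (α ^ q) ^ 2 + d * β ^ 2 := by
    intro A1 A2 t hA2 htq ht0 ht
    by_cases hA1 : A1 = 0
    · refine ⟨0, A2, 0, 1, ?_, ?_, by simp [zero_pow hq0], by simp [hA1, zero_pow hq0], by simp [one_pow, zero_pow hq0]⟩
      · simp only [zero_pow hq0, zero_mul]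
        exact fun h => (mul_ne_zero (pow_ne_zero _ hA2) hA2) h.symm
      · simp only [zero_pow hq0, zero_mul, one_pow, one_mul]
        exact zero_ne_one
    · -- general construction
      obtain ⟨u, hu⟩ : ∃ u : F, u = t / (A2 ^ q * A2) := ⟨_, rfl⟩
      have hn0 : A2 ^ q * A2 ≠ 0 := mul_ne_zero (pow_ne_zero _ hA2) hA2
      have hnq : (A2 ^ q * A2) ^ q = A2 ^ q * A2 := by rw [mul_pow, frob_frob]; ring
      have huq : u ^ q = u := by rw [hu, div_pow, htq, hnq]
      have hu0 : u ≠ 0 := by rw [hu]; exact div_ne_zero ht0 hn0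
      have hkey : A1 ^ q * A1 = (A2 ^ q * A2) * (1 - u ^ 2) := by
        have h1 : u ^ 2 = t ^ 2 / (A2 ^ q * A2) ^ 2 := by rw [hu, div_pow]
        rw [h1, ht]
        field_simp
        ring
      have h1u : (1 : F) - u ≠ 0 := by
        intro h
        have hu1 : u = 1 := by linear_combination -h
        have hz : A1 ^ q * A1 = 0 := by rw [hkey, hu1]; ring
        rcases mul_eq_zero.mp hz with h' | h'
        · exact hA1 (pow_eq_zero_iff hq0 |>.mp h')
        · exact hA1 h'
      obtain ⟨v, hvdef⟩ : ∃ v : F, v = (4 * u * (A2 ^ q * A2) * (1 - u) ^ 2)⁻¹ := ⟨_, rfl⟩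
      have pwc : ∀ x : F, (x ^ 2) ^ q = (x ^ q) ^ 2 := by
        intro x; rw [← pow_mul, mul_comm, pow_mul]
      have pwc4 : ∀ x : F, (x ^ 4) ^ q = (x ^ q) ^ 4 := by
        intro x; rw [← pow_mul, mul_comm, pow_mul]
      have h1u0 : (1 : F) - u ≠ 0 := h1u
      have hD0 : 4 * u * (A2 ^ q * A2) * (1 - u) ^ 2 ≠ 0 :=
        mul_ne_zero (mul_ne_zero (mul_ne_zero h4F hu0) hn0) (pow_ne_zero _ h1u)
      have hv : 4 * u * (A2 ^ q * A2) * (1 - u) ^ 2 * v = 1 := by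
        rw [hvdef]; exact mul_inv_cancel₀ hD0
      have hv0 : v ≠ 0 := by
        intro h0; rw [h0, mul_zero] at hv; exact zero_ne_one hv
      have h1uq : ((1 : F) - u) ^ q = 1 - u := by rw [frob_sub, one_pow, huq]
      have hvq : v ^ q = v := by
        rw [hvdef, inv_pow]
        congr 1
        rw [mul_pow, mul_pow, mul_pow, pwc, h1uq, frob_four, huq, hnq]
      obtain ⟨c, hc⟩ : ∃ c : F, c = A1 ^ 2 * A2 ^ q * (1 - u) ^ 2 * v := ⟨_, rfl⟩
      obtain ⟨d, hd⟩ : ∃ d : F, d = -(A2 ^ 2 * A2 ^ q * (1 - u) ^ 4 * v) := ⟨_, rfl⟩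
      obtain ⟨α, hα⟩ : ∃ α : F, α = 4 * u * A1 * A2 ^ q * (1 - u) * v := ⟨_, rfl⟩
      have hcq : c ^ q = (A1 ^ q) ^ 2 * A2 * (1 - u) ^ 2 * v := by
        rw [hc, mul_pow, mul_pow, mul_pow, pwc, pwc, h1uq, frob_frob, hvq]
      have hdq : d ^ q = -((A2 ^ q) ^ 2 * A2 * (1 - u) ^ 4 * v) := by
        rw [hd, frob_neg, mul_pow, mul_pow, mul_pow, pwc, pwc4, h1uq, frob_frob, hvq]
      have hαq : α ^ q = 4 * u * A1 ^ q * A2 * (1 - u) * v := by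
        rw [hα, mul_pow, mul_pow, mul_pow, mul_pow, mul_pow, frob_four, huq, frob_frob, h1uq,
          hvq]
      refine ⟨c, d, α, 1, ?_, ?_, ?_, ?_, ?_⟩
      · have hv2 : (4 * u * (A2 ^ q * A2) * (1 - u) ^ 2 * v) ^ 2 = 1 := by
          rw [hv, one_pow]
        have hval : (4 * u) ^ 2 * (c ^ q * c - d ^ q * d) =
            4 * u * (A2 ^ q * A2) * (1 - u) ^ 2 := by
          rw [hcq, hc, hdq, hd]
          linear_combination ((4 * u) ^ 2 * (A2 ^ q * A2) * (1 - u) ^ 4 * v ^ 2 *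
              (A1 ^ q * A1 + (A2 ^ q * A2) * (1 - u ^ 2))) * hkey +
            (4 * u * (A2 ^ q * A2) * (1 - u) ^ 2) * hv2
        intro hcontra
        have hz : (4 : F) * u * (A2 ^ q * A2) * (1 - u) ^ 2 = 0 := by
          rw [← hval, hcontra]; ring
        exact hD0 hz
      · have hvalB : α ^ q * α = 4 * u * (A2 ^ q * A2) * (1 - u ^ 2) * v := by
          rw [hαq, hα]
          linear_combination (16 * u ^ 2 * (A2 ^ q * A2) * (1 - u) ^ 2 * v ^ 2) * hkey +
            (4 * u * (A2 ^ q * A2) * (1 - u ^ 2) * v) * hv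
        rw [one_pow, one_mul, hvalB]
        intro hcontra
        have hc2 : 2 * u * (4 * u * (A2 ^ q * A2) * (1 - u) * v) = 0 := by
          linear_combination hcontra - hv
        exact (mul_ne_zero (mul_ne_zero h2F hu0)
          (mul_ne_zero (mul_ne_zero (mul_ne_zero (mul_ne_zero h4F hu0) hn0) h1u) hv0)) hc2
      · rw [one_pow, hc, hd, hα]
        linear_combination (A1 ^ 2 * A2 ^ q * (1 - u) ^ 2 * v *
          (4 * u * (A2 ^ q * A2) * (1 - u) ^ 2 * v + 1)) * hv
      · rw [one_pow, hαq, hc, hd, hα]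
        linear_combination (-8 * u * A1 * (A2 ^ q * A2) * (1 - u) ^ 3 * v ^ 2) * hkey +
          (-A1 * (4 * u * (A2 ^ q * A2) * (1 - u) ^ 2 * v + 1)) * hv
      · rw [one_pow, hαq, hc, hd]
        linear_combination (-16 * u ^ 2 * A2 * (A2 ^ q * A2) * (1 - u) ^ 4 * v ^ 3 *
            (A1 ^ q * A1 + (A2 ^ q * A2) * (1 - u ^ 2))) * hkey +
          (-(A2 * (A2 ^ q * A2) * v * (1 - u ^ 2) ^ 2 *
            (4 * u * (A2 ^ q * A2) * (1 - u) ^ 2 * v + 1)) - A2) * hv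
  have pwsq : ∀ x : F, (x ^ 2) ^ q = (x ^ q) ^ 2 := by
    intro x; rw [← pow_mul, mul_comm, pow_mul]
  -- facts about e and θ
  have heq : e ^ q = e := by
    rw [he, frob_sub, mul_pow, mul_pow, frob_frob, frob_frob]; ring
  have hθq : θ ^ q = a1 * a2 ^ q - a0 * a1 ^ q := by
    rw [hθ, frob_sub, mul_pow, mul_pow, frob_frob, frob_frob]
  have hs2' : s ^ 2 = e ^ 2 - θ ^ q * θ := by rw [hs2, pow_succ θ q]
  have hS0' : e ^ 2 - θ ^ q * θ ≠ 0 := by rw [← pow_succ θ q]; exact hS0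
  have hs0 : s ≠ 0 := by
    intro h
    exact hS0 (by rw [← hs2, h]; exact zero_pow two_ne_zero)
  -- planarity of the square function
  have planar_sq : IsPlanarFn (fun x : F => x ^ 2) := by
    intro a ha b
    have h2a : 2 * a ≠ 0 := mul_ne_zero h2F ha
    refine ⟨(b - a ^ 2) / (2 * a), ?_, ?_⟩
    · show ((b - a ^ 2) / (2 * a) + a) ^ 2 - ((b - a ^ 2) / (2 * a)) ^ 2 = b
      field_simp
      ring
    · intro y hy
      simp only at hy
      field_simp
      linear_combination hy
  -- transfer of planarity along linear equivalence
  have planar_transfer : ∀ g : F → F, LinEquivFn f g → IsPlanarFn g → IsPlanarFn f := by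
    rintro g ⟨L1, L2, hfg⟩ hg a ha b
    have hL2a : L2 a ≠ 0 := by
      intro h
      apply ha
      have h2 := congrArg L2.symm h
      rwa [L2.symm_apply_apply, map_zero] at h2
    obtain ⟨y, hy1, hy2⟩ := hg (L2 a) hL2a (L1.symm b)
    have key : ∀ x : F, f (x + a) - f x = L1 (g (L2 x + L2 a) - g (L2 x)) := by
      intro x
      rw [hfg]
      simp only [Function.comp_apply]
      rw [map_add, map_sub]
    refine ⟨L2.symm y, ?_, ?_⟩
    · show f (L2.symm y + a) - f (L2.symm y) = b
      rw [key, L2.apply_symm_apply, hy1, L1.apply_symm_apply]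
    · intro x hx
      rw [key] at hx
      have hx2 : g (L2 x + L2 a) - g (L2 x) = L1.symm b := by
        rw [← hx, L1.symm_apply_apply]
      have h3 := hy2 (L2 x) hx2
      rw [← h3, L2.symm_apply_apply]
  -- the main equivalence
  have main : LinEquivFn f (fun x : F => x ^ 2) := by
    by_cases ha0 : a0 = 0
    · -- Case 1 : a0 = 0
      have ha2 : a2 ≠ 0 := by
        intro h
        exact hS0' (by rw [he, hθ, ha0, h, zero_pow hq0]; ring)
      have ht : s ^ 2 = (a2 ^ q * a2) ^ 2 - (a1 ^ q * a1) * (a2 ^ q * a2) := by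
        rw [hs2', he, hθq, hθ, ha0, zero_pow hq0]; ring
      obtain ⟨c, d, α, β, hcd, hαβ, k0, k1, k2⟩ := step2 a1 a2 s ha2 hsfq hs0 ht
      exact master f a0 a1 a2 c d α β hf hcd hαβ (by rw [ha0, ← k0]) k1 k2
    · by_cases he0 : e = 0
      · -- Case 3 : a0 ≠ 0, e = 0
        have hee : a2 * a2 ^ q = a0 * a0 ^ q := by
          have h := he; rw [he0] at h; linear_combination -h
        have ha2 : a2 ≠ 0 := by
          intro h
          rw [h, zero_mul] at hee
          rcases mul_eq_zero.mp hee.symm with h' | h'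
          · exact ha0 h'
          · exact ha0 (pow_eq_zero_iff hq0 |>.mp h')
        have hθ0 : θ ≠ 0 := by
          intro h
          exact hS0' (by rw [h, he0]; ring)
        have hs2'' : s ^ 2 = -(θ ^ q * θ) := by rw [hs2', he0]; ring
        have hkey3 : a0 * θ + a2 * θ ^ q = 0 := by
          rw [hθq, hθ]; linear_combination a1 * hee
        have hkey4 : a1 ^ q * θ ^ q * a2 + a1 * θ * a2 ^ q = θ ^ q * θ := by
          rw [hθq, hθ]; linear_combination (a1 * a1 ^ q) * hee
        have hsa2 : s * a2 ≠ 0 := mul_ne_zero hs0 ha2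
        obtain ⟨α, hα⟩ : ∃ α : F, α = -(a0 * θ) / (s * a2) := ⟨_, rfl⟩
        have hαq : α ^ q = -(a0 ^ q * θ ^ q) / (s * a2 ^ q) := by
          rw [hα, div_pow, frob_neg, mul_pow, mul_pow, hsfq]
        have hα2 : a2 * α ^ 2 = a0 := by
          rw [hα]
          field_simp
          linear_combination θ * hkey3 - a2 * hs2''
        have hα0 : α ≠ 0 := by
          intro h
          rw [h] at hα2
          exact ha0 (by rw [← hα2]; ring)
        have hαα : α ^ q * α = -1 := by
          rw [hαq, hα]
          field_simp
          linear_combination (-(θ ^ q * θ)) * hee + (a2 ^ q * a2) * hs2''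
        have hT : a0 * a1 ^ q * α ^ q + a0 ^ q * a1 * α = s := by
          rw [hαq, hα]
          field_simp
          linear_combination (-(a0 * a0 ^ q)) * hkey4 + (-(a2 * a2 ^ q)) * hs2'' +
            (θ ^ q * θ) * hee
        obtain ⟨c, hc⟩ : ∃ c : F, c = (2 * a0 - α * a1) / 4 := ⟨_, rfl⟩
        obtain ⟨d, hd⟩ : ∃ d : F, d = (a1 - 2 * (a0 * α ^ q)) / (4 * α) := ⟨_, rfl⟩
        have hαq0 : α ^ q ≠ 0 := pow_ne_zero _ hα0
        have hcq : c ^ q = (2 * a0 ^ q - α ^ q * a1 ^ q) / 4 := by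
          rw [hc, div_pow, frob_sub, mul_pow, mul_pow, frob_two, frob_four]
        have hdq : d ^ q = (a1 ^ q - 2 * (a0 ^ q * α)) / (4 * α ^ q) := by
          rw [hd, div_pow, frob_sub, mul_pow, mul_pow, mul_pow, frob_two, frob_four, frob_frob]
        have hcd : c ^ q * c ≠ d ^ q * d := by
          have hval : (4 : F) * (c ^ q * c - d ^ q * d) = -s := by
            rw [hcq, hc, hdq, hd]
            field_simp
            linear_combination 4 * hT + (4 * s -
              2 * (a0 * a1 ^ q * α ^ q) - 2 * (a0 ^ q * a1 * α) +
              (a1 * a1 ^ q) * (α ^ q * α - 1)) * hαα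
          intro hcontra
          rw [hcontra, sub_self, mul_zero] at hval
          exact hs0 (by linear_combination hval)
        have h0 : a0 = c * ((1 : F) ^ q) ^ 2 + d * α ^ 2 := by
          rw [one_pow, one_pow, mul_one, hc, hd]
          field_simp
          linear_combination (2 * a0) * hαα
        have h1' : a1 = 2 * (c * (α ^ q * (1 : F) ^ q) + d * (α * 1)) := by
          rw [one_pow, mul_one, hc, hd]
          field_simp
          linear_combination (2 * a1) * hαα
        have h2' : a2 = c * (α ^ q) ^ 2 + d * (1 : F) ^ 2 := by
          apply mul_left_cancel₀ hα0
          rw [one_pow, mul_one, hc, hd]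
          field_simp
          linear_combination (4 * α * a2 * (1 - α ^ q * α) + 2 * a0 * α ^ q +
            a1 * (α ^ q * α - 1)) * hαα + (4 * α * (α ^ q) ^ 2) * hα2
        have hαβ : α ^ q * α ≠ (1 : F) ^ q * 1 := by
          rw [one_pow, one_mul, hαα]
          intro hcontra
          exact h2F (by linear_combination -hcontra)
        exact master f a0 a1 a2 c d α 1 hf hcd hαβ h0 h1' h2'
      · -- Case 2 : a0 ≠ 0, e ≠ 0
        have hA2ne : -e ≠ 0 := neg_ne_zero.mpr he0
        have htq2 : (s * e) ^ q = s * e := by rw [mul_pow, hsfq, heq]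
        have ht02 : s * e ≠ 0 := mul_ne_zero hs0 he0
        have hA1q : (a0 * a1 ^ q - a2 ^ q * a1) ^ q = a0 ^ q * a1 - a2 * a1 ^ q := by
          rw [frob_sub, mul_pow, mul_pow, frob_frob, frob_frob]
        have ht : (s * e) ^ 2 = ((-e) ^ q * -e) ^ 2 -
            ((a0 * a1 ^ q - a2 ^ q * a1) ^ q * (a0 * a1 ^ q - a2 ^ q * a1)) *
              ((-e) ^ q * -e) := by
          rw [frob_neg, heq, hA1q, mul_pow, hs2', hθq, hθ]
          ring
        obtain ⟨c, d, α, β, hcd, hαβ, k0, k1, k2⟩ :=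
          step2 (a0 * a1 ^ q - a2 ^ q * a1) (-e) (s * e) hA2ne htq2 ht02 ht
        have hgeq : LinEquivFn
            (fun x : F => 0 * x ^ (2 * q) + (a0 * a1 ^ q - a2 ^ q * a1) * x ^ (q + 1) +
              -e * x ^ 2) (fun x : F => x ^ 2) :=
          master _ 0 (a0 * a1 ^ q - a2 ^ q * a1) (-e) c d α β (fun x => rfl) hcd hαβ
            (by rw [← k0]) k1 k2
        have hE0cond : a0 ^ q * a0 ≠ (-a2 ^ q) ^ q * -a2 ^ q := by
          intro h
          rw [frob_neg, frob_frob] at h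
          exact he0 (by rw [he]; linear_combination -h)
        obtain ⟨E0, hE0⟩ := mkequiv a0 (-a2 ^ q) hE0cond
        have hgf : ∀ x : F, E0 (f x) =
            0 * x ^ (2 * q) + (a0 * a1 ^ q - a2 ^ q * a1) * x ^ (q + 1) + -e * x ^ 2 := by
          intro x
          rw [hE0, hf, pw2q x, pwq1 x, frob_add, frob_add]
          simp only [mul_pow]
          rw [pwsq, pwsq, frob_frob x, he]
          ring
        obtain ⟨M1, M2, hM⟩ := hgeq
        refine ⟨M1.trans E0.symm, M2, funext fun x => ?_⟩
        have h1 : (0 : F) * x ^ (2 * q) + (a0 * a1 ^ q - a2 ^ q * a1) * x ^ (q + 1) +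
            -e * x ^ 2 = M1 ((M2 x) ^ 2) := by
          have := congrFun hM x
          simpa using this
        simp only [Function.comp_apply, AddEquiv.trans_apply]
        rw [← h1, AddEquiv.eq_symm_apply]
        exact hgf x
  exact ⟨main, planar_transfer _ main planar_sq⟩
end

section
/- Let p be an odd prime, k and ℓ positive integers, q = p^k, Q = p^ℓ. The map x ↦ x^{Q+1} on F_{q²} is planar if and only if ℓ/gcd(k,ℓ) is even. -/
lemma Nat.even_pow_sub_one_div_pow_sub_one_iff {x n d : ℕ} (hx : Odd x) (hx1 : 1 < x)
    (hd : 0 < d) (hdn : d ∣ n) : Even ((x ^ n - 1) / (x ^ d - 1)) ↔ Even (n / d) := by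
  obtain ⟨t, rfl⟩ := hdn
  rw [pow_mul, ← Nat.geomSum_eq (Nat.one_lt_pow hd.ne' hx1), Nat.mul_div_cancel_left t hd,
    Finset.even_sum_iff_even_card_odd, Finset.filter_true_of_mem fun i _ => hx.pow.pow,
    Finset.card_range]

lemma Nat.odd_two_mul_div_gcd_iff {k ℓ : ℕ} (hk : 0 < k) :
    Odd (2 * k / (2 * k).gcd ℓ) ↔ Even (ℓ / k.gcd ℓ) := by
  obtain ⟨a, b, hab, hka, hlb⟩ := Nat.exists_coprime k ℓ
  set e := k.gcd ℓ
  have he : 0 < e := Nat.gcd_pos_of_pos_left ℓ hk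
  have hgcd : (2 * k).gcd ℓ = (2 * a).gcd b * e := by
    rw [hka, hlb, ← mul_assoc, Nat.gcd_mul_right]
  rw [hgcd, hka, ← mul_assoc, Nat.mul_div_mul_right _ _ he, hlb, Nat.mul_div_cancel _ he,
    Nat.gcd_comm, hab.gcd_mul_right_cancel_right]
  rcases Nat.even_or_odd b with hb | hb
  · rw [Nat.gcd_eq_right hb.two_dvd, Nat.mul_div_cancel_left a two_pos, iff_true_intro hb,
      iff_true]
    exact Nat.coprime_two_right.mp (hab.coprime_dvd_right hb.two_dvd)
  · rw [Nat.coprime_two_right.mpr hb, Nat.div_one, iff_false_intro (Nat.not_even_iff_odd.mpr hb),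
      iff_false, Nat.not_odd_iff_even]
    exact even_two_mul a

theorem FiniteField.exists_pow_eq_neg_one_iff {F : Type*} [Field F] [Finite F]
    (hF : ringChar F ≠ 2) (m : ℕ) :
    (∃ w : Fˣ, w ^ m = -1) ↔ Even (Nat.card Fˣ / (Nat.card Fˣ).gcd m) := by
  have : Fact (Nat.Prime 2) := ⟨Nat.prime_two⟩
  have horder : orderOf (-1 : Fˣ) = 2 := by
    rw [← orderOf_units, Units.val_neg, Units.val_one, orderOf_neg_one, if_neg hF]
  rw [← IsCyclic.card_powMonoidHom_range, even_iff_two_dvd]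
  constructor
  · rintro ⟨w, hw⟩
    rw [← horder]
    exact Subgroup.orderOf_dvd_natCard _ ⟨w, hw⟩
  · intro hdvd
    obtain ⟨g, hg⟩ := exists_prime_orderOf_dvd_card' 2 hdvd
    obtain ⟨w, hw⟩ := g.2
    rw [← Subgroup.orderOf_coe, ← hw, powMonoidHom_apply] at hg
    have hsq : ((w ^ m : Fˣ) : F) ^ 2 = 1 := by
      rw [← Units.val_pow_eq_pow_val, ← hg, pow_orderOf_eq_one, Units.val_one]
    have hne : w ^ m ≠ 1 := fun h => by simp [h] at hg
    refine ⟨w, (sq_eq_one_iff.mp hsq).elim (fun h => absurd (Units.ext h) hne) fun h => ?_⟩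
    rw [Units.ext_iff, h, Units.val_neg, Units.val_one]

theorem isPlanarFn_iff_bijective {G H : Type*} [AddGroup G] [AddGroup H] (f : G → H) :
    IsPlanarFn f ↔ ∀ a : G, a ≠ 0 → Function.Bijective fun x => f (x + a) - f x := by
  simp only [IsPlanarFn, Function.bijective_iff_existsUnique]

theorem isPlanarFn_pow_iff {F : Type*} [Field F] (n : ℕ) :
    IsPlanarFn (fun x : F => x ^ n) ↔ Function.Bijective fun x : F => (x + 1) ^ n - x ^ n := by
  rw [isPlanarFn_iff_bijective]
  refine ⟨fun h => by simpa using h 1 one_ne_zero, fun h a ha => ?_⟩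
  have hconj : (fun x : F => (x + a) ^ n - x ^ n) =
      (a ^ n * ·) ∘ (fun x : F => (x + 1) ^ n - x ^ n) ∘ (a⁻¹ * ·) := by
    ext x
    simp only [Function.comp_apply]
    rw [mul_sub, ← mul_pow, ← mul_pow, mul_add, mul_inv_cancel_left₀ ha, mul_one]
  rw [hconj]
  exact (mulLeft_bijective₀ _ (pow_ne_zero n ha)).comp
    (h.comp (mulLeft_bijective₀ _ (inv_ne_zero ha)))

theorem bijective_add_one_pow_succ_sub_pow_succ_iff {F : Type*} [Field F] [Finite F]
    (p ℓ : ℕ) [ExpChar F p] :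
    Function.Bijective (fun x : F => (x + 1) ^ (p ^ ℓ + 1) - x ^ (p ^ ℓ + 1)) ↔
      ∀ w : F, w ^ p ^ ℓ + w = 0 → w = 0 := by
  let L : F →+ F := AddMonoidHom.mk' (fun x => x ^ p ^ ℓ + x) fun x y => by
    rw [add_pow_expChar_pow]; ring
  have hderiv : (fun x : F => (x + 1) ^ (p ^ ℓ + 1) - x ^ (p ^ ℓ + 1)) = (· + 1) ∘ L := by
    ext x
    simp only [Function.comp_apply, L, AddMonoidHom.mk'_apply]
    rw [pow_succ, pow_succ, add_pow_expChar_pow, one_pow]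
    ring
  rw [hderiv, ← Equiv.coe_addRight, Equiv.comp_bijective, ← Finite.injective_iff_bijective,
    injective_iff_map_eq_zero]
  rfl

theorem forall_pow_add_self_eq_zero_iff {F : Type*} [Field F] {Q : ℕ} (hQ : 0 < Q) :
    (∀ w : F, w ^ Q + w = 0 → w = 0) ↔ ¬ ∃ w : Fˣ, w ^ (Q - 1) = -1 := by
  have hfactor (w : F) : w ^ Q + w = w * (w ^ (Q - 1) + 1) := by
    rw [mul_add, ← pow_succ', Nat.sub_add_cancel hQ, mul_one]
  simp only [hfactor, mul_eq_zero, not_exists, Units.ext_iff, Units.val_pow_eq_pow_val,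
    Units.val_neg, Units.val_one, ← eq_neg_iff_add_eq_zero]
  refine ⟨fun h w hw => w.ne_zero (h w (Or.inr hw)), fun h w hw => ?_⟩
  by_contra hw0
  exact h (Units.mk0 w hw0) (hw.resolve_left hw0)

theorem stmt12_general (p k ℓ : ℕ) (hp : p.Prime) (hodd : Odd p) (hk : 0 < k)
    (Q : ℕ) (hQ : Q = p ^ ℓ)
    (F : Type) [Field F] [Fintype F] (hF : Fintype.card F = p ^ (2 * k)) :
    IsPlanarFn (fun x : F => x ^ (Q + 1)) ↔ Even (ℓ / Nat.gcd k ℓ) := by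
  have : Fact p.Prime := ⟨hp⟩
  have : CharP F p := charP_of_card_eq_prime_pow hF
  have hchar : ringChar F ≠ 2 := by
    rw [ringChar.eq F p]
    rintro rfl
    exact Nat.not_odd_iff_even.mpr even_two hodd
  have hcard : Nat.card Fˣ = p ^ (2 * k) - 1 := by
    rw [Nat.card_units, Nat.card_eq_fintype_card, hF]
  subst hQ
  rw [isPlanarFn_pow_iff, bijective_add_one_pow_succ_sub_pow_succ_iff,
    forall_pow_add_self_eq_zero_iff (pow_pos hp.pos ℓ),
    FiniteField.exists_pow_eq_neg_one_iff hchar, hcard, Nat.pow_sub_one_gcd_pow_sub_one,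
    Nat.even_pow_sub_one_div_pow_sub_one_iff hodd hp.one_lt
      (Nat.gcd_pos_of_pos_left ℓ (by omega)) (Nat.gcd_dvd_left _ _),
    ← Nat.not_odd_iff_even, not_not, Nat.odd_two_mul_div_gcd_iff hk]

theorem stmt12 (p k ℓ : ℕ) (hp : p.Prime) (hodd : Odd p) (hk : 0 < k) (hl : 0 < ℓ)
    (q Q : ℕ) (hq : q = p ^ k) (hQ : Q = p ^ ℓ)
    (F : Type) [Field F] [Fintype F] (hF : Fintype.card F = p ^ (2 * k)) :
    IsPlanarFn (fun x : F => x ^ (Q + 1)) ↔ Even (ℓ / Nat.gcd k ℓ) :=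
  stmt12_general p k ℓ hp hodd hk Q hQ F hF
end

section
/- Let p be an odd prime, k and ℓ positive integers, q = p^k, Q = p^ℓ. The map x ↦ x^{Q+q} on F_{q²} is planar if and only if kℓ/gcd(k,ℓ)² is odd. -/
lemma geomN (x : ℕ) (hx : 1 ≤ x) : ∀ r : ℕ, x ^ r - 1 = (x - 1) * ∑ i ∈ Finset.range r, x ^ i := by
  intro r
  induction r with
  | zero => simp
  | succ r ih =>
    have h5 : (x - 1) * x ^ r = x ^ (r+1) - x ^ r := by
      rw [Nat.sub_mul, one_mul, ← pow_succ']
    rw [Finset.sum_range_succ, Nat.mul_add, ← ih, h5]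
    have h1 : 1 ≤ x ^ r := Nat.one_le_pow _ _ hx
    have h2 : x ^ r ≤ x ^ (r+1) := Nat.pow_le_pow_right hx (by omega)
    omega

lemma geom_parity (x r : ℕ) (hx : Odd x) :
    (∑ i ∈ Finset.range r, x ^ i) % 2 = r % 2 := by
  induction r with
  | zero => simp
  | succ r ih =>
    rw [Finset.sum_range_succ]
    have : x ^ r % 2 = 1 := Nat.odd_iff.mp (hx.pow)
    omega

lemma gcd_pow_sub_one (p : ℕ) (hp : 2 ≤ p) (A B : ℕ) :
    Nat.gcd (p ^ A - 1) (p ^ B - 1) = p ^ Nat.gcd A B - 1 := by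
  induction A using Nat.strong_induction_on generalizing B with
  | _ A ih =>
    rcases Nat.eq_zero_or_pos A with rfl | hA
    · simp
    · have hdvd : p ^ A - 1 ∣ p ^ (A * (B / A)) - 1 := by
        rw [pow_mul]
        simpa using Nat.sub_dvd_pow_sub_pow (p ^ A) 1 (B / A)
      obtain ⟨c, hc⟩ := hdvd
      have key : p ^ B - 1 = (p ^ (B % A) - 1) + (p ^ (B % A) * c) * (p ^ A - 1) := by
        have hXY : p ^ (B % A) * p ^ (A * (B / A)) = p ^ B := by
          rw [← pow_add]; congr 1; exact Nat.mod_add_div B A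
        have h1 : 1 ≤ p ^ (B % A) := Nat.one_le_pow _ _ (by omega)
        have hms : p ^ (B % A) * (p ^ (A * (B / A)) - 1) = p ^ B - p ^ (B % A) := by
          rw [Nat.mul_sub, hXY, mul_one]
        have hthis : (p ^ (B % A) * c) * (p ^ A - 1) = p ^ B - p ^ (B % A) := by
          rw [mul_assoc, mul_comm c, ← hc, hms]
        rw [hthis]
        have hle : p ^ (B % A) ≤ p ^ B := Nat.pow_le_pow_right (by omega) (Nat.mod_le B A |>.trans (le_refl B))
        omega
      rw [key, Nat.gcd_add_mul_right_right, Nat.gcd_comm,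
        ih (B % A) (Nat.mod_lt _ hA) A, Nat.gcd_rec A B]

lemma cyc_exists_pow_iff {G : Type*} [CommGroup G] [Fintype G] [IsCyclic G] (m : ℕ) (a : G) :
    (∃ y : G, y ^ m = a) ↔ a ^ (Fintype.card G / Nat.gcd (Fintype.card G) m) = 1 := by
  set N := Fintype.card G with hN
  have hN0 : 0 < N := Fintype.card_pos
  set g := Nat.gcd N m with hg
  have hg0 : 0 < g := Nat.gcd_pos_of_pos_left m hN0
  have hgN : g ∣ N := Nat.gcd_dvd_left N m
  have hgm : g ∣ m := Nat.gcd_dvd_right N m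
  constructor
  · rintro ⟨y, rfl⟩
    rw [← pow_mul]
    have : m * (N / g) = N * (m / g) := by
      rw [← Nat.mul_div_assoc m hgN, ← Nat.mul_div_assoc N hgm, mul_comm]
    rw [this, pow_mul, pow_card_eq_one, one_pow]
  · intro ha
    obtain ⟨g₀, hg₀⟩ := IsCyclic.exists_generator (α := G)
    have hord : orderOf g₀ = N := (orderOf_eq_card_of_forall_mem_zpowers hg₀).trans Nat.card_eq_fintype_card
    obtain ⟨s, hs⟩ := (mem_powers_iff_mem_zpowers).mpr (hg₀ a)
    dsimp only at hs
    have h1 : g₀ ^ (s * (N / g)) = 1 := by rw [pow_mul, hs, ha]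
    have hdvd : N ∣ s * (N / g) := by
      have := orderOf_dvd_of_pow_eq_one h1
      rwa [hord] at this
    have hNg0 : 0 < N / g := Nat.div_pos (Nat.le_of_dvd hN0 hgN) hg0
    have hgs : g ∣ s := by
      obtain ⟨e, he⟩ := hdvd
      have hNg : g * (N / g) = N := Nat.mul_div_cancel' hgN
      -- s * (N/g) = N * e = g * (N/g) * e  ⇒  s = g * e
      have : s * (N / g) = (g * e) * (N / g) := by
        calc s * (N / g) = N * e := he
          _ = (g * (N / g)) * e := by rw [hNg]
          _ = (g * e) * (N / g) := by ring
      have hse : s = g * e := Nat.eq_of_mul_eq_mul_right hNg0 this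
      exact ⟨e, hse⟩
    obtain ⟨e, he⟩ := hgs
    refine ⟨g₀ ^ (Nat.gcdB N m * e), ?_⟩
    have hzord : g₀ ^ (N : ℤ) = 1 := by
      rw [zpow_natCast]; exact pow_card_eq_one
    have hbez : (g : ℤ) = N * Nat.gcdA N m + m * Nat.gcdB N m := Nat.gcd_eq_gcd_ab N m
    calc (g₀ ^ (Nat.gcdB N m * e)) ^ m
        = g₀ ^ (Nat.gcdB N m * e * m) := by rw [← zpow_natCast (g₀ ^ (Nat.gcdB N m * e)) m, ← zpow_mul]
      _ = g₀ ^ ((g : ℤ) * e) * (g₀ ^ (N : ℤ)) ^ (-(Nat.gcdA N m) * e) := by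
            rw [← zpow_mul, ← zpow_add]; congr 1
            rw [hbez]; ring
      _ = g₀ ^ ((g : ℤ) * e) := by rw [hzord, one_zpow, mul_one]
      _ = g₀ ^ (g * e) := by rw [← zpow_natCast g₀ (g * e)]; norm_num
      _ = a := by rw [← he, hs]

lemma arith_equiv (k ℓ : ℕ) (hk : 0 < k) (hl : 0 < ℓ) :
    Odd (2 * k / Nat.gcd (2 * k) (max k ℓ - min k ℓ)) ↔ Odd (k * ℓ / Nat.gcd k ℓ ^ 2) := by
  set d := Nat.gcd k ℓ with hd
  have hd0 : 0 < d := Nat.gcd_pos_of_pos_left ℓ hk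
  obtain ⟨a, ha⟩ : d ∣ k := Nat.gcd_dvd_left k ℓ
  obtain ⟨b, hb⟩ : d ∣ ℓ := Nat.gcd_dvd_right k ℓ
  have ha0 : 0 < a := by
    rcases Nat.eq_zero_or_pos a with rfl | h
    · omega
    · exact h
  have hb0 : 0 < b := by
    rcases Nat.eq_zero_or_pos b with rfl | h
    · omega
    · exact h
  have hab : Nat.Coprime a b := by
    have h1 : d = d * Nat.gcd a b := by
      conv_lhs => rw [hd, ha, hb]
      rw [Nat.gcd_mul_left]
    have h2 : d * 1 = d * Nat.gcd a b := by rw [mul_one]; exact h1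
    exact (Nat.eq_of_mul_eq_mul_left hd0 h2).symm
  have hrhs : k * ℓ / d ^ 2 = a * b := by
    rw [ha, hb]
    have h3 : d * a * (d * b) = (a * b) * d ^ 2 := by ring
    rw [h3, Nat.mul_div_cancel _ (by positivity)]
  rw [hrhs]
  have hmaxmin : max k ℓ - min k ℓ = d * (max a b - min a b) := by
    rcases le_total k ℓ with h | h
    · have hab' : a ≤ b := by
        by_contra hcon; push_neg at hcon
        have := mul_lt_mul_of_pos_left hcon hd0
        omega
      rw [max_eq_right h, min_eq_left h, max_eq_right hab', min_eq_left hab', ha, hb, Nat.mul_sub]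
    · have hab' : b ≤ a := by
        by_contra hcon; push_neg at hcon
        have := mul_lt_mul_of_pos_left hcon hd0
        omega
      rw [max_eq_left h, min_eq_right h, max_eq_left hab', min_eq_right hab', ha, hb, Nat.mul_sub]
  set c := max a b - min a b with hc
  have hac : Nat.Coprime a c := by
    rcases le_total a b with h | h
    · have hcc : c = b - a := by rw [hc, max_eq_right h, min_eq_left h]
      unfold Nat.Coprime
      rw [hcc, Nat.gcd_sub_self_right h]
      exact hab
    · have hcc : c = a - b := by rw [hc, max_eq_left h, min_eq_right h]
      unfold Nat.Coprime
      rw [hcc, Nat.gcd_self_sub_right h]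
      exact hab
  have hgcdL : Nat.gcd (2 * k) (max k ℓ - min k ℓ) = d * Nat.gcd 2 c := by
    rw [hmaxmin, ha, show 2 * (d * a) = d * (2 * a) by ring, Nat.gcd_mul_left,
      Nat.Coprime.gcd_mul_right_cancel 2 hac]
  rcases Nat.even_or_odd c with hce | hco
  · -- c even: both a b odd, both sides reduce
    have hparity : a % 2 = b % 2 := by
      rcases le_total a b with h | h
      · have hcc : c = b - a := by rw [hc, max_eq_right h, min_eq_left h]
        rw [hcc, Nat.even_iff] at hce
        omega
      · have hcc : c = a - b := by rw [hc, max_eq_left h, min_eq_right h]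
        rw [hcc, Nat.even_iff] at hce
        omega
    have hgab : Nat.gcd a b = 1 := hab
    have hao : Odd a := by
      rw [Nat.odd_iff]
      by_contra hcon
      have h2a : (2:ℕ) ∣ a := by omega
      have h2b : (2:ℕ) ∣ b := by omega
      have := Nat.dvd_gcd h2a h2b
      omega
    have hbo : Odd b := by
      rw [Nat.odd_iff]
      rw [Nat.odd_iff] at hao
      omega
    have hg2 : Nat.gcd 2 c = 2 := Nat.gcd_eq_left hce.two_dvd
    rw [hgcdL, hg2]
    have : 2 * k = (d * 2) * a := by rw [ha]; ring
    rw [this, Nat.mul_div_cancel_left _ (by positivity)]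
    constructor
    · intro _; exact hao.mul hbo
    · intro _; exact hao
  · -- c odd: LHS exponent even, RHS product even
    have hg2 : Nat.gcd 2 c = 1 := Nat.coprime_two_left.mpr hco
    rw [hgcdL, hg2, mul_one]
    have h2k : 2 * k = d * (2 * a) := by rw [ha]; ring
    rw [h2k, Nat.mul_div_cancel_left _ hd0]
    constructor
    · intro h; exact absurd h (by simp [Nat.even_iff, parity_simps])
    · intro h
      exfalso
      -- a*b odd means both odd, but c odd means opposite parity
      have hao := (Nat.odd_mul.mp h).1
      have hbo := (Nat.odd_mul.mp h).2
      rcases le_total a b with hle | hle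
      · have hcc : c = b - a := by rw [hc, max_eq_right hle, min_eq_left hle]
        rw [hcc, Nat.odd_iff] at hco
        rw [Nat.odd_iff] at hao hbo
        omega
      · have hcc : c = a - b := by rw [hc, max_eq_left hle, min_eq_right hle]
        rw [hcc, Nat.odd_iff] at hco
        rw [Nat.odd_iff] at hao hbo
        omega

lemma step1 (p : ℕ) (hp : p.Prime) (hodd : Odd p) (F : Type) [Field F] [Fintype F] [CharP F p]
    (s t : ℕ) (hst : s ≤ t) :
    (∃ y : F, y ≠ 0 ∧ y ^ (p ^ t) + y ^ (p ^ s) = 0) ↔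
      (∃ u : Fˣ, u ^ (p ^ (t - s) - 1) = -1) := by
  have hp1 : 1 ≤ p := hp.one_lt.le
  set M := p ^ (t - s) - 1 with hM
  have hE : p ^ s * M + p ^ s = p ^ t := by
    have h1 : p ^ s * p ^ (t - s) = p ^ t := by
      rw [← pow_add]; congr 1; omega
    have h2 : 1 ≤ p ^ (t - s) := Nat.one_le_pow _ _ (by omega)
    have h3 : p ^ s * M = p ^ s * p ^ (t - s) - p ^ s := by
      rw [hM, Nat.mul_sub, mul_one]
    have h4 : p ^ s ≤ p ^ s * p ^ (t - s) := Nat.le_mul_of_pos_right _ (by positivity)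
    omega
  have hiden : ∀ y : F, y ^ (p ^ t) + y ^ (p ^ s) = y ^ (p ^ s) * (y ^ (p ^ s * M) + 1) := by
    intro y
    rw [mul_add, mul_one, ← pow_add]
    rw [show p ^ s + p ^ s * M = p ^ t by omega]
  constructor
  · rintro ⟨y, hy, h0⟩
    rw [hiden y] at h0
    have hys : y ^ (p ^ s) ≠ 0 := pow_ne_zero _ hy
    have hyE : y ^ (p ^ s * M) = -1 := by
      rcases mul_eq_zero.mp h0 with h | h
      · exact absurd h hys
      · exact eq_neg_of_add_eq_zero_left h
    refine ⟨(Units.mk0 y hy) ^ (p ^ s), Units.ext ?_⟩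
    rw [Units.val_pow_eq_pow_val, Units.val_pow_eq_pow_val, Units.val_mk0, Units.val_neg,
      Units.val_one, ← pow_mul]
    exact hyE
  · rintro ⟨u, hu⟩
    refine ⟨(u : F), u.ne_zero, ?_⟩
    rw [hiden]
    have h1 : (u : F) ^ M = -1 := by
      have := congrArg (Units.val) hu
      push_cast at this
      exact this
    have h2 : (u : F) ^ (p ^ s * M) = -1 := by
      rw [mul_comm, pow_mul, h1]
      exact (hodd.pow).neg_one_pow
    rw [h2]
    ring

theorem stmt13 (p k ℓ : ℕ) (hp : p.Prime) (hodd : Odd p) (hk : 0 < k) (hl : 0 < ℓ)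
    (q Q : ℕ) (hq : q = p ^ k) (hQ : Q = p ^ ℓ)
    (F : Type) [Field F] [Fintype F] (hF : Fintype.card F = p ^ (2 * k)) :
    IsPlanarFn (fun x : F => x ^ (Q + q)) ↔ Odd (k * ℓ / Nat.gcd k ℓ ^ 2) := by
  subst hq hQ
  -- identify the characteristic
  obtain ⟨c, hc⟩ := CharP.exists F
  obtain ⟨n, hcprime, hcard⟩ := FiniteField.card F c
  have hcp2 : c = p := by
    have hdvd : c ∣ p ^ (2 * k) := by
      rw [← hF, hcard]; exact dvd_pow_self c n.ne_zero
    exact (Nat.prime_dvd_prime_iff_eq hcprime hp).mp (hcprime.dvd_of_dvd_pow hdvd)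
  subst hcp2
  haveI : Fact c.Prime := ⟨hcprime⟩
  have hp2 : 2 < c := by
    have := hodd
    rw [Nat.odd_iff] at this
    have := hcprime.two_le
    omega
  haveI : Fact (2 < c) := ⟨hp2⟩
  set E := c ^ ℓ + c ^ k with hE
  have hE0 : E ≠ 0 := by positivity
  have hexpand : ∀ a x : F, (x + a) ^ E - x ^ E
      = a ^ (c ^ k) * x ^ (c ^ ℓ) + a ^ (c ^ ℓ) * x ^ (c ^ k) + a ^ (c ^ ℓ) * a ^ (c ^ k) := by
    intro a x
    rw [hE, pow_add, add_pow_char_pow, add_pow_char_pow, pow_add]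
    ring
  have hplanar_iff : IsPlanarFn (fun x : F => x ^ E) ↔
      ∀ y : F, y ^ (c ^ ℓ) + y ^ (c ^ k) = 0 → y = 0 := by
    constructor
    · intro hpl y hy
      obtain ⟨x0, hx0, hun⟩ := hpl 1 one_ne_zero 1
      have e1 : (fun x : F => x ^ E) (y + 1) - (fun x : F => x ^ E) y = 1 := by
        simp only
        rw [hexpand]
        simp only [one_pow, one_mul, mul_one]
        linear_combination hy
      have e2 : (fun x : F => x ^ E) (0 + 1) - (fun x : F => x ^ E) 0 = 1 := by
        simp only
        rw [hexpand]
        simp [zero_pow (pow_ne_zero k hcprime.ne_zero), zero_pow (pow_ne_zero ℓ hcprime.ne_zero)]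
      exact (hun y e1).trans (hun 0 e2).symm
    · intro hP a ha b
      have hinj : Function.Injective (fun x : F => (x + a) ^ E - x ^ E) := by
        intro x z hxz
        simp only at hxz
        rw [hexpand, hexpand] at hxz
        have hw : a ^ (c ^ k) * ((x - z) ^ (c ^ ℓ)) + a ^ (c ^ ℓ) * ((x - z) ^ (c ^ k)) = 0 := by
          rw [sub_pow_char_pow, sub_pow_char_pow]
          linear_combination hxz
        have hy0 : ((x - z) * a⁻¹) ^ (c ^ ℓ) + ((x - z) * a⁻¹) ^ (c ^ k) = 0 := by
          rw [mul_pow, mul_pow, inv_pow, inv_pow]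
          have h1 : a ^ (c ^ k) ≠ 0 := pow_ne_zero _ ha
          have h2 : a ^ (c ^ ℓ) ≠ 0 := pow_ne_zero _ ha
          field_simp
          linear_combination hw
        have h3 := hP _ hy0
        have hxz0 : x - z = 0 := by
          rcases mul_eq_zero.mp h3 with h | h
          · exact h
          · exact absurd h (inv_ne_zero ha)
        exact sub_eq_zero.mp hxz0
      have hbij := Finite.injective_iff_bijective.mp hinj
      simpa using (Function.bijective_iff_existsUnique _).mp hbij b
  rw [hplanar_iff]
  have hPiff : (∀ y : F, y ^ (c ^ ℓ) + y ^ (c ^ k) = 0 → y = 0) ↔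
      ¬∃ y : F, y ≠ 0 ∧ y ^ (c ^ max k ℓ) + y ^ (c ^ min k ℓ) = 0 := by
    rcases le_total k ℓ with h | h
    · rw [max_eq_right h, min_eq_left h]
      constructor
      · rintro hP ⟨y, hy, h0⟩; exact hy (hP y h0)
      · intro hne y h0
        by_contra hy
        exact hne ⟨y, hy, h0⟩
    · rw [max_eq_left h, min_eq_right h]
      constructor
      · rintro hP ⟨y, hy, h0⟩
        exact hy (hP y (by rw [add_comm] at h0; exact h0))
      · intro hne y h0
        by_contra hy
        exact hne ⟨y, hy, by rw [add_comm] at h0; exact h0⟩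
  haveI : DecidableEq F := Classical.decEq F
  rw [hPiff, step1 c hcprime hodd F _ _ min_le_max, cyc_exists_pow_iff]
  have hcardu : Fintype.card Fˣ = c ^ (2 * k) - 1 := by rw [Fintype.card_units, hF]
  have hn1 : (-1 : F) ≠ 1 := CharP.neg_one_ne_one F c
  have hneg : ∀ m : ℕ, ((-1 : Fˣ) ^ m = 1) ↔ Even m := by
    intro m
    constructor
    · intro h
      have h' := congrArg Units.val h
      push_cast at h'
      exact (neg_one_pow_eq_one_iff_even hn1).mp h'
    · intro h
      apply Units.ext
      push_cast
      exact (neg_one_pow_eq_one_iff_even hn1).mpr h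
  rw [hneg, hcardu, gcd_pow_sub_one c hcprime.two_le]
  set e := Nat.gcd (2 * k) (max k ℓ - min k ℓ) with he
  have he_dvd : e ∣ 2 * k := Nat.gcd_dvd_left _ _
  have he0 : 0 < e := Nat.gcd_pos_of_pos_left _ (by omega)
  set r := 2 * k / e with hr
  have h2k : 2 * k = e * r := (Nat.mul_div_cancel' he_dvd).symm
  have hpe1 : 1 ≤ c ^ e := Nat.one_le_pow _ _ hcprime.pos
  have hpe2 : 0 < c ^ e - 1 := by
    have : 2 ≤ c ^ e := by
      calc 2 ≤ c := hcprime.two_le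
        _ = c ^ 1 := (pow_one c).symm
        _ ≤ c ^ e := Nat.pow_le_pow_right hcprime.pos he0
    omega
  have hquot : (c ^ (2 * k) - 1) / (c ^ e - 1) = ∑ i ∈ Finset.range r, (c ^ e) ^ i := by
    rw [h2k, pow_mul, geomN _ hpe1 r, Nat.mul_div_cancel_left _ hpe2]
  rw [hquot]
  have hpar := geom_parity (c ^ e) r (hodd.pow)
  have hev : Even (∑ i ∈ Finset.range r, (c ^ e) ^ i) ↔ Even r := by
    rw [Nat.even_iff, Nat.even_iff, hpar]
  rw [hev, Nat.not_even_iff_odd, hr, he]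
  exact arith_equiv k ℓ hk hl
end

section
/- Let p be an odd prime, k and ℓ positive integers, q = p^k, Q = p^ℓ. The map P1 : F_q × F_q → F_q × F_q defined by P1(x,y) = (x^{Q+1}, x·y^Q + y^{Q+1}) is not planar; indeed the value (1,0) has at least 4 preimages under P1. -/
theorem stmt14 (p k ℓ : ℕ) (hp : p.Prime) (hodd : Odd p) (hk : 0 < k) (hl : 0 < ℓ)
    (q Q : ℕ) (hq : q = p ^ k) (hQ : Q = p ^ ℓ)
    (K : Type) [Field K] [Fintype K] (hK : Fintype.card K = p ^ k)
    (P1 : K × K → K × K)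
    (hP1 : ∀ xy : K × K, P1 xy = (xy.1 ^ (Q + 1), xy.1 * xy.2 ^ Q + xy.2 ^ (Q + 1))) :
    ¬ IsPlanarFn P1 ∧ 4 ≤ Nat.card {xy : K × K // P1 xy = (1, 0)} := by
  -- characteristic of K is p
  have hchar : CharP K p := by
    obtain ⟨r, hr⟩ := CharP.exists K
    haveI := hr
    have hrprime : r.Prime := CharP.char_is_prime K r
    obtain ⟨n, _, hn⟩ := FiniteField.card K r
    have : p = r := by
      have hdvd : p ∣ r ^ (n : ℕ) := by
        rw [← hn, hK]; exact dvd_pow_self p hk.ne'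
      exact (Nat.prime_dvd_prime_iff_eq hp hrprime).mp (hp.dvd_of_dvd_pow hdvd)
    rwa [this]
  have hQodd : Odd Q := by rw [hQ]; exact hodd.pow
  have hQ0 : Q ≠ 0 := by rw [hQ]; exact pow_ne_zero _ hp.pos.ne'
  have hQ1even : Even (Q + 1) := hQodd.add_one
  have hp2 : Fact (2 < p) := ⟨lt_of_le_of_ne hp.two_le (by
    rintro rfl; simp [Nat.odd_iff] at hodd)⟩
  have hne1 : (-1 : K) ≠ 1 := CharP.neg_one_ne_one K p
  -- values of P1 at the four points
  have e1 : P1 (1, 0) = (1, 0) := by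
    rw [hP1]; simp [zero_pow hQ0, zero_pow (Nat.succ_ne_zero Q)]
  have e2 : P1 (1, -1) = (1, 0) := by
    rw [hP1]; simp [hQodd.neg_one_pow, hQ1even.neg_one_pow]
  have e3 : P1 (-1, 0) = (1, 0) := by
    rw [hP1]; simp [hQ1even.neg_one_pow, zero_pow hQ0, zero_pow (Nat.succ_ne_zero Q)]
  have e4 : P1 (-1, 1) = (1, 0) := by
    rw [hP1]; simp [hQ1even.neg_one_pow]
  constructor
  · intro h
    have ha : ((2 : K), (-1 : K)) ≠ 0 := by
      intro hh
      have : (-1 : K) = 0 := (Prod.ext_iff.mp hh).2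
      simp at this
    obtain ⟨x, _, huniq⟩ := h (2, -1) ha 0
    have h1 : P1 ((-1, 1) + (2, -1)) - P1 (-1, 1) = 0 := by
      have : ((-1 : K), (1 : K)) + (2, -1) = (1, 0) := by
        ext <;> simp <;> ring
      rw [this, e1, e4, sub_self]
    have h2 : P1 ((-1, 0) + (2, -1)) - P1 (-1, 0) = 0 := by
      have : ((-1 : K), (0 : K)) + (2, -1) = (1, -1) := by
        ext <;> simp <;> ring
      rw [this, e2, e3, sub_self]
    have := (huniq _ h1).trans (huniq _ h2).symm
    have : (1 : K) = 0 := (Prod.ext_iff.mp this).2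
    simp at this
  · classical
    have h10 : (1 : K) ≠ 0 := one_ne_zero
    have hm0 : (-1 : K) ≠ 0 := by simp
    set S : Finset (K × K) := {(1, 0), (1, -1), (-1, 0), (-1, 1)} with hS
    have hcard : S.card = 4 := by
      rw [hS]
      rw [Finset.card_insert_of_notMem, Finset.card_insert_of_notMem,
        Finset.card_insert_of_notMem, Finset.card_singleton]
      · simp [Prod.ext_iff, hne1.symm]
      · simp [Prod.ext_iff, hne1.symm, hm0]
      · simp [Prod.ext_iff, hne1.symm, hm0, h10]
    have hsub : S ⊆ Finset.univ.filter (fun xy => P1 xy = (1, 0)) := by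
      intro z hz
      simp only [hS, Finset.mem_insert, Finset.mem_singleton] at hz
      rcases hz with rfl | rfl | rfl | rfl <;>
        simp [e1, e2, e3, e4]
    calc (4 : ℕ) = S.card := hcard.symm
      _ ≤ (Finset.univ.filter (fun xy => P1 xy = (1, 0))).card := Finset.card_le_card hsub
      _ = Fintype.card {xy : K × K // P1 xy = (1, 0)} := (Fintype.card_subtype _).symm
      _ = Nat.card {xy : K × K // P1 xy = (1, 0)} := (Nat.card_eq_fintype_card).symm
end

section
/- Let p be an odd prime, k and ℓ positive integers, q = p^k, Q = p^ℓ, and let ε ∈ F_q with ε ≠ 0. The map P2 : F_q × F_q → F_q × F_q defined by P2(x,y) = (x^Q·y, x^{Q+1} + ε·y^{Q+1}) is planar if and only if k/gcd(k,ℓ) is odd and ε is a non-square in F_q. -/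
lemma geom_aux (c s : ℕ) : ∃ S, (2*c+1) ^ s = (2*c) * S + 1 ∧ S % 2 = s % 2 := by
  induction s with
  | zero => exact ⟨0, by simp⟩
  | succ s ih =>
    obtain ⟨S, hS, hpar⟩ := ih
    refine ⟨(2*c+1)*S + 1, ?_, ?_⟩
    · rw [pow_succ, hS]; ring
    · have : ((2*c+1)*S + 1) % 2 = (S + 1) % 2 := by
        rw [show (2*c+1)*S + 1 = (S+1) + (c*S)*2 by ring, Nat.add_mul_mod_self_right]
      omega

lemma charP_of_card {K : Type} [Field K] [Fintype K] {p k : ℕ} (hp : p.Prime)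
    (hK : Fintype.card K = p ^ k) : CharP K p := by
  obtain ⟨p', hp'⟩ := CharP.exists K
  haveI := hp'
  have hp'prime : p'.Prime := CharP.char_is_prime K p'
  obtain ⟨n, -, hn⟩ := FiniteField.card K p'
  have : p' = p := by
    have h1 : p' ∣ p ^ k := by
      rw [← hK, hn]; exact dvd_pow_self p' n.ne_zero
    exact ((Nat.prime_dvd_prime_iff_eq hp'prime hp).mp (hp'prime.dvd_of_dvd_pow h1))
  rwa [this] at hp'

lemma lemA1 {K : Type} [Field K] [Fintype K] {p k ℓ : ℕ} (hp : p.Prime) (hodd : Odd p)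
    (hk : 0 < k) (hl : 0 < ℓ) (hK : Fintype.card K = p ^ k)
    (hm : Odd (k / Nat.gcd k ℓ)) : ∀ t : K, t ^ (p ^ ℓ) = -t → t = 0 := by
  intro t ht
  by_contra ht0
  haveI : CharP K p := charP_of_card hp hK
  haveI : Fact (2 < p) := ⟨by have := hp.two_le; rcases hodd with ⟨j, hj⟩; omega⟩
  have hneg : (-1 : K) ≠ 1 := CharP.neg_one_ne_one K p
  set d := Nat.gcd k ℓ with hd
  obtain ⟨c, hc⟩ : ∃ c, p ^ d = 2*c+1 := by
    rcases (hodd.pow (n := d)) with ⟨j, hj⟩; exact ⟨j, by omega⟩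
  obtain ⟨S, hS, hSpar⟩ := geom_aux c (k / d)
  obtain ⟨R, hR, hRpar⟩ := geom_aux c (ℓ / d)
  rw [← hc, ← pow_mul, Nat.mul_div_cancel' (Nat.gcd_dvd_left k ℓ)] at hS
  rw [← hc, ← pow_mul, Nat.mul_div_cancel' (Nat.gcd_dvd_right k ℓ)] at hR
  have hS' : p ^ k - 1 = 2*c*S := by rw [hS, Nat.add_sub_cancel]
  have hR' : p ^ ℓ - 1 = 2*c*R := by rw [hR, Nat.add_sub_cancel]
  have hQ1 : 0 < p ^ ℓ := pow_pos hp.pos _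
  have htQ : t ^ (p ^ ℓ - 1) = -1 := by
    have h1 : t ^ (p ^ ℓ - 1) * t = -1 * t := by
      rw [← pow_succ, Nat.sub_add_cancel hQ1, ht]; ring
    exact mul_right_cancel₀ ht0 h1
  have hcard : t ^ (p ^ k - 1) = 1 := by
    have := FiniteField.pow_card_sub_one_eq_one t ht0
    rwa [hK] at this
  have hSodd : Odd S := by rw [Nat.odd_iff] at hm ⊢; omega
  have e1 : t ^ ((2*c*R) * S) = -1 := by
    rw [pow_mul, ← hR', htQ]; exact hSodd.neg_one_pow
  have e2 : t ^ ((2*c*R) * S) = 1 := by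
    rw [show (2*c*R)*S = (p^k - 1)*R by rw [hS']; ring, pow_mul, hcard, one_pow]
  exact hneg (by rw [← e1, e2])

lemma lemA2 {K : Type} [Field K] [Fintype K] {p k ℓ : ℕ} (hp : p.Prime) (hodd : Odd p)
    (hk : 0 < k) (hl : 0 < ℓ) (hK : Fintype.card K = p ^ k)
    (hm : Even (k / Nat.gcd k ℓ)) : ∃ t : K, t ≠ 0 ∧ t ^ (p ^ ℓ) = -t := by
  set d := Nat.gcd k ℓ with hd
  have hd0 : 0 < d := Nat.gcd_pos_of_pos_left _ hk
  obtain ⟨c, hc⟩ : ∃ c, p ^ d = 2*c+1 := by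
    rcases (hodd.pow (n := d)) with ⟨j, hj⟩; exact ⟨j, by omega⟩
  obtain ⟨S, hS, hSpar⟩ := geom_aux c (k / d)
  obtain ⟨R, hR, hRpar⟩ := geom_aux c (ℓ / d)
  rw [← hc, ← pow_mul, Nat.mul_div_cancel' (Nat.gcd_dvd_left k ℓ)] at hS
  rw [← hc, ← pow_mul, Nat.mul_div_cancel' (Nat.gcd_dvd_right k ℓ)] at hR
  have hS' : p ^ k - 1 = 2*c*S := by rw [hS, Nat.add_sub_cancel]
  have hR' : p ^ ℓ - 1 = 2*c*R := by rw [hR, Nat.add_sub_cancel]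
  -- parity facts
  have hcop : Nat.Coprime (k / d) (ℓ / d) := Nat.coprime_div_gcd_div_gcd hd0
  have hRodd : Odd R := by
    rw [Nat.odd_iff]
    rcases Nat.even_or_odd (ℓ / d) with h | h
    · exfalso
      have h2 : 2 ∣ Nat.gcd (k / d) (ℓ / d) :=
        Nat.dvd_gcd hm.two_dvd h.two_dvd
      rw [Nat.Coprime] at hcop; omega
    · rw [Nat.odd_iff] at h; omega
  obtain ⟨S', hS2⟩ := (by rw [Nat.even_iff] at hm ⊢; omega : Even S)
  have hS2' : S = 2 * S' := by omega
  -- c, S positive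
  have hc0 : 0 < c := by
    have h3 : 3 ≤ p := by have := hp.two_le; rcases hodd with ⟨j, hj⟩; omega
    have : p ≤ p ^ d := Nat.le_self_pow (by omega) p
    omega
  have hS0 : 0 < S := by
    have h2 : 2 ≤ p ^ k := by
      calc 2 ≤ p := hp.two_le
      _ ≤ p ^ k := Nat.le_self_pow (by omega) p
    by_contra h; push_neg at h; interval_cases S <;> omega
  -- generator
  obtain ⟨g, hg⟩ := IsCyclic.exists_generator (α := Kˣ)
  have horder : orderOf g = p ^ k - 1 := by
    rw [orderOf_eq_card_of_forall_mem_zpowers hg, Nat.card_units K,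
      Nat.card_eq_fintype_card, hK]
  set G : K := ((g : Kˣ) : K) with hG
  have hG0 : G ≠ 0 := Units.ne_zero g
  have hx2 : (G ^ (c*S)) ^ 2 = 1 := by
    have : (g ^ (c*S)) ^ 2 = 1 := by
      rw [← pow_mul, show c*S*2 = p^k - 1 by rw [hS']; ring, ← horder, pow_orderOf_eq_one]
    calc (G ^ (c*S))^2 = (((g ^ (c*S))^2 : Kˣ) : K) := by push_cast; ring
    _ = 1 := by rw [this, Units.val_one]
  have hx1 : G ^ (c*S) ≠ 1 := by
    intro h
    have hu : g ^ (c*S) = 1 := by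
      ext; push_cast; rw [h]
    have hdvd : orderOf g ∣ c*S := orderOf_dvd_of_pow_eq_one hu
    rw [horder, hS'] at hdvd
    have hcS : 0 < c*S := Nat.mul_pos hc0 hS0
    have := Nat.le_of_dvd hcS hdvd
    nlinarith
  have hxneg : G ^ (c*S) = -1 := by
    have hfac : (G ^ (c*S) - 1) * (G ^ (c*S) + 1) = 0 := by linear_combination hx2
    rcases mul_eq_zero.mp hfac with h | h
    · exact absurd (by linear_combination h) hx1
    · linear_combination h
  refine ⟨G ^ S', pow_ne_zero _ hG0, ?_⟩
  have hpow : (G ^ S') ^ (p ^ ℓ - 1) = -1 := by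
    rw [← pow_mul, show S' * (p ^ ℓ - 1) = (c*S)*R by rw [hR', hS2']; ring, pow_mul, hxneg]
    exact hRodd.neg_one_pow
  have hQ1 : 0 < p ^ ℓ := pow_pos hp.pos _
  calc (G ^ S') ^ (p ^ ℓ) = (G ^ S') ^ (p ^ ℓ - 1) * (G ^ S') := by
        rw [← pow_succ, Nat.sub_add_cancel hQ1]
  _ = -(G ^ S') := by rw [hpow]; ring

theorem stmt15 (p k ℓ : ℕ) (hp : p.Prime) (hodd : Odd p) (hk : 0 < k) (hl : 0 < ℓ)
    (q Q : ℕ) (hq : q = p ^ k) (hQ : Q = p ^ ℓ)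
    (K : Type) [Field K] [Fintype K] (hK : Fintype.card K = p ^ k)
    (ε : K) (hε : ε ≠ 0)
    (P2 : K × K → K × K)
    (hP2 : ∀ xy : K × K, P2 xy = (xy.1 ^ Q * xy.2, xy.1 ^ (Q + 1) + ε * xy.2 ^ (Q + 1))) :
    IsPlanarFn P2 ↔ (Odd (k / Nat.gcd k ℓ) ∧ ¬ ∃ z : K, z ^ 2 = ε) := by
  haveI : CharP K p := charP_of_card hp hK
  haveI : Fact p.Prime := ⟨hp⟩
  have hQpos : 0 < Q := by rw [hQ]; exact pow_pos hp.pos _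
  have hQodd : Odd Q := by rw [hQ]; exact hodd.pow
  have frob : ∀ x y : K, (x + y) ^ Q = x ^ Q + y ^ Q := by
    intro x y; rw [hQ]; exact add_pow_char_pow x y p ℓ
  have hA1 : Odd (k / Nat.gcd k ℓ) → ∀ t : K, t ^ Q = -t → t = 0 := by
    intro hm t ht
    rw [hQ] at ht
    exact lemA1 hp hodd hk hl hK hm t ht
  set L : K × K → K × K → K × K := fun c v =>
    (c.2 * v.1 ^ Q + c.1 ^ Q * v.2,
     c.1 * v.1 ^ Q + c.1 ^ Q * v.1 + ε * (c.2 * v.2 ^ Q + c.2 ^ Q * v.2)) with hLdef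
  have hsq : ∀ x y : K, (x + y) ^ (Q + 1) = (x ^ Q + y ^ Q) * (x + y) := by
    intro x y; rw [pow_succ, frob]
  have hdiff : ∀ c v : K × K, P2 (v + c) - P2 v = L c v + P2 c := by
    intro c v
    simp only [hP2, hLdef, Prod.fst_add, Prod.snd_add, Prod.mk_add_mk, Prod.mk_sub_mk]
    rw [Prod.mk.injEq]
    constructor
    · rw [frob]; ring
    · rw [hsq, hsq]; ring
  constructor
  · -- planar → conditions
    intro hpl
    have hinj : ∀ c : K × K, c ≠ 0 → ∀ v w : K × K, L c v = L c w → v = w := by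
      intro c hc v w hvw
      obtain ⟨x, -, hx⟩ := hpl c hc (L c v + P2 c)
      have h1 : v = x := hx v (by show P2 (v + c) - P2 v = _; rw [hdiff])
      have h2 : w = x := hx w (by show P2 (w + c) - P2 w = _; rw [hdiff, hvw])
      rw [h1, h2]
    have hmodd : Odd (k / Nat.gcd k ℓ) := by
      by_contra hmm
      rw [Nat.not_odd_iff_even] at hmm
      obtain ⟨t, ht0, ht⟩ := lemA2 hp hodd hk hl hK hmm
      rw [← hQ] at ht
      have hcne : ((0, 1) : K × K) ≠ 0 := by simp [Prod.ext_iff]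
      have hz : L (0, 1) (0, t) = L (0, 1) (0, 0) := by
        simp only [hLdef]
        rw [Prod.mk.injEq]
        constructor
        · simp [zero_pow hQpos.ne']
        · rw [zero_pow hQpos.ne', ht]; ring
      have := hinj _ hcne _ _ hz
      rw [Prod.mk.injEq] at this
      exact ht0 this.2
    refine ⟨hmodd, ?_⟩
    rintro ⟨z, hz⟩
    have hz0 : z ≠ 0 := by rintro rfl; rw [← hz] at hε; simp at hε
    -- the trace-like map t ↦ t + t^Q is surjective
    have hTsurj : Function.Surjective (fun t : K => t + t ^ Q) := by
      have hTinj : Function.Injective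
          (AddMonoidHom.mk' (fun t : K => t + t ^ Q)
            (by intro a b; rw [frob]; ring)) := by
        rw [injective_iff_map_eq_zero]
        intro t h
        replace h : t + t ^ Q = 0 := h
        exact hA1 hmodd t (by linear_combination h)
      exact (Finite.injective_iff_bijective.mp hTinj).2
    obtain ⟨t, ht⟩ := hTsurj z
    simp only at ht
    have ht0 : t ≠ 0 := by
      rintro rfl
      rw [zero_pow hQpos.ne', add_zero] at ht
      exact hz0 ht.symm
    have hc2Q : t ^ Q + (t ^ Q) ^ Q = z ^ Q := by rw [← frob, ht]
    have hcne : ((z, 1) : K × K) ≠ 0 := by simp [Prod.ext_iff]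
    have hker : L (z, 1) (t * z, -(t ^ Q)) = L (z, 1) (0, 0) := by
      simp only [hLdef]
      rw [Prod.mk.injEq]
      constructor
      · rw [zero_pow hQpos.ne', mul_pow]; ring
      · rw [zero_pow hQpos.ne', mul_pow, hQodd.neg_pow]
        linear_combination (z * z ^ Q) * ht - ε * hc2Q + z ^ Q * hz
    have := hinj _ hcne _ _ hker
    rw [Prod.mk.injEq] at this
    exact ht0 (by rcases mul_eq_zero.mp this.1 with h | h; exact h; exact absurd h hz0)
  · -- conditions → planar
    rintro ⟨hmodd, hnsq⟩
    intro c hc btarget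
    have hker : ∀ v : K × K, L c v = 0 → v = 0 := by
      rintro ⟨x, y⟩ h0
      simp only [hLdef, Prod.mk_eq_zero] at h0
      obtain ⟨E1, E2⟩ := h0
      rw [Prod.mk_eq_zero]
      by_cases h1 : c.1 = 0
      · have h2 : c.2 ≠ 0 := by
          intro h2; exact hc (Prod.ext_iff.mpr ⟨h1, h2⟩)
        rw [h1, zero_pow hQpos.ne'] at E1 E2
        have hx0 : x = 0 := by
          have hxQ : x ^ Q = 0 := by
            have := E1
            rw [zero_mul, add_zero] at this
            exact (mul_eq_zero.mp this).resolve_left h2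
          exact pow_eq_zero_iff hQpos.ne' |>.mp hxQ
        refine ⟨hx0, ?_⟩
        have hy : c.2 * y ^ Q + c.2 ^ Q * y = 0 := by
          rw [hx0] at E2
          rw [zero_pow hQpos.ne'] at E2
          have : ε * (c.2 * y ^ Q + c.2 ^ Q * y) = 0 := by linear_combination E2
          exact (mul_eq_zero.mp this).resolve_left hε
        have hty : (y * c.2⁻¹) ^ Q = -(y * c.2⁻¹) := by
          rw [mul_pow, inv_pow]
          field_simp
          linear_combination hy
        have := hA1 hmodd _ hty
        rcases mul_eq_zero.mp this with h | h
        · exact h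
        · exact absurd h (inv_ne_zero h2)
      · have E1Q : c.2 ^ Q * (x ^ Q) ^ Q + (c.1 ^ Q) ^ Q * y ^ Q = 0 := by
          have h := congrArg (· ^ Q) E1
          rw [frob, mul_pow, mul_pow, zero_pow hQpos.ne'] at h
          exact h
        have key : c.1 ^ Q * (c.1 ^ Q) ^ Q * (c.1 * x ^ Q + c.1 ^ Q * x)
            = ε * (c.2 ^ Q * c.2) * (c.1 ^ Q * (x ^ Q) ^ Q + (c.1 ^ Q) ^ Q * x ^ Q) := by
          linear_combination (c.1 ^ Q * (c.1 ^ Q) ^ Q) * E2 - (ε * c.2 * c.1 ^ Q) * E1Q -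
            (ε * c.2 ^ Q * (c.1 ^ Q) ^ Q) * E1
        by_cases hu0 : c.1 * x ^ Q + c.1 ^ Q * x = 0
        · have htx : (x * c.1⁻¹) ^ Q = -(x * c.1⁻¹) := by
            rw [mul_pow, inv_pow]
            field_simp
            linear_combination hu0
          have hx0 : x = 0 := by
            have := hA1 hmodd _ htx
            rcases mul_eq_zero.mp this with h | h
            · exact h
            · exact absurd h (inv_ne_zero h1)
          refine ⟨hx0, ?_⟩
          rw [hx0, zero_pow hQpos.ne', mul_zero, zero_add] at E1
          exact (mul_eq_zero.mp E1).resolve_left (pow_ne_zero _ h1)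
        · exfalso
          have hc2 : c.2 ≠ 0 := by
            intro h2
            rw [h2, zero_pow hQpos.ne', zero_mul, mul_zero, zero_mul] at key
            exact hu0 ((mul_eq_zero.mp key).resolve_left
              (mul_ne_zero (pow_ne_zero _ h1) (pow_ne_zero _ (pow_ne_zero _ h1))))
          set u := c.1 * x ^ Q + c.1 ^ Q * x with hu
          have huQ : u ^ Q = c.1 ^ Q * (x ^ Q) ^ Q + (c.1 ^ Q) ^ Q * x ^ Q := by
            rw [hu, frob, mul_pow, mul_pow]
          rw [← huQ] at key
          obtain ⟨h', hh'⟩ := hQodd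
          apply hnsq
          refine ⟨c.1 ^ (Q * (h' + 1)) * (c.2 ^ (h' + 1) * u ^ h')⁻¹, ?_⟩
          have k3 : (c.1 ^ (Q * (h' + 1))) ^ 2 = ε * (c.2 ^ (h' + 1)) ^ 2 * (u ^ h') ^ 2 := by
            apply mul_right_cancel₀ hu0
            calc (c.1 ^ (Q * (h' + 1))) ^ 2 * u = c.1 ^ Q * (c.1 ^ Q) ^ Q * u := by
                  rw [← pow_mul, ← pow_mul, ← pow_add]
                  congr 2
                  rw [hh']; ring
            _ = ε * (c.2 ^ Q * c.2) * u ^ Q := key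
            _ = ε * (c.2 ^ (h' + 1)) ^ 2 * (u ^ h') ^ 2 * u := by
                  have e1 : c.2 ^ Q * c.2 = (c.2 ^ (h' + 1)) ^ 2 := by
                    rw [← pow_succ, ← pow_mul]; congr 1; omega
                  have e2 : u ^ Q = (u ^ h') ^ 2 * u := by
                    rw [← pow_mul, ← pow_succ]; congr 1; omega
                  rw [e1, e2]; ring
          have hcu : c.2 ^ (h' + 1) * u ^ h' ≠ 0 :=
            mul_ne_zero (pow_ne_zero _ hc2) (pow_ne_zero _ hu0)
          rw [mul_pow, k3]
          field_simp
          try ring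
        -- end c.1 ≠ 0
    have hLadd : ∀ v w : K × K, L c (v + w) = L c v + L c w := by
      intro v w
      simp only [hLdef, Prod.fst_add, Prod.snd_add, Prod.mk_add_mk]
      rw [Prod.mk.injEq]
      constructor
      · rw [frob]; ring
      · rw [frob, frob]; ring
    have hLinj : Function.Injective (AddMonoidHom.mk' (L c) hLadd) := by
      rw [injective_iff_map_eq_zero]
      intro v hv
      exact hker v hv
    have hLbij := Finite.injective_iff_bijective.mp hLinj
    obtain ⟨x, hx⟩ := hLbij.2 (btarget - P2 c)
    replace hx : L c x = btarget - P2 c := hx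
    refine ⟨x, ?_, ?_⟩
    · show P2 (x + c) - P2 x = btarget
      rw [hdiff, hx]; ring
    · intro y hy
      apply hLinj
      show L c y = L c x
      rw [hx]
      have : L c y + P2 c = btarget := by rw [← hdiff]; exact hy
      linear_combination this
end

section
/- Let p be an odd prime, k and ℓ positive integers, q = p^k, Q = p^ℓ. The map x ↦ x^Q + x on F_q is a bijection if and only if k/gcd(k,ℓ) is odd; equivalently, the equation x^{Q−1} = −1 has no solution x ∈ F_q^* exactly when k/gcd(k,ℓ) is odd. -/
lemma aux_cyclic {G : Type*} [Group G] [Fintype G] [IsCyclic G] (m : ℕ) (a : G) :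
    (∃ x : G, x ^ m = a) ↔ a ^ (Fintype.card G / Nat.gcd m (Fintype.card G)) = 1 := by
  set n := Fintype.card G with hn
  set d := Nat.gcd m n with hd
  have hn0 : 0 < n := Fintype.card_pos
  have hd0 : 0 < d := Nat.gcd_pos_of_pos_right _ hn0
  have hdn : d ∣ n := Nat.gcd_dvd_right m n
  have hdm : d ∣ m := Nat.gcd_dvd_left m n
  constructor
  · rintro ⟨x, rfl⟩
    rw [← pow_mul]
    apply orderOf_dvd_iff_pow_eq_one.mp
    refine dvd_trans (orderOf_dvd_card) ?_
    have key : m * (n / d) = (m / d) * n := by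
      obtain ⟨m', hm'⟩ := hdm
      obtain ⟨n', hn'⟩ := hdn
      rw [hm', hn', Nat.mul_div_cancel_left _ hd0, Nat.mul_div_cancel_left _ hd0]
      ring
    rw [key]
    exact Dvd.intro_left _ rfl
  · intro h
    obtain ⟨g, hg⟩ := IsCyclic.exists_generator (α := G)
    have hog : orderOf g = n := by
      rw [orderOf_eq_card_of_forall_mem_zpowers hg, Nat.card_eq_fintype_card]
    obtain ⟨j, hj⟩ := hg a
    have hj' : g ^ j = a := hj
    have hgn : g ^ (n : ℤ) = 1 := by
      rw [zpow_natCast, ← hog, pow_orderOf_eq_one]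
    have h1 : g ^ (j * (n / d : ℕ) : ℤ) = 1 := by
      rw [zpow_mul, hj', zpow_natCast]; exact h
    have h2 : (n : ℤ) ∣ j * (n / d : ℕ) := by
      have := orderOf_dvd_iff_zpow_eq_one.mpr h1
      rwa [hog] at this
    have hnd : (n : ℤ) = (d : ℤ) * (n / d : ℕ) := by
      exact_mod_cast (Nat.mul_div_cancel' hdn).symm
    have h3 : (d : ℤ) ∣ j := by
      have hne : ((n / d : ℕ) : ℤ) ≠ 0 := by
        exact_mod_cast (Nat.div_pos (Nat.le_of_dvd hn0 hdn) hd0).ne'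
      rw [hnd] at h2
      exact (mul_dvd_mul_iff_right hne).mp h2
    obtain ⟨s, hs⟩ := h3
    have hbez : (d : ℤ) = m * Nat.gcdA m n + n * Nat.gcdB m n := Nat.gcd_eq_gcd_ab m n
    refine ⟨g ^ (Nat.gcdA m n * s), ?_⟩
    have key2 : (g ^ (Nat.gcdA m n * s)) ^ m = g ^ (Nat.gcdA m n * s * m) := by
      rw [← zpow_natCast (g ^ (Nat.gcdA m n * s)) m, ← zpow_mul]
    rw [key2, ← hj', hs, hbez]
    rw [show (↑m * Nat.gcdA m n + ↑n * Nat.gcdB m n) * s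
        = Nat.gcdA m n * s * m + n * (Nat.gcdB m n * s) by ring]
    rw [zpow_add, zpow_mul g (n:ℤ), hgn, one_zpow, mul_one]

lemma aux_gcd (p k l : ℕ) (hp : 2 ≤ p) (hk : 0 < k) (hl : 0 < l) :
    Nat.gcd (p ^ k - 1) (p ^ l - 1) = p ^ Nat.gcd k l - 1 := by
  set G := Nat.gcd (p ^ k - 1) (p ^ l - 1) with hG
  set d := Nat.gcd k l with hd
  apply Nat.dvd_antisymm
  · -- G ∣ p ^ d - 1
    have hk1 : 1 ≤ p ^ k := Nat.one_le_pow _ _ (by omega)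
    have hl1 : 1 ≤ p ^ l := Nat.one_le_pow _ _ (by omega)
    have hd1 : 1 ≤ p ^ d := Nat.one_le_pow _ _ (by omega)
    have hpk : (p : ZMod G) ^ k = 1 := by
      have : (1 : ℕ) ≡ p ^ k [MOD G] :=
        (Nat.modEq_iff_dvd' hk1).mpr (Nat.gcd_dvd_left _ _)
      have := (ZMod.natCast_eq_natCast_iff _ _ _).mpr this.symm
      push_cast at this
      exact this
    have hpl : (p : ZMod G) ^ l = 1 := by
      have : (1 : ℕ) ≡ p ^ l [MOD G] :=
        (Nat.modEq_iff_dvd' hl1).mpr (Nat.gcd_dvd_right _ _)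
      have := (ZMod.natCast_eq_natCast_iff _ _ _).mpr this.symm
      push_cast at this
      exact this
    have hord : orderOf (p : ZMod G) ∣ d :=
      Nat.dvd_gcd (orderOf_dvd_of_pow_eq_one hpk) (orderOf_dvd_of_pow_eq_one hpl)
    have hpd : (p : ZMod G) ^ d = 1 := orderOf_dvd_iff_pow_eq_one.mp hord
    have : ((p ^ d : ℕ) : ZMod G) = ((1 : ℕ) : ZMod G) := by push_cast; exact hpd
    have := (ZMod.natCast_eq_natCast_iff _ _ _).mp this
    exact (Nat.modEq_iff_dvd' hd1).mp this.symm
  · -- p ^ d - 1 ∣ G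
    refine Nat.dvd_gcd ?_ ?_
    · have : p ^ d - 1 ∣ (p ^ d) ^ (k / d) - 1 ^ (k / d) :=
        Nat.sub_dvd_pow_sub_pow _ _ _
      rwa [one_pow, ← pow_mul, Nat.mul_div_cancel' (Nat.gcd_dvd_left k l)] at this
    · have : p ^ d - 1 ∣ (p ^ d) ^ (l / d) - 1 ^ (l / d) :=
        Nat.sub_dvd_pow_sub_pow _ _ _
      rwa [one_pow, ← pow_mul, Nat.mul_div_cancel' (Nat.gcd_dvd_right k l)] at this

lemma aux_parity (p d e : ℕ) (hp : Odd p) (h2 : 2 ≤ p) (hd : 0 < d) (he : 0 < e) :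
    (Even ((p ^ (d * e) - 1) / (p ^ d - 1)) ↔ Even e) := by
  have hd1 : 1 ≤ p ^ d := Nat.one_le_pow _ _ (by omega)
  have hd2 : 2 ≤ p ^ d := le_trans h2 (Nat.le_self_pow hd.ne' p)
  have hde1 : 1 ≤ p ^ (d * e) := Nat.one_le_pow _ _ (by omega)
  have hz : ((p:ℤ)^d - 1) * (∑ i ∈ Finset.range e, ((p:ℤ)^d)^i) = (p:ℤ)^(d*e) - 1 := by
    rw [mul_comm, geom_sum_mul, ← pow_mul]
  have key : p ^ (d * e) - 1 = (p ^ d - 1) * ∑ i ∈ Finset.range e, (p ^ d) ^ i := by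
    have hcast : ((p ^ (d*e) - 1 : ℕ) : ℤ)
        = (((p^d - 1) * ∑ i ∈ Finset.range e, (p ^ d) ^ i : ℕ) : ℤ) := by
      rw [Nat.cast_mul, Nat.cast_sub hde1, Nat.cast_sub hd1]
      push_cast
      rw [← hz]
    exact_mod_cast hcast
  have hq : (p ^ (d * e) - 1) / (p ^ d - 1) = ∑ i ∈ Finset.range e, (p ^ d) ^ i := by
    rw [key, Nat.mul_div_cancel_left _ (by omega : 0 < p ^ d - 1)]
  rw [hq]
  have hp2 : ((p : ZMod 2)) = 1 := by
    rw [← ZMod.natCast_mod p 2, Nat.odd_iff.mp hp, Nat.cast_one]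
  have hcast2 : (((∑ i ∈ Finset.range e, (p ^ d) ^ i : ℕ)) : ZMod 2) = (e : ZMod 2) := by
    push_cast
    simp [hp2]
  constructor
  · intro h
    have h0 := (ZMod.natCast_eq_zero_iff _ _).mpr (even_iff_two_dvd.mp h)
    rw [hcast2] at h0
    exact even_iff_two_dvd.mpr ((ZMod.natCast_eq_zero_iff _ _).mp h0)
  · intro h
    have h0 := (ZMod.natCast_eq_zero_iff _ _).mpr (even_iff_two_dvd.mp h)
    rw [← hcast2] at h0
    exact even_iff_two_dvd.mpr ((ZMod.natCast_eq_zero_iff _ _).mp h0)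

theorem stmt18 (p k ℓ : ℕ) (hp : p.Prime) (hodd : Odd p) (hk : 0 < k) (hl : 0 < ℓ)
    (q Q : ℕ) (hq : q = p ^ k) (hQ : Q = p ^ ℓ)
    (K : Type) [Field K] [Fintype K] (hK : Fintype.card K = p ^ k) :
    (Function.Bijective (fun x : K => x ^ Q + x) ↔ Odd (k / Nat.gcd k ℓ)) ∧
    ((¬ ∃ x : K, x ≠ 0 ∧ x ^ (Q - 1) = -1) ↔ Odd (k / Nat.gcd k ℓ)) := by
  classical
  haveI := Fact.mk hp
  have hp2 : 2 ≤ p := hp.two_le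
  have hp3 : 3 ≤ p := by
    have h1 := Nat.odd_iff.mp hodd
    omega
  -- char p
  haveI hcharR : CharP K (ringChar K) := ringChar.charP K
  obtain ⟨n, hrp, hcard⟩ := FiniteField.card K (ringChar K)
  have hrp' : ringChar K = p := by
    have h1 : p ∣ ringChar K ^ (n : ℕ) := by
      rw [← hcard, hK]; exact dvd_pow_self p hk.ne'
    have := hp.dvd_of_dvd_pow h1
    exact ((Nat.prime_dvd_prime_iff_eq hp hrp).mp this).symm
  haveI hcharP : CharP K p := by rwa [hrp'] at hcharR
  -- -1 ≠ 1
  haveI : Fact (2 < p) := Fact.mk (by omega)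
  have hneg : (-1 : K) ≠ 1 := CharP.neg_one_ne_one K p
  have hnegu : (-1 : Kˣ) ≠ 1 := by
    intro h
    exact hneg (by simpa using congrArg (Units.val) h)
  -- card of units
  have hcardu : Fintype.card Kˣ = p ^ k - 1 := by
    rw [Fintype.card_units, hK]
  -- exists iff, via units
  have hexu : (∃ x : K, x ≠ 0 ∧ x ^ (Q - 1) = -1) ↔ ∃ u : Kˣ, u ^ (Q - 1) = (-1 : Kˣ) := by
    constructor
    · rintro ⟨x, hx0, hx⟩
      refine ⟨Units.mk0 x hx0, Units.ext ?_⟩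
      simpa using hx
    · rintro ⟨u, hu⟩
      refine ⟨(u : K), u.ne_zero, ?_⟩
      have := congrArg (Units.val) hu
      simpa using this
  -- arithmetic
  set g := Nat.gcd k ℓ with hg
  have hg0 : 0 < g := Nat.gcd_pos_of_pos_left _ hk
  have hgk : g ∣ k := Nat.gcd_dvd_left k ℓ
  set e := k / g with he
  have he0 : 0 < e := Nat.div_pos (Nat.le_of_dvd hk hgk) hg0
  have hke : k = g * e := (Nat.mul_div_cancel' hgk).symm
  have hQ1 : 1 ≤ Q := by rw [hQ]; exact Nat.one_le_pow _ _ (by omega)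
  have hgcd : Nat.gcd (Q - 1) (Fintype.card Kˣ) = p ^ g - 1 := by
    rw [hcardu, hQ, aux_gcd p ℓ k hp2 hl hk, Nat.gcd_comm ℓ k]
  have hmain : (∃ x : K, x ≠ 0 ∧ x ^ (Q - 1) = -1) ↔ Even e := by
    rw [hexu, aux_cyclic, hgcd, hcardu]
    rw [neg_one_pow_eq_one_iff_even hnegu]
    rw [hke]
    exact aux_parity p g e hodd hp2 hg0 he0
  have hsecond : (¬ ∃ x : K, x ≠ 0 ∧ x ^ (Q - 1) = -1) ↔ Odd e := by
    rw [hmain, Nat.not_even_iff_odd]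
  refine ⟨?_, hsecond⟩
  rw [← hsecond]
  -- bijectivity part
  let φ : K →+ K :=
    { toFun := fun x => x ^ Q + x
      map_zero' := by simp [zero_pow (by omega : Q ≠ 0)]
      map_add' := by
        intro a b
        show (a + b) ^ Q + (a + b) = (a ^ Q + a) + (b ^ Q + b)
        rw [hQ, add_pow_char_pow]
        ring }
  have hbij : Function.Bijective (fun x : K => x ^ Q + x) ↔
      ∀ x : K, x ^ Q + x = 0 → x = 0 := by
    constructor
    · intro h x hx
      apply h.injective
      show x ^ Q + x = 0 ^ Q + 0
      rw [hx, zero_pow (by omega : Q ≠ 0), add_zero]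
    · intro h
      have hinj : Function.Injective φ := (injective_iff_map_eq_zero φ).mpr h
      exact Finite.injective_iff_bijective.mp hinj
  rw [hbij]
  constructor
  · intro h
    rintro ⟨x, hx0, hx⟩
    apply hx0
    apply h
    have hxQ : x ^ Q = x ^ (Q - 1) * x := by
      rw [← pow_succ, Nat.sub_add_cancel hQ1]
    rw [hxQ, hx]
    ring
  · intro h x hx
    by_contra hx0
    apply h
    refine ⟨x, hx0, ?_⟩
    have hxQ : x ^ Q = x ^ (Q - 1) * x := by
      rw [← pow_succ, Nat.sub_add_cancel hQ1]
    rw [hxQ] at hx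
    have h2 : (x ^ (Q - 1) + 1) * x = 0 := by rw [add_mul, one_mul]; exact hx
    rcases mul_eq_zero.mp h2 with h3 | h3
    · exact eq_neg_of_add_eq_zero_left h3
    · exact absurd h3 hx0
end
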